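/- arXiv:1506.02711 — 16 statements merged into one kernel-verified Lean document; each statement's English description precedes it below -/
import Mathlib

section
/- Let q be a prime power with q = 2uℓ + 1, where u and ℓ are odd positive integers. Then there exists a (q, u, ℓ, (q−2ℓ−1)/4)-external difference family in the additive group of the finite field F_q; that is, there exist u pairwise disjoint ℓ-element subsets A_1, …, A_u of F_q such that for every nonzero g ∈ F_q, the number of ordered pairs (x, y) with x ∈ A_i, y ∈ A_j, i ≠ j, and x − y = g is exactly (q − 2ℓ − 1)/4. -/
open Finset

private lemma half_card {α : Type*} [DecidableEq α] (T : Finset α) (p : α → Prop)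
    [DecidablePred p] (f : α → α) (hmem : ∀ x ∈ T, f x ∈ T)
    (hinv : ∀ x ∈ T, f (f x) = x) (hflip : ∀ x ∈ T, (p (f x) ↔ ¬ p x)) :
    2 * (T.filter p).card = T.card := by
  have hcard : (T.filter p).card = (T.filter (fun x => ¬ p x)).card := by
    apply Finset.card_bij (fun x _ => f x)
    · intro a ha
      simp only [mem_filter] at ha ⊢
      exact ⟨hmem a ha.1, by rw [hflip a ha.1]; exact not_not_intro ha.2⟩
    · intro a ha b hb hab
      simp only [mem_filter] at ha hb
      rw [← hinv a ha.1, ← hinv b hb.1, hab]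
    · intro b hb
      simp only [mem_filter] at hb
      refine ⟨f b, ?_, hinv b hb.1⟩
      simp only [mem_filter]
      exact ⟨hmem b hb.1, by have := hflip b hb.1; tauto⟩
  have h2 := Finset.card_filter_add_card_filter_not (s := T) (p := p)
  omega

private lemma sum_quadChar_mul {F : Type*} [Field F] [Fintype F] [DecidableEq F]
    (hring : ringChar F ≠ 2) {g : F} (hg : g ≠ 0) :
    ∑ y : F, quadraticChar F y * quadraticChar F (y + g) = -1 := by
  have h0 : ∑ y : F, quadraticChar F y * quadraticChar F (y + g)
      = ∑ y ∈ Finset.univ.erase (0 : F), quadraticChar F y * quadraticChar F (y + g) := by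
    rw [Finset.sum_erase_eq_sub (mem_univ _)]
    simp
  rw [h0]
  have h1 : ∀ y ∈ Finset.univ.erase (0 : F),
      quadraticChar F y * quadraticChar F (y + g) = quadraticChar F (1 + g * y⁻¹) := by
    intro y hy
    have hy0 : y ≠ 0 := by simpa using (Finset.mem_erase.mp hy).1
    have hyy : y * (y + g) = y ^ 2 * (1 + g * y⁻¹) := by field_simp
    rw [← map_mul, hyy, map_mul, quadraticChar_sq_one' hy0, one_mul]
  rw [Finset.sum_congr rfl h1]
  have h2 : ∑ y ∈ Finset.univ.erase (0 : F), quadraticChar F (1 + g * y⁻¹)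
      = ∑ t ∈ Finset.univ.erase (1 : F), quadraticChar F t := by
    apply Finset.sum_bij' (fun y _ => 1 + g * y⁻¹) (fun t _ => g * (t - 1)⁻¹)
    · intro y hy
      have hy0 : y ≠ 0 := by simpa using (Finset.mem_erase.mp hy).1
      simp only [mem_erase, mem_univ, and_true]
      intro h
      have : g * y⁻¹ = 0 := by linear_combination h
      simp [hy0, hg] at this
    · intro t ht
      have ht1 : t ≠ 1 := by simpa using (Finset.mem_erase.mp ht).1
      have : t - 1 ≠ 0 := sub_ne_zero.mpr ht1
      simp only [mem_erase, mem_univ, and_true]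
      simp [hg, this]
    · intro y hy
      have hy0 : y ≠ 0 := by simpa using (Finset.mem_erase.mp hy).1
      have : (1 : F) + g * y⁻¹ - 1 = g * y⁻¹ := by ring
      rw [this, mul_inv, inv_inv]
      field_simp
    · intro t ht
      have ht1 : t ≠ 1 := by simpa using (Finset.mem_erase.mp ht).1
      have h1' : t - 1 ≠ 0 := sub_ne_zero.mpr ht1
      rw [mul_inv, inv_inv]
      field_simp
      ring
    · intros; rfl
  rw [h2, Finset.sum_erase_eq_sub (mem_univ _), quadraticChar_sum_zero hring, map_one]
  ring

/-- Existence of a (q, u, ℓ, (q−2ℓ−1)/4)-EDF in the additive group of F_q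
when q = 2uℓ + 1 is a prime power with u, ℓ odd. -/
theorem stmt0 (q u l : ℕ) (hq : ∃ p r : ℕ, p.Prime ∧ 0 < r ∧ q = p ^ r)
    (hu : Odd u) (hl : Odd l) (hupos : 0 < u) (hlpos : 0 < l)
    (hql : q = 2 * u * l + 1)
    (F : Type*) [Field F] [Fintype F] [DecidableEq F] (hF : Fintype.card F = q) :
    ∃ A : Fin u → Finset F,
      (∀ i j, i ≠ j → Disjoint (A i) (A j)) ∧
      (∀ i, (A i).card = l) ∧
      (∀ g : F, g ≠ 0 →
        (∑ i : Fin u, ∑ j : Fin u,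
          if i ≠ j then ((A i ×ˢ A j).filter (fun xy => xy.1 - xy.2 = g)).card else 0)
          = (q - 2 * l - 1) / 4) := by
  classical
  have hulpos : 0 < u * l := Nat.mul_pos hupos hlpos
  have hcard : Fintype.card F = 2 * (u * l) + 1 := by rw [hF, hql]; ring
  have hul_odd : Odd (u * l) := hu.mul hl
  obtain ⟨w, hw⟩ := hul_odd
  have hq4 : Fintype.card F % 4 = 3 := by rw [hcard, hw]; omega
  have hring2 : ringChar F ≠ 2 := by
    intro h
    have h2 := FiniteField.even_card_of_char_two h
    rw [hcard, hw] at h2; omega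
  obtain ⟨ζ, hζ⟩ := IsCyclic.exists_generator (α := Fˣ)
  have horder : orderOf ζ = 2 * (u * l) := by
    rw [orderOf_eq_card_of_forall_mem_zpowers hζ, Nat.card_eq_fintype_card,
      Fintype.card_units, hcard]
    omega
  have hζne : (ζ : F) ≠ 0 := Units.ne_zero ζ
  have hχζ : quadraticChar F (ζ : F) = -1 := by
    rw [quadraticChar_neg_one_iff_not_isSquare]
    rintro ⟨s, hs⟩
    have hs0 : s ≠ 0 := by rintro rfl; rw [mul_zero] at hs; exact hζne hs
    have hpow : (ζ : F) ^ (u * l) = 1 := by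
      have : (ζ : F) ^ (u * l) = s ^ (2 * (u * l)) := by
        rw [hs]; rw [show s * s = s ^ 2 by ring, ← pow_mul]
      rw [this]
      have h3 := FiniteField.pow_card_sub_one_eq_one s hs0
      rw [hcard] at h3
      simpa using h3
    have hpu : ζ ^ (u * l) = 1 := Units.ext (by rw [Units.val_pow_eq_pow_val, hpow, Units.val_one])
    have hdvd := orderOf_dvd_of_pow_eq_one hpu
    rw [horder] at hdvd
    have := Nat.le_of_dvd hulpos hdvd
    omega
  have hpowinj : ∀ a b : ℕ, a < 2 * (u * l) → b < 2 * (u * l) → ζ ^ a = ζ ^ b → a = b := by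
    intro a b ha hb h
    have h2 := pow_eq_pow_iff_modEq.mp h
    rw [horder] at h2
    rwa [Nat.ModEq, Nat.mod_eq_of_lt ha, Nat.mod_eq_of_lt hb] at h2
  have hlt : ∀ i k : ℕ, i < u → k < l → i + u * k < u * l := by
    intro i k hi hk
    calc i + u * k < u * (k + 1) := by rw [Nat.mul_succ]; omega
    _ ≤ u * l := Nat.mul_le_mul_left u hk
  have hexp_inj : ∀ i k i' k' : ℕ, i < u → i' < u → i + u * k = i' + u * k' →
      i = i' ∧ k = k' := by
    intro i k i' k' hi hi' h
    have h1 : (i + u * k) % u = (i' + u * k') % u := by rw [h]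
    rw [Nat.add_mul_mod_self_left, Nat.add_mul_mod_self_left,
      Nat.mod_eq_of_lt hi, Nat.mod_eq_of_lt hi'] at h1
    subst h1
    have : u * k = u * k' := by omega
    exact ⟨rfl, Nat.eq_of_mul_eq_mul_left hupos this⟩
  -- the family
  set A : Fin u → Finset F :=
    (fun i => (Finset.range l).image (fun k => ((ζ ^ (2 * (i.1 + u * k)) : Fˣ) : F))) with hA
  have hAmem : ∀ (i : Fin u) (x : F), x ∈ A i ↔
      ∃ k, k < l ∧ x = ((ζ ^ (2 * (i.1 + u * k)) : Fˣ) : F) := by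
    intro i x
    simp only [hA, mem_image, mem_range]
    constructor
    · rintro ⟨k, hk, rfl⟩; exact ⟨k, hk, rfl⟩
    · rintro ⟨k, hk, rfl⟩; exact ⟨k, hk, rfl⟩
  have hmemA : ∀ (i : Fin u) (k : ℕ), k < l → ((ζ ^ (2 * (i.1 + u * k)) : Fˣ) : F) ∈ A i := by
    intro i k hk
    rw [hAmem]; exact ⟨k, hk, rfl⟩
  have hvalinj : ∀ i k i' k' : ℕ, i < u → k < l → i' < u → k' < l →
      ((ζ ^ (2 * (i + u * k)) : Fˣ) : F) = ((ζ ^ (2 * (i' + u * k')) : Fˣ) : F) →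
      i = i' ∧ k = k' := by
    intro i k i' k' hi hk hi' hk' h
    have hu2 : ζ ^ (2 * (i + u * k)) = ζ ^ (2 * (i' + u * k')) := Units.ext h
    have := hpowinj _ _ (by have := hlt i k hi hk; omega) (by have := hlt i' k' hi' hk'; omega) hu2
    exact hexp_inj i k i' k' hi hi' (by omega)
  have hAcard : ∀ i, (A i).card = l := by
    intro i
    rw [hA]
    rw [Finset.card_image_of_injOn, Finset.card_range]
    intro k hk k' hk' h
    simp only [mem_range, Finset.mem_coe] at hk hk'
    exact (hvalinj i.1 k i.1 k' i.2 hk i.2 hk' h).2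
  have hAdisj : ∀ i j, i ≠ j → Disjoint (A i) (A j) := by
    intro i j hij
    rw [Finset.disjoint_left]
    intro x hxi hxj
    rw [hAmem] at hxi hxj
    obtain ⟨k, hk, rfl⟩ := hxi
    obtain ⟨k', hk', he⟩ := hxj
    exact hij (Fin.ext (hvalinj i.1 k j.1 k' i.2 hk j.2 hk' he).1)
  -- squares
  have hAsq : ∀ (i : Fin u), ∀ x ∈ A i, quadraticChar F x = 1 := by
    intro i x hx
    rw [hAmem] at hx
    obtain ⟨k, hk, rfl⟩ := hx
    rw [Units.val_pow_eq_pow_val, show 2 * (i.1 + u * k) = (i.1 + u * k) * 2 by ring,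
      pow_mul]
    exact quadraticChar_sq_one' (pow_ne_zero _ hζne)
  have hSA : ∀ x : F, quadraticChar F x = 1 → ∃ i : Fin u, x ∈ A i := by
    intro x hx
    have hx0 : x ≠ 0 := by
      intro h; rw [h, quadraticChar_zero] at hx; norm_num at hx
    obtain ⟨a, ha⟩ := mem_powers_iff_mem_zpowers.mpr (hζ (Units.mk0 x hx0))
    set b := a % (2 * (u * l)) with hbdef
    have hb : ζ ^ b = Units.mk0 x hx0 := by
      rw [hbdef, ← horder, pow_mod_orderOf]; exact ha
    have hblt : b < 2 * (u * l) := Nat.mod_lt _ (by omega)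
    have hxb : x = (ζ : F) ^ b := by
      have := congrArg Units.val hb
      rw [Units.val_pow_eq_pow_val] at this
      exact this.symm
    have hχx : quadraticChar F x = (-1) ^ b := by
      rw [hxb, map_pow, hχζ]
    have hbeven : b % 2 = 0 := by
      rcases Nat.even_or_odd b with he | ho
      · exact Nat.even_iff.mp he
      · rw [hχx, ho.neg_one_pow] at hx; norm_num at hx
    obtain ⟨m, hm⟩ : ∃ m, b = 2 * m := ⟨b / 2, by omega⟩
    have hmlt : m < u * l := by omega
    have hklt : m / u < l := Nat.div_lt_of_lt_mul hmlt
    refine ⟨⟨m % u, Nat.mod_lt _ hupos⟩, ?_⟩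
    rw [hAmem]
    refine ⟨m / u, hklt, ?_⟩
    rw [Units.val_pow_eq_pow_val, hxb, hm, Nat.mod_add_div m u]
  -- the square set
  set S : Finset F := univ.filter (fun y => quadraticChar F y = 1) with hS
  have hSmem : ∀ x : F, x ∈ S ↔ quadraticChar F x = 1 := by
    intro x; simp [hS]
  have hSbiUnion : S = univ.biUnion A := by
    ext x
    simp only [hSmem, mem_biUnion, mem_univ, true_and]
    exact ⟨hSA x, by rintro ⟨i, hi⟩; exact hAsq i x hi⟩
  have hχ0ne : ∀ x : F, quadraticChar F x = 1 → x ≠ 0 := by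
    intro x hx h; rw [h, quadraticChar_zero] at hx; norm_num at hx
  -- ζ^(2*(u*l)) = 1
  have hζtop : ζ ^ (2 * (u * l)) = 1 := by rw [← horder]; exact pow_orderOf_eq_one ζ
  -- classification of l-th roots of unity
  have hHpow : ∀ h : F, h ^ l = 1 → ∃ m, m < l ∧ h = ((ζ ^ (2 * (u * m)) : Fˣ) : F) := by
    intro h hh
    have hh0 : h ≠ 0 := by
      intro e; rw [e, zero_pow hlpos.ne'] at hh; exact zero_ne_one hh
    obtain ⟨a, ha⟩ := mem_powers_iff_mem_zpowers.mpr (hζ (Units.mk0 h hh0))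
    set b := a % (2 * (u * l)) with hbdef
    have hb : ζ ^ b = Units.mk0 h hh0 := by
      rw [hbdef, ← horder, pow_mod_orderOf]; exact ha
    have hblt : b < 2 * (u * l) := Nat.mod_lt _ (by omega)
    have hbl : ζ ^ (b * l) = 1 := by
      rw [pow_mul, hb]
      exact Units.ext (by rw [Units.val_pow_eq_pow_val, Units.val_mk0, hh, Units.val_one])
    have hdvd := orderOf_dvd_of_pow_eq_one hbl
    rw [horder] at hdvd
    have h2u : 2 * u ∣ b := by
      have h3 : (2 * u) * l ∣ b * l := by rwa [← mul_assoc] at hdvd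
      exact (Nat.mul_dvd_mul_iff_right hlpos).mp h3
    obtain ⟨m, hm⟩ := h2u
    refine ⟨m, ?_, ?_⟩
    · by_contra hc
      push_neg at hc
      have h5 : 2 * (u * l) ≤ 2 * u * m := by
        calc 2 * (u * l) = 2 * u * l := by ring
        _ ≤ 2 * u * m := Nat.mul_le_mul_left _ hc
      omega
    · have : h = ((ζ ^ b : Fˣ) : F) := by rw [hb, Units.val_mk0]
      rw [this, hm, show 2 * u * m = 2 * (u * m) by ring]
  -- l-th roots are squares
  have hHsq : ∀ h : F, h ^ l = 1 → quadraticChar F h = 1 := by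
    intro h hh
    have hh0 : h ≠ 0 := by
      intro e; rw [e, zero_pow hlpos.ne'] at hh; exact zero_ne_one hh
    obtain ⟨c, hc⟩ := hl
    have : h = (h ^ (c + 1)) ^ 2 := by
      rw [← pow_mul]
      have : (c + 1) * 2 = l + 1 := by omega
      rw [this, pow_succ, hh, one_mul]
    rw [this]
    exact quadraticChar_sq_one' (pow_ne_zero _ hh0)
  -- closure of each A i under multiplication by l-th roots
  have hclose : ∀ (i : Fin u) (y h : F), y ∈ A i → h ^ l = 1 → y * h ∈ A i := by
    intro i y h hy hh
    rw [hAmem] at hy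
    obtain ⟨k, hk, rfl⟩ := hy
    obtain ⟨m, hm, rfl⟩ := hHpow h hh
    set t := (k + m) / l with ht
    set k' := (k + m) % l with hk'
    have hkm : k + m = k' + l * t := by rw [hk', ht]; exact (Nat.mod_add_div _ _).symm
    have h7 : u * k + u * m = u * k' + u * l * t := by
      rw [← mul_add, hkm]; ring
    have hexp : 2 * (i.1 + u * k) + 2 * (u * m) = 2 * (i.1 + u * k') + 2 * (u * l) * t := by
      calc 2 * (i.1 + u * k) + 2 * (u * m) = 2 * i.1 + 2 * (u * k + u * m) := by ring
      _ = 2 * i.1 + 2 * (u * k' + u * l * t) := by rw [h7]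
      _ = 2 * (i.1 + u * k') + 2 * (u * l) * t := by ring
    have : ((ζ ^ (2 * (i.1 + u * k)) : Fˣ) : F) * ((ζ ^ (2 * (u * m)) : Fˣ) : F)
        = ((ζ ^ (2 * (i.1 + u * k')) : Fˣ) : F) := by
      rw [← Units.val_mul, ← pow_add, hexp, pow_add, pow_mul ζ (2 * (u * l)) t, hζtop,
        one_pow, mul_one]
    rw [this]
    exact hmemA i k' (Nat.mod_lt _ hlpos)
  -- χ(-1) = -1
  have hcard3 : 3 ≤ Fintype.card F := by rw [hcard]; omega
  have hχm1 : quadraticChar F (-1) = -1 := by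
    have h2m : Fintype.card F % 2 = 1 := by omega
    rw [quadraticChar_neg_one hring2, ZMod.χ₄_nat_eq_if_mod_four]
    simp only [h2m, hq4]
    norm_num
  have hχneg : ∀ x : F, quadraticChar F (-x) = - quadraticChar F x := by
    intro x
    rw [show -x = -1 * x by ring, map_mul, hχm1]
    ring
  -- l-th roots of unity: the set and its cardinality
  set H' : Finset F := (univ.filter (fun h : F => h ^ l = 1)).erase 1 with hH'
  have hroots : univ.filter (fun h : F => h ^ l = 1)
      = (range l).image (fun m => ((ζ ^ (2 * (u * m)) : Fˣ) : F)) := by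
    ext h
    simp only [mem_filter, mem_univ, true_and, mem_image, mem_range]
    constructor
    · intro hh
      obtain ⟨m, hm, he⟩ := hHpow h hh
      exact ⟨m, hm, he.symm⟩
    · rintro ⟨m, hm, rfl⟩
      rw [← Units.val_pow_eq_pow_val, ← pow_mul]
      have he : 2 * (u * m) * l = 2 * (u * l) * m := by ring
      rw [he, pow_mul ζ (2 * (u * l)) m, hζtop, one_pow, Units.val_one]
  have hrootscard : (univ.filter (fun h : F => h ^ l = 1)).card = l := by
    rw [hroots, Finset.card_image_of_injOn, card_range]
    intro m hm m' hm' he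
    simp only [Finset.mem_coe, mem_range] at hm hm'
    have hb1 : u * m < u * l := Nat.mul_lt_mul_of_le_of_lt (le_refl u) hm hupos
    have hb2 : u * m' < u * l := Nat.mul_lt_mul_of_le_of_lt (le_refl u) hm' hupos
    have := hpowinj (2 * (u * m)) (2 * (u * m')) (by omega) (by omega) (Units.ext he)
    have : u * m = u * m' := by omega
    exact Nat.eq_of_mul_eq_mul_left hupos this
  have hH'card : H'.card = l - 1 := by
    rw [hH', Finset.card_erase_of_mem, hrootscard]
    simp
  -- provide the family; remaining goal is the counting for each g
  refine ⟨A, hAdisj, hAcard, ?_⟩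
  intro g hg
  set T : ℕ := ((S ×ˢ S).filter (fun xy : F × F => xy.1 - xy.2 = g)).card with hTdef
  set I : ℕ := ∑ i : Fin u, ((A i ×ˢ A i).filter (fun xy : F × F => xy.1 - xy.2 = g)).card
    with hIdef
  set E : ℕ := ∑ i : Fin u, ∑ j : Fin u,
      if i ≠ j then ((A i ×ˢ A j).filter (fun xy : F × F => xy.1 - xy.2 = g)).card else 0
    with hEdef
  have hdisjPD : (↑(univ : Finset (Fin u)) : Set (Fin u)).PairwiseDisjoint A := by
    intro i _ j _ hij
    exact hAdisj i j hij
  have hexpand : ∀ s t : Finset F, ((s ×ˢ t).filter (fun xy : F × F => xy.1 - xy.2 = g)).card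
      = ∑ x ∈ s, ∑ y ∈ t, (if x - y = g then 1 else 0) := by
    intro s t
    rw [Finset.card_filter]
    exact Finset.sum_product' s t (fun x y => if x - y = g then 1 else 0)
  have hsum_c : ∑ i : Fin u, ∑ j : Fin u,
      ((A i ×ˢ A j).filter (fun xy : F × F => xy.1 - xy.2 = g)).card = T := by
    calc ∑ i : Fin u, ∑ j : Fin u,
        ((A i ×ˢ A j).filter (fun xy : F × F => xy.1 - xy.2 = g)).card
        = ∑ i : Fin u, ∑ j : Fin u, ∑ x ∈ A i, ∑ y ∈ A j, (if x - y = g then 1 else 0) :=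
          Finset.sum_congr rfl fun i _ => Finset.sum_congr rfl fun j _ => hexpand _ _
      _ = ∑ i : Fin u, ∑ x ∈ A i, ∑ j : Fin u, ∑ y ∈ A j, (if x - y = g then 1 else 0) :=
          Finset.sum_congr rfl fun i _ => Finset.sum_comm
      _ = ∑ i : Fin u, ∑ x ∈ A i, ∑ y ∈ S, (if x - y = g then 1 else 0) := by
          refine Finset.sum_congr rfl fun i _ => Finset.sum_congr rfl fun x _ => ?_
          rw [hSbiUnion, Finset.sum_biUnion hdisjPD]
      _ = ∑ x ∈ S, ∑ y ∈ S, (if x - y = g then 1 else 0) := by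
          rw [hSbiUnion, Finset.sum_biUnion hdisjPD]
      _ = T := (hexpand S S).symm
  have hET : E + I = T := by
    rw [hEdef, hIdef, ← hsum_c, ← Finset.sum_add_distrib]
    refine Finset.sum_congr rfl fun i _ => ?_
    have h1 : ∑ j : Fin u, ((A i ×ˢ A j).filter (fun xy : F × F => xy.1 - xy.2 = g)).card
        = ∑ j : Fin u,
          ((if i ≠ j then ((A i ×ˢ A j).filter (fun xy : F × F => xy.1 - xy.2 = g)).card else 0)
          + (if i = j then ((A i ×ˢ A j).filter (fun xy : F × F => xy.1 - xy.2 = g)).card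
              else 0)) := by
      refine Finset.sum_congr rfl fun j _ => ?_
      by_cases h : i = j <;> simp [h]
    rw [h1, Finset.sum_add_distrib, Finset.sum_ite_eq]
    simp
  -- express T as a sum over all field elements
  have hTfilter : T = ∑ y : F,
      (if (quadraticChar F y = 1 ∧ quadraticChar F (y + g) = 1) then 1 else 0) := by
    rw [hTdef, hexpand, Finset.sum_comm]
    have h1 : ∀ y ∈ S, ∑ x ∈ S, (if x - y = g then (1 : ℕ) else 0)
        = if y + g ∈ S then 1 else 0 := by
      intro y _
      rw [← Finset.sum_ite_eq' S (y + g) (fun _ => (1 : ℕ))]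
      refine Finset.sum_congr rfl fun x _ => ?_
      congr 1
      simp only [eq_iff_iff]
      rw [sub_eq_iff_eq_add, add_comm g y]
    rw [Finset.sum_congr rfl h1, hS, Finset.sum_filter]
    refine Finset.sum_congr rfl fun y _ => ?_
    simp only [hSmem, mem_filter, mem_univ, true_and]
    by_cases h1 : quadraticChar F y = 1 <;>
      by_cases h2 : quadraticChar F (y + g) = 1 <;>
      simp only [h1, h2, and_self, and_true, and_false, true_and, false_and,
        if_true, if_false, ite_true, ite_false]
  set U : Finset F := (univ.erase (0 : F)).erase (-g) with hUdef
  have hmemg : -g ∈ univ.erase (0 : F) := Finset.mem_erase.mpr ⟨neg_ne_zero.mpr hg, mem_univ _⟩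
  have hUcard : U.card = Fintype.card F - 2 := by
    rw [hUdef, Finset.card_erase_of_mem hmemg, Finset.card_erase_of_mem (mem_univ _),
      Finset.card_univ]
    omega
  have hTZ : (T : ℤ) * 4 = (Fintype.card F : ℤ) - 3 := by
    have h0 : (T : ℤ) = ∑ y : F,
        (if (quadraticChar F y = 1 ∧ quadraticChar F (y + g) = 1) then (1 : ℤ) else 0) := by
      rw [hTfilter]
      push_cast
      rfl
    have hf0 : (if (quadraticChar F (0 : F) = 1 ∧ quadraticChar F ((0 : F) + g) = 1)
        then (1 : ℤ) else 0) = 0 := by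
      simp [quadraticChar_zero]
    have hfg : (if (quadraticChar F (-g) = 1 ∧ quadraticChar F (-g + g) = 1)
        then (1 : ℤ) else 0) = 0 := by
      simp [quadraticChar_zero]
    have hdrop : ∑ y : F,
        (if (quadraticChar F y = 1 ∧ quadraticChar F (y + g) = 1) then (1 : ℤ) else 0)
        = ∑ y ∈ U,
          (if (quadraticChar F y = 1 ∧ quadraticChar F (y + g) = 1) then (1 : ℤ) else 0) := by
      rw [hUdef, Finset.sum_erase_eq_sub hmemg, Finset.sum_erase_eq_sub (mem_univ (0 : F)),
        hf0, hfg]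
      ring
    have hpt : ∀ y ∈ U, (4 : ℤ) *
        (if (quadraticChar F y = 1 ∧ quadraticChar F (y + g) = 1) then (1 : ℤ) else 0)
        = (1 + quadraticChar F y) * (1 + quadraticChar F (y + g)) := by
      intro y hy
      rw [hUdef, Finset.mem_erase, Finset.mem_erase] at hy
      have hy0 : y ≠ 0 := hy.2.1
      have hyg : y + g ≠ 0 := by
        intro h
        exact hy.1 (by linear_combination h)
      rcases quadraticChar_dichotomy hy0 with h1 | h1 <;>
        rcases quadraticChar_dichotomy hyg with h2 | h2 <;>
        simp [h1, h2] <;> norm_num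
    have hU1 : (∑ _y ∈ U, (1 : ℤ)) = (Fintype.card F : ℤ) - 2 := by
      rw [Finset.sum_const, hUcard]
      have : ((Fintype.card F - 2 : ℕ) : ℤ) = (Fintype.card F : ℤ) - 2 := by
        omega
      simp [this]
    have hU2 : ∑ y ∈ U, quadraticChar F y = quadraticChar F g := by
      rw [hUdef, Finset.sum_erase_eq_sub hmemg, Finset.sum_erase_eq_sub (mem_univ (0 : F)),
        quadraticChar_sum_zero hring2, quadraticChar_zero, hχneg g]
      ring
    have hU3 : ∑ y ∈ U, quadraticChar F (y + g) = - quadraticChar F g := by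
      have hfull : ∑ y : F, quadraticChar F (y + g) = 0 := by
        rw [← quadraticChar_sum_zero hring2]
        exact Equiv.sum_comp (Equiv.addRight g) (quadraticChar F)
      rw [hUdef, Finset.sum_erase_eq_sub hmemg, Finset.sum_erase_eq_sub (mem_univ (0 : F)),
        hfull]
      simp
    have hU4 : ∑ y ∈ U, quadraticChar F y * quadraticChar F (y + g) = -1 := by
      have hfull := sum_quadChar_mul hring2 hg
      rw [hUdef, Finset.sum_erase_eq_sub hmemg, Finset.sum_erase_eq_sub (mem_univ (0 : F)),
        hfull]
      simp [quadraticChar_zero]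
    calc (T : ℤ) * 4 = ∑ y ∈ U, (1 + quadraticChar F y) * (1 + quadraticChar F (y + g)) := by
          rw [h0, hdrop, mul_comm, Finset.mul_sum]
          exact Finset.sum_congr rfl hpt
      _ = (∑ _y ∈ U, (1 : ℤ)) + (∑ y ∈ U, quadraticChar F y)
          + ((∑ y ∈ U, quadraticChar F (y + g))
          + ∑ y ∈ U, quadraticChar F y * quadraticChar F (y + g)) := by
          rw [← Finset.sum_add_distrib, ← Finset.sum_add_distrib, ← Finset.sum_add_distrib]
          exact Finset.sum_congr rfl fun y _ => by ring
      _ = (Fintype.card F : ℤ) - 3 := by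
          rw [hU1, hU2, hU3, hU4]
          ring
  -- internal count
  set Q : Finset F := H'.filter (fun h => quadraticChar F (g * (h - 1)⁻¹) = 1) with hQdef
  have hAne0 : ∀ (i : Fin u), ∀ x ∈ A i, x ≠ 0 := fun i x hx => hχ0ne x (hAsq i x hx)
  have hAl : ∀ (i : Fin u), ∀ x ∈ A i, x ^ l = ((ζ ^ (2 * (i.1 * l)) : Fˣ) : F) := by
    intro i x hx
    rw [hAmem] at hx
    obtain ⟨k, hk, rfl⟩ := hx
    rw [← Units.val_pow_eq_pow_val, ← pow_mul]
    have he : 2 * (i.1 + u * k) * l = 2 * (i.1 * l) + 2 * (u * l) * k := by ring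
    rw [he, pow_add, pow_mul ζ (2 * (u * l)) k, hζtop, one_pow, mul_one]
  have hyval : ∀ (i : Fin u) (x y : F), x ∈ A i → y ∈ A i → x - y = g →
      g * (x * y⁻¹ - 1)⁻¹ = y := by
    intro i x y hx hy hxy
    have hy0 : y ≠ 0 := hAne0 i y hy
    have hsub : x * y⁻¹ - 1 = g * y⁻¹ := by
      field_simp
      linear_combination hxy
    rw [hsub, mul_inv, inv_inv]
    field_simp
  have hIQ : I = Q.card := by
    rw [hIdef, ← Finset.card_sigma]
    apply Finset.card_bij (fun (s : (_ : Fin u) × (F × F)) _ => s.2.1 * s.2.2⁻¹)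
    · rintro ⟨i, x, y⟩ hs
      simp only [Finset.mem_sigma, Finset.mem_filter, Finset.mem_product] at hs
      obtain ⟨-, ⟨hx, hy⟩, hxy⟩ := hs
      have hy0 : y ≠ 0 := hAne0 i y hy
      have hhl : (x * y⁻¹) ^ l = 1 := by
        rw [mul_pow, inv_pow, hAl i x hx, hAl i y hy, mul_inv_cancel₀]
        exact Units.ne_zero _
      have hne1 : x * y⁻¹ ≠ 1 := by
        intro h1
        have hxy' : x = y := by
          field_simp at h1
          exact h1
        rw [hxy', sub_self] at hxy
        exact hg hxy.symm
      rw [hQdef, Finset.mem_filter, hH', Finset.mem_erase, Finset.mem_filter]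
      refine ⟨⟨hne1, mem_univ _, hhl⟩, ?_⟩
      rw [hyval i x y hx hy hxy]
      exact hAsq i y hy
    · rintro ⟨i, x, y⟩ hs ⟨i', x', y'⟩ hs' heq
      simp only [Finset.mem_sigma, Finset.mem_filter, Finset.mem_product] at hs hs'
      obtain ⟨-, ⟨hx, hy⟩, hxy⟩ := hs
      obtain ⟨-, ⟨hx', hy'⟩, hxy'⟩ := hs'
      simp only at heq
      have hyy : y = y' := by
        rw [← hyval i x y hx hy hxy, ← hyval i' x' y' hx' hy' hxy', heq]
      have hxx : x = x' := by
        have := hxy.trans hxy'.symm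
        rw [hyy] at this
        linear_combination this
      have hii : i = i' := by
        by_contra hii
        have := hAdisj i i' hii
        rw [Finset.disjoint_left] at this
        rw [hyy] at hy
        exact this hy hy'
      subst hii; subst hyy; subst hxx; rfl
    · intro h hh
      rw [hQdef, Finset.mem_filter, hH', Finset.mem_erase, Finset.mem_filter] at hh
      obtain ⟨⟨hne1, -, hhl⟩, hsq⟩ := hh
      have hh1 : h - 1 ≠ 0 := sub_ne_zero.mpr hne1
      obtain ⟨i, hi⟩ := hSA _ hsq
      have hy0 : g * (h - 1)⁻¹ ≠ 0 := mul_ne_zero hg (inv_ne_zero hh1)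
      have hxA : (g * (h - 1)⁻¹) * h ∈ A i := hclose i _ h hi hhl
      refine ⟨⟨i, ((g * (h - 1)⁻¹) * h, g * (h - 1)⁻¹)⟩, ?_, ?_⟩
      · simp only [Finset.mem_sigma, Finset.mem_filter, Finset.mem_product]
        refine ⟨mem_univ _, ⟨hxA, hi⟩, ?_⟩
        field_simp
      · simp only
        field_simp
  have h2Q : 2 * Q.card = H'.card := by
    rw [hQdef]
    apply half_card H' _ (fun h => h⁻¹)
    · intro h hh
      rw [hH', Finset.mem_erase, Finset.mem_filter] at hh ⊢
      refine ⟨fun he => hh.1 (inv_eq_one.mp he), mem_univ _, ?_⟩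
      rw [inv_pow, hh.2.2, inv_one]
    · intro h _
      exact inv_inv h
    · intro h hh
      rw [hH', Finset.mem_erase, Finset.mem_filter] at hh
      obtain ⟨hne1, -, hhl⟩ := hh
      have hh0 : h ≠ 0 := by
        intro e
        rw [e, zero_pow hlpos.ne'] at hhl
        exact zero_ne_one hhl
      have hh1 : h - 1 ≠ 0 := sub_ne_zero.mpr hne1
      have hw0 : g * (h - 1)⁻¹ ≠ 0 := mul_ne_zero hg (inv_ne_zero hh1)
      have hh1' : 1 - h ≠ 0 := by
        intro e
        apply hh1
        linear_combination -e
      have key : g * (h⁻¹ - 1)⁻¹ = -1 * (g * (h - 1)⁻¹) * h := by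
        field_simp [hh1']
        ring
      rw [key, map_mul, map_mul, hχm1, hHsq h hhl, mul_one]
      rcases quadraticChar_dichotomy hw0 with hcw | hcw <;> rw [hcw] <;> norm_num
  -- conclusion
  have hI2 : 2 * I = l - 1 := by rw [hIQ, h2Q, hH'card]
  have hT4 : (T : ℤ) * 4 = (q : ℤ) - 3 := by rw [← hF]; exact hTZ
  have hq3 : 3 ≤ q := by
    have h5 : 2 * u * l = 2 * (u * l) := by ring
    omega
  have hgoal : E = (q - 2 * l - 1) / 4 := by omega
  exact hgoal
end

section
/- Let G be a finite abelian group. There do not exist m ≥ 3 pairwise disjoint k-element subsets A_1,…,A_m of G with k ≥ 2 forming an (n,m,k,1)-strong external difference family; that is, it is impossible that for every i ∈ {1,…,m} and every nonzero g ∈ G, the number of ordered pairs (x,y) with x ∈ A_i, y ∈ A_j for some j ≠ i, and x − y = g equals 1. -/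
/-- There is no (n,m,k,1)-strong external difference family with m ≥ 3 and k ≥ 2. -/
theorem stmt1 {G : Type*} [AddCommGroup G] [Fintype G] [DecidableEq G]
    (m k : ℕ) (hm : 3 ≤ m) (hk : 2 ≤ k)
    (A : Fin m → Finset G)
    (hdisj : ∀ i j, i ≠ j → Disjoint (A i) (A j))
    (hcard : ∀ i, (A i).card = k) :
    ¬ (∀ i : Fin m, ∀ g : G, g ≠ 0 →
        (∑ j : Fin m,
          if j ≠ i then ((A i ×ˢ A j).filter (fun xy => xy.1 - xy.2 = g)).card else 0) = 1) := by
  intro H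
  set i1 : Fin m := ⟨0, by omega⟩ with hi1
  set i2 : Fin m := ⟨1, by omega⟩ with hi2
  set i3 : Fin m := ⟨2, by omega⟩ with hi3
  have h21 : i2 ≠ i1 := by simp [hi1, hi2, Fin.ext_iff]
  have h31 : i3 ≠ i1 := by simp [hi1, hi3, Fin.ext_iff]
  have h32 : i3 ≠ i2 := by simp [hi2, hi3, Fin.ext_iff]
  -- uniqueness of external representations
  have uniq : ∀ (i : Fin m) (g : G), g ≠ 0 → ∀ (j j' : Fin m) (x y x' y' : G),
      j ≠ i → j' ≠ i → x ∈ A i → y ∈ A j → x' ∈ A i → y' ∈ A j' →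
      x - y = g → x' - y' = g → x = x' ∧ y = y' := by
    intro i g hg j j' x y x' y' hj hj' hx hy hx' hy' hd hd'
    have hs := H i g hg
    have hmem : (x, y) ∈ (A i ×ˢ A j).filter (fun xy => xy.1 - xy.2 = g) := by
      simp [Finset.mem_filter, Finset.mem_product, hx, hy, hd]
    have hmem' : (x', y') ∈ (A i ×ˢ A j').filter (fun xy => xy.1 - xy.2 = g) := by
      simp [Finset.mem_filter, Finset.mem_product, hx', hy', hd']
    by_cases hjj : j = j'
    · subst hjj
      have hle : ((A i ×ˢ A j).filter (fun xy => xy.1 - xy.2 = g)).card ≤ 1 := by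
        have h1 := Finset.single_le_sum
          (f := fun j' : Fin m => if j' ≠ i then
            ((A i ×ˢ A j').filter (fun xy => xy.1 - xy.2 = g)).card else 0)
          (fun _ _ => Nat.zero_le _) (Finset.mem_univ j)
        rw [hs] at h1
        simpa [hj] using h1
      have := Finset.card_le_one.mp hle _ hmem _ hmem'
      exact ⟨congrArg Prod.fst this, congrArg Prod.snd this⟩
    · exfalso
      have hsub : ({j, j'} : Finset (Fin m)) ⊆ Finset.univ := Finset.subset_univ _
      have h2 : (if j ≠ i then ((A i ×ˢ A j).filter (fun xy => xy.1 - xy.2 = g)).card else 0)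
          + (if j' ≠ i then ((A i ×ˢ A j').filter (fun xy => xy.1 - xy.2 = g)).card else 0)
          ≤ 1 := by
        rw [← hs]
        exact le_trans (le_of_eq (Finset.sum_pair (f := fun j'' : Fin m =>
            if j'' ≠ i then ((A i ×ˢ A j'').filter (fun xy => xy.1 - xy.2 = g)).card else 0)
            hjj).symm)
          (Finset.sum_le_sum_of_subset hsub)
      have c1 : 1 ≤ ((A i ×ˢ A j).filter (fun xy => xy.1 - xy.2 = g)).card :=
        Finset.card_pos.mpr ⟨_, hmem⟩
      have c2 : 1 ≤ ((A i ×ˢ A j').filter (fun xy => xy.1 - xy.2 = g)).card :=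
        Finset.card_pos.mpr ⟨_, hmem'⟩
      rw [if_pos hj, if_pos hj'] at h2
      omega
  -- existence of external representations
  have exist : ∀ (i : Fin m) (g : G), g ≠ 0 → ∃ (j : Fin m) (x y : G),
      j ≠ i ∧ x ∈ A i ∧ y ∈ A j ∧ x - y = g := by
    intro i g hg
    have hs := H i g hg
    have hne : (∑ j : Fin m, if j ≠ i then
        ((A i ×ˢ A j).filter (fun xy => xy.1 - xy.2 = g)).card else 0) ≠ 0 := by
      omega
    obtain ⟨j, -, hj⟩ := Finset.exists_ne_zero_of_sum_ne_zero hne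
    by_cases hji : j = i
    · simp [hji] at hj
    · simp only [hji, ne_eq, not_false_eq_true, if_true] at hj
      obtain ⟨⟨x, y⟩, hxy⟩ := Finset.card_pos.mp (Nat.pos_of_ne_zero hj)
      simp only [Finset.mem_filter, Finset.mem_product] at hxy
      exact ⟨j, x, y, hji, hxy.1.1, hxy.1.2, hxy.2⟩
  -- take two distinct elements of A i1
  obtain ⟨a1, ha1, a2, ha2, hane⟩ := Finset.one_lt_card.mp (by rw [hcard i1]; omega)
  have hg : a1 - a2 ≠ 0 := sub_ne_zero.mpr hane
  have hgneg : a2 - a1 ≠ 0 := sub_ne_zero.mpr (Ne.symm hane)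
  set g : G := a1 - a2 with hgdef
  -- key step: representation of -g with head in A i (i ≠ i1) has tail in A i1
  have key : ∀ (i : Fin m), i ≠ i1 → ∃ (x y : G),
      x ∈ A i ∧ y ∈ A i1 ∧ x - y = a2 - a1 := by
    intro i hi
    obtain ⟨l, x, y, hl, hx, hy, hd⟩ := exist i (a2 - a1) hgneg
    by_cases hl1 : l = i1
    · exact ⟨x, y, hx, hl1 ▸ hy, hd⟩
    · exfalso
      -- two representations of w = a2 - x with head in A i1
      have haxne : a2 ≠ x := by
        intro h
        exact Finset.disjoint_left.mp (hdisj i1 i (Ne.symm hi)) ha2 (h ▸ hx)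
      have hw : a2 - x ≠ 0 := sub_ne_zero.mpr haxne
      have heq : a1 - y = a2 - x := by
        have : y = x - a2 + a1 := by
          have := hd; abel_nf; abel_nf at this
          linear_combination (norm := abel) -this
        rw [this]; abel
      have := uniq i1 (a2 - x) hw i l a2 x a1 y hi hl1 ha2 hx ha1 hy rfl heq
      exact hane this.1.symm
  obtain ⟨x2, y2, hx2, hy2, hd2⟩ := key i2 h21
  obtain ⟨x3, y3, hx3, hy3, hd3⟩ := key i3 h31
  -- reversed: two representations of g with head in A i1
  have hd2' : y2 - x2 = g := by rw [hgdef]; linear_combination (norm := abel) -hd2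
  have hd3' : y3 - x3 = g := by rw [hgdef]; linear_combination (norm := abel) -hd3
  have := uniq i1 g hg i2 i3 y2 x2 y3 x3 h21 h31 hy2 hx2 hy3 hx3 hd2' hd3'
  exact Finset.disjoint_left.mp (hdisj i2 i3 (Ne.symm h32)) hx2 (this.2 ▸ hx3)
end

section
/- For positive integers n, m, k, there exists a finite abelian group G of order n containing an (n,m,k,1)-strong external difference family if and only if either (m = 2 and n = k² + 1) or (k = 1 and m = n). -/
/-- An (n,m,k,λ)-strong external difference family: m pairwise disjoint k-subsets of G such
that for every i and every nonzero g, the number of ordered pairs (x,y) with x ∈ A i,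
y ∈ A j for some j ≠ i, and x − y = g equals lam. -/
def IsSEDF {G : Type} [AddCommGroup G] [DecidableEq G] {m : ℕ} (k lam : ℕ)
    (A : Fin m → Finset G) : Prop :=
  (∀ i j, i ≠ j → Disjoint (A i) (A j)) ∧ (∀ i, (A i).card = k) ∧
  ∀ i : Fin m, ∀ g : G, g ≠ 0 →
    (∑ j : Fin m,
      if j ≠ i then ((A i ×ˢ A j).filter (fun xy => xy.1 - xy.2 = g)).card else 0) = lam

section Helpers

variable {G : Type} [AddCommGroup G] [DecidableEq G] {m k : ℕ} {A : Fin m → Finset G}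

lemma sedf_unique (h : IsSEDF k 1 A) {i j j' : Fin m} (hj : j ≠ i) (hj' : j' ≠ i)
    {x y x' y' : G} (hx : x ∈ A i) (hy : y ∈ A j) (hx' : x' ∈ A i) (hy' : y' ∈ A j')
    (hg : x - y ≠ 0) (e : x - y = x' - y') : x = x' ∧ y = y' := by
  have hsum := h.2.2 i (x - y) hg
  set f : Fin m → ℕ := fun l =>
    if l ≠ i then ((A i ×ˢ A l).filter (fun xy => xy.1 - xy.2 = x - y)).card else 0 with hf
  have hmem : (x, y) ∈ (A i ×ˢ A j).filter (fun xy => xy.1 - xy.2 = x - y) := by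
    simp [Finset.mem_filter, Finset.mem_product, hx, hy]
  have hmem' : (x', y') ∈ (A i ×ˢ A j').filter (fun xy => xy.1 - xy.2 = x - y) := by
    simp [Finset.mem_filter, Finset.mem_product, hx', hy', e]
  have hfj : 1 ≤ f j := by
    rw [hf]; simp only [if_pos hj]
    exact Finset.card_pos.mpr ⟨_, hmem⟩
  have hfj' : 1 ≤ f j' := by
    rw [hf]; simp only [if_pos hj']
    exact Finset.card_pos.mpr ⟨_, hmem'⟩
  have hjj : j = j' := by
    by_contra hne
    have h2 : f j + f j' ≤ ∑ l, f l := by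
      rw [← Finset.sum_pair hne]
      exact Finset.sum_le_sum_of_subset (Finset.subset_univ _)
    rw [hsum] at h2
    omega
  subst hjj
  have hle : f j ≤ 1 := by
    rw [← hsum]
    exact Finset.single_le_sum (fun l _ => Nat.zero_le _) (Finset.mem_univ j)
  rw [hf] at hle; simp only [if_pos hj] at hle
  have := Finset.card_le_one.mp hle _ hmem _ hmem'
  exact ⟨congrArg Prod.fst this, congrArg Prod.snd this⟩

lemma sedf_exists (h : IsSEDF k 1 A) (i : Fin m) {g : G} (hg : g ≠ 0) :
    ∃ j, j ≠ i ∧ ∃ x ∈ A i, ∃ y ∈ A j, x - y = g := by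
  have hsum := h.2.2 i g hg
  by_contra hc
  push_neg at hc
  have : ∀ j : Fin m,
      (if j ≠ i then ((A i ×ˢ A j).filter (fun xy => xy.1 - xy.2 = g)).card else 0) = 0 := by
    intro j
    by_cases hj : j ≠ i
    · simp only [if_pos hj]
      rw [Finset.card_eq_zero, Finset.filter_eq_empty_iff]
      rintro ⟨x, y⟩ hxy
      rw [Finset.mem_product] at hxy
      exact hc j hj x hxy.1 y hxy.2
    · simp [hj]
  rw [Finset.sum_congr rfl (fun j _ => this j)] at hsum
  simp at hsum

lemma sedf_m_le_two (h : IsSEDF k 1 A) (hk : 2 ≤ k) (hm : 3 ≤ m) : False := by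
  obtain ⟨hdisj, hcard, -⟩ := id h
  have hne : ∀ {a b : G} {i j : Fin m}, i ≠ j → a ∈ A i → b ∈ A j → a ≠ b := by
    intro a b i j hij ha hb e
    exact Finset.disjoint_left.mp (hdisj i j hij) ha (e ▸ hb)
  set i0 : Fin m := ⟨0, by omega⟩ with hi0
  set i1 : Fin m := ⟨1, by omega⟩ with hi1
  set i2 : Fin m := ⟨2, by omega⟩ with hi2
  have h10 : i1 ≠ i0 := by simp [hi0, hi1, Fin.ext_iff]
  have h20 : i2 ≠ i0 := by simp [hi0, hi2, Fin.ext_iff]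
  have h21 : i2 ≠ i1 := by simp [hi1, hi2, Fin.ext_iff]
  -- key sub-lemma L1
  have L1 : ∀ l j : Fin m, l ≠ i0 → j ≠ i0 → j ≠ l →
      ∀ b b' u v : G, b ∈ A i0 → b' ∈ A i0 → b ≠ b' → u ∈ A l → v ∈ A j →
      u - v = b - b' → False := by
    intro l j hl hj hjl b b' u v hb hb' hbb' hu hv he
    have hbu : b - u ≠ 0 := sub_ne_zero.mpr (hne (Ne.symm hl) hb hu)
    have he2 : b - u = b' - v := by
      rw [sub_eq_sub_iff_add_eq_add] at he ⊢
      rw [← he]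
      exact add_comm u b'
    have := sedf_unique h (i := i0) (j := l) (j' := j) hl hj hb hu hb' hv hbu he2
    exact hbb' this.1
  obtain ⟨a, ha, a', ha', haa'⟩ := Finset.one_lt_card.mp (by rw [hcard i0]; exact hk)
  have hg : a - a' ≠ 0 := sub_ne_zero.mpr haa'
  obtain ⟨j1, hj1, x1, hx1, y1, hy1, he1⟩ := sedf_exists h i1 hg
  have hj10 : j1 = i0 := by
    by_contra hnej
    exact L1 i1 j1 h10 hnej hj1 a a' x1 y1 ha ha' haa' hx1 hy1 he1
  subst hj10
  obtain ⟨j2, hj2, x2, hx2, y2, hy2, he2⟩ := sedf_exists h i2 hg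
  have hj20 : j2 = i0 := by
    by_contra hnej
    exact L1 i2 j2 h20 hnej hj2 a a' x2 y2 ha ha' haa' hx2 hy2 he2
  subst hj20
  have hx12 : x1 ≠ x2 := hne h21.symm hx1 hx2
  have hw : x1 - x2 = y1 - y2 := by
    rw [sub_eq_sub_iff_add_eq_add]
    have e1 : x1 - y1 = x2 - y2 := by rw [he1, he2]
    rw [sub_eq_sub_iff_add_eq_add] at e1
    linear_combination (norm := abel) e1
  have hy12 : y1 ≠ y2 := by
    intro e
    apply hx12
    have : x1 - x2 = 0 := by rw [hw, e, sub_self]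
    exact sub_eq_zero.mp this
  exact L1 i1 i2 h10 h20 h21 y1 y2 x1 x2 hy1 hy2 hy12 hx1 hx2 hw

lemma sedf_count [Fintype G] (h : IsSEDF k 1 A) (hm : 0 < m) :
    (m - 1) * (k * k) = Fintype.card G - 1 := by
  obtain ⟨hdisj, hcard, hlam⟩ := id h
  set i : Fin m := ⟨0, hm⟩ with hi
  have key : ∑ g ∈ (Finset.univ : Finset G).erase 0,
      (∑ j : Fin m, if j ≠ i then ((A i ×ˢ A j).filter (fun xy => xy.1 - xy.2 = g)).card else 0)
      = ((Finset.univ : Finset G).erase 0).card := by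
    rw [Finset.card_eq_sum_ones]
    exact Finset.sum_congr rfl (fun g hg => hlam i g (Finset.ne_of_mem_erase hg))
  rw [Finset.sum_comm] at key
  have inner : ∀ j : Fin m,
      (∑ g ∈ (Finset.univ : Finset G).erase 0,
        if j ≠ i then ((A i ×ˢ A j).filter (fun xy => xy.1 - xy.2 = g)).card else 0)
      = if j ≠ i then k * k else 0 := by
    intro j
    by_cases hj : j ≠ i
    · simp only [if_pos hj]
      have hmemt : ∀ p ∈ A i ×ˢ A j, p.1 - p.2 ∈ (Finset.univ : Finset G).erase 0 := by
        intro p hp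
        rw [Finset.mem_product] at hp
        refine Finset.mem_erase.mpr ⟨sub_ne_zero.mpr ?_, Finset.mem_univ _⟩
        intro e
        exact Finset.disjoint_left.mp (hdisj i j (Ne.symm hj)) hp.1 (e ▸ hp.2)
      have := Finset.card_eq_sum_card_fiberwise hmemt
      rw [← this, Finset.card_product, hcard, hcard]
    · simp [hj]
  rw [Finset.sum_congr rfl (fun j _ => inner j)] at key
  rw [← Finset.sum_filter, Finset.sum_const, Finset.filter_ne', Finset.card_erase_of_mem
    (Finset.mem_univ _), Finset.card_univ, Fintype.card_fin, smul_eq_mul] at key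
  rw [Finset.card_erase_of_mem (Finset.mem_univ _), Finset.card_univ] at key
  exact key

end Helpers

lemma constructionA (m : ℕ) (hm : 0 < m) :
    ∃ A : Fin m → Finset (ZMod m), IsSEDF 1 1 A := by
  haveI : NeZero m := ⟨hm.ne'⟩
  have hinj : ∀ i j : Fin m, ((i.val : ZMod m) = (j.val : ZMod m)) → i = j := by
    intro i j hij
    have := congrArg ZMod.val hij
    rw [ZMod.val_cast_of_lt i.isLt, ZMod.val_cast_of_lt j.isLt] at this
    exact Fin.ext this
  refine ⟨fun i => {(i.val : ZMod m)}, ?_, ?_, ?_⟩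
  · intro i j hij
    exact Finset.disjoint_singleton.mpr (fun e => hij (hinj _ _ e))
  · intro i; simp
  · intro i g hg
    set c : ZMod m := (i.val : ZMod m) - g with hc
    have hcv : ((c.val : ℕ) : ZMod m) = c := ZMod.natCast_rightInverse c
    set j0 : Fin m := ⟨c.val, c.val_lt⟩ with hj0
    have hj0c : ((j0.val : ℕ) : ZMod m) = c := hcv
    have hj0i : j0 ≠ i := by
      intro e
      apply hg
      have h1 : ((i.val : ℕ) : ZMod m) = c := by rw [← e]; exact hj0c
      rw [hc] at h1
      exact sub_eq_self.mp h1.symm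
    rw [Finset.sum_eq_single_of_mem j0 (Finset.mem_univ _)]
    · rw [if_pos hj0i, Finset.singleton_product_singleton, Finset.filter_singleton,
        if_pos, Finset.card_singleton]
      rw [hj0c, hc, sub_sub_cancel]
    · intro b _ hbj0
      by_cases hbi : b ≠ i
      · rw [if_pos hbi, Finset.singleton_product_singleton, Finset.filter_singleton, if_neg,
          Finset.card_empty]
        intro e
        apply hbj0
        apply hinj
        rw [hj0c, hc]
        simp only at e
        rw [← e]
        abel
      · rw [if_neg hbi]

lemma constructionB (k : ℕ) (hk : 0 < k) :
    ∃ A : Fin 2 → Finset (ZMod (k^2+1)), IsSEDF k 1 A := by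
  set N := k^2 + 1 with hN
  haveI : NeZero N := ⟨Nat.succ_ne_zero _⟩
  have hNkk : N = k * k + 1 := by rw [hN, pow_two]
  have hkk : k ≤ k * k := Nat.le_mul_of_pos_left k hk
  have hb1 : ∀ {j : ℕ}, j < k → (j+1)*k ≤ k * k := fun hj => Nat.mul_le_mul_right k hj
  have hkj : ∀ (j : ℕ), k ≤ (j+1)*k := fun j => Nat.le_mul_of_pos_left k (Nat.succ_pos j)
  set A0 : Finset (ZMod N) := (Finset.range k).image (fun i => ((i : ℕ) : ZMod N)) with hA0
  set A1 : Finset (ZMod N) := (Finset.range k).image (fun j => (((j+1)*k : ℕ) : ZMod N)) with hA1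
  have hv0 : ∀ {i : ℕ}, i < k → ((i : ZMod N)).val = i := fun hi =>
    ZMod.val_cast_of_lt (by omega)
  have hv1 : ∀ {j : ℕ}, j < k → (((j+1)*k : ℕ) : ZMod N).val = (j+1)*k := fun hj =>
    ZMod.val_cast_of_lt (by have := hb1 hj; omega)
  have hdiff : ∀ {i j : ℕ}, i < k → j < k →
      ((i : ZMod N) - (((j+1)*k : ℕ) : ZMod N)) = - ((((j+1)*k - i : ℕ) : ZMod N)) := by
    intro i j hi hj
    have hle : i ≤ (j+1)*k := le_trans (le_of_lt hi) (hkj j)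
    rw [Nat.cast_sub hle, neg_sub]
  -- injectivity of the difference map on indices
  have hinjP : ∀ {i j i' j' : ℕ}, i < k → j < k → i' < k → j' < k →
      ((i : ZMod N) - (((j+1)*k : ℕ) : ZMod N)) = ((i' : ZMod N) - (((j'+1)*k : ℕ) : ZMod N)) →
      i = i' ∧ j = j' := by
    intro i j i' j' hi hj hi' hj' e
    rw [hdiff hi hj, hdiff hi' hj'] at e
    have e2 := congrArg ZMod.val (neg_injective e)
    rw [ZMod.val_cast_of_lt (by have := hb1 hj; omega),
        ZMod.val_cast_of_lt (by have := hb1 hj'; omega)] at e2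
    -- e2 : (j+1)*k - i = (j'+1)*k - i'
    have hw : ∀ {a b : ℕ}, a < k → b < k → ((a+1)*k - b - 1) / k = a := by
      intro a b ha hb
      have h1 : (a+1)*k = a*k + k := by ring
      apply Nat.div_eq_of_lt_le
      · omega
      · have h2 : (a+1)*k = a*k + k := by ring
        omega
    have hjj : j = j' := by
      have := hw hj hi
      have h2 := hw hj' hi'
      rw [show (j+1)*k - i - 1 = (j'+1)*k - i' - 1 by omega] at this
      omega
    subst hjj
    have hii : i = i' := by
      have hkj1 := hkj j
      omega
    exact ⟨hii, rfl⟩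
  have hcard0 : A0.card = k := by
    rw [hA0, Finset.card_image_of_injOn, Finset.card_range]
    intro a ha b hb e
    simp only [Finset.coe_range, Set.mem_Iio] at ha hb
    have := congrArg ZMod.val e
    rwa [hv0 ha, hv0 hb] at this
  have hcard1 : A1.card = k := by
    rw [hA1, Finset.card_image_of_injOn, Finset.card_range]
    intro a ha b hb e
    simp only [Finset.coe_range, Set.mem_Iio] at ha hb
    have := congrArg ZMod.val e
    rw [hv1 ha, hv1 hb] at this
    have := Nat.eq_of_mul_eq_mul_right hk this
    omega
  have hdisj01 : Disjoint A0 A1 := by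
    rw [Finset.disjoint_left]
    intro x hx0 hx1
    rw [hA0, Finset.mem_image] at hx0
    rw [hA1, Finset.mem_image] at hx1
    obtain ⟨i, hi, hxi⟩ := hx0
    obtain ⟨j, hj, hxj⟩ := hx1
    rw [Finset.mem_range] at hi hj
    have := congrArg ZMod.val (hxi.trans hxj.symm)
    rw [hv0 hi, hv1 hj] at this
    have := hkj j
    omega
  -- the image of the difference map is everything but 0
  have hinjOn : Set.InjOn (fun p : ZMod N × ZMod N => p.1 - p.2) ↑(A0 ×ˢ A1) := by
    rintro ⟨x, y⟩ hxy ⟨x', y'⟩ hxy' e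
    rw [Finset.coe_product, Set.mem_prod] at hxy hxy'
    obtain ⟨hx, hy⟩ := hxy
    obtain ⟨hx', hy'⟩ := hxy'
    rw [Finset.mem_coe, hA0, Finset.mem_image] at hx hx'
    rw [Finset.mem_coe, hA1, Finset.mem_image] at hy hy'
    obtain ⟨i, hi, rfl⟩ := hx
    obtain ⟨j, hj, rfl⟩ := hy
    obtain ⟨i', hi', rfl⟩ := hx'
    obtain ⟨j', hj', rfl⟩ := hy'
    rw [Finset.mem_range] at hi hj hi' hj'
    obtain ⟨e1, e2⟩ := hinjP hi hj hi' hj' e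
    subst e1; subst e2; rfl
  have himg : (A0 ×ˢ A1).image (fun p => p.1 - p.2) = (Finset.univ : Finset (ZMod N)).erase 0 := by
    apply Finset.eq_of_subset_of_card_le
    · intro x hx
      rw [Finset.mem_image] at hx
      obtain ⟨p, hp, rfl⟩ := hx
      rw [Finset.mem_product] at hp
      refine Finset.mem_erase.mpr ⟨sub_ne_zero.mpr ?_, Finset.mem_univ _⟩
      intro e
      exact Finset.disjoint_left.mp hdisj01 hp.1 (e ▸ hp.2)
    · rw [Finset.card_erase_of_mem (Finset.mem_univ _), Finset.card_univ, ZMod.card,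
        Finset.card_image_of_injOn hinjOn, Finset.card_product, hcard0, hcard1]
      omega
  have key0 : ∀ g : ZMod N, g ≠ 0 →
      ((A0 ×ˢ A1).filter (fun p => p.1 - p.2 = g)).card = 1 := by
    intro g hg
    have hgm : g ∈ (A0 ×ˢ A1).image (fun p => p.1 - p.2) := by
      rw [himg]
      exact Finset.mem_erase.mpr ⟨hg, Finset.mem_univ _⟩
    rw [Finset.mem_image] at hgm
    obtain ⟨p, hp, hdp⟩ := hgm
    rw [Finset.card_eq_one]
    refine ⟨p, ?_⟩
    ext q
    simp only [Finset.mem_filter, Finset.mem_singleton]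
    constructor
    · rintro ⟨hq, hdq⟩
      exact hinjOn (Finset.mem_coe.mpr hq) (Finset.mem_coe.mpr hp) (hdq.trans hdp.symm)
    · rintro rfl
      exact ⟨hp, hdp⟩
  have key1 : ∀ g : ZMod N, g ≠ 0 →
      ((A1 ×ˢ A0).filter (fun p => p.1 - p.2 = g)).card = 1 := by
    intro g hg
    rw [← key0 (-g) (neg_ne_zero.mpr hg)]
    apply Finset.card_bij' (fun p _ => Prod.swap p) (fun p _ => Prod.swap p)
    · rintro ⟨x, y⟩ hp
      rw [Finset.mem_filter, Finset.mem_product] at hp ⊢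
      refine ⟨⟨hp.1.2, hp.1.1⟩, ?_⟩
      have h2 : x - y = g := hp.2
      show y - x = -g
      rw [← h2]; abel
    · rintro ⟨x, y⟩ hp
      rw [Finset.mem_filter, Finset.mem_product] at hp ⊢
      refine ⟨⟨hp.1.2, hp.1.1⟩, ?_⟩
      have h2 : x - y = -g := hp.2
      show y - x = g
      rw [← neg_neg g, ← h2]; abel
    · intro p _; simp
    · intro p _; simp
  refine ⟨![A0, A1], ?_, ?_, ?_⟩
  · intro i j hij
    fin_cases i <;> fin_cases j
    · exact absurd rfl hij
    · exact hdisj01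
    · exact hdisj01.symm
    · exact absurd rfl hij
  · intro i
    fin_cases i
    · exact hcard0
    · exact hcard1
  · intro i g hg
    fin_cases i
    · simpa [Fin.sum_univ_two] using key0 g hg
    · simpa [Fin.sum_univ_two] using key1 g hg

/-- an (n,m,k,1)-SEDF in some finite abelian group of order n exists iff
(m = 2 and n = k² + 1) or (k = 1 and m = n). -/
theorem stmt2 (n m k : ℕ) (hn : 0 < n) (hm : 0 < m) (hk : 0 < k) :
    (∃ (G : Type) (i1 : AddCommGroup G) (i2 : Fintype G) (i3 : DecidableEq G),
      @Fintype.card G i2 = n ∧ ∃ A : Fin m → Finset G, @IsSEDF G i1 i3 m k 1 A)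
    ↔ ((m = 2 ∧ n = k ^ 2 + 1) ∨ (k = 1 ∧ m = n)) := by
  constructor
  · rintro ⟨G, i1, i2, i3, hcardG, A, hA⟩
    have hcnt : (m - 1) * (k * k) = n - 1 := by rw [← hcardG]; exact sedf_count hA hm
    rcases eq_or_ne k 1 with hk1 | hk1
    · right
      refine ⟨hk1, ?_⟩
      subst hk1
      simp at hcnt
      omega
    · have hk2 : 2 ≤ k := by omega
      have hm3 : ¬ 3 ≤ m := fun h3 => sedf_m_le_two hA hk2 h3
      have hkn : k ≤ n := by
        rw [← hcardG, ← hA.2.1 ⟨0, hm⟩]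
        exact Finset.card_le_univ _
      have hm1 : m ≠ 1 := by
        intro h1
        subst h1
        simp at hcnt
        omega
      have hm2 : m = 2 := by omega
      subst hm2
      left
      refine ⟨rfl, ?_⟩
      simp at hcnt
      rw [pow_two]
      omega
  · rintro (⟨hm2, hn2⟩ | ⟨hk1, hmn⟩)
    · subst hm2; subst hn2
      haveI : NeZero (k^2+1) := ⟨Nat.succ_ne_zero _⟩
      exact ⟨ZMod (k^2+1), inferInstance, inferInstance, inferInstance, ZMod.card _,
        constructionB k hk⟩
    · subst hk1; subst hmn
      haveI : NeZero m := ⟨hm.ne'⟩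
      exact ⟨ZMod m, inferInstance, inferInstance, inferInstance, ZMod.card _,
        constructionA m hm⟩
end

section
/- Let G be a finite abelian group of order n, let A_1,…,A_m be a partition of G with |A_i| = k_i, and let λ_1,…,λ_m be nonnegative integers. Then A_1,…,A_m form an (n,m;k_1,…,k_m;λ_1,…,λ_m)-generalized strong external difference family if and only if, for every i ∈ {1,…,m}, the set A_i is an (n, k_i, k_i − λ_i)-difference set in G. -/
/-- A partition A_1,…,A_m of a finite abelian group G of order n with
|A_i| = k_i is an (n,m;k_1,…,k_m;λ_1,…,λ_m)-GSEDF iff each A_i is an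
(n, k_i, k_i − λ_i)-difference set in G. -/
theorem stmt3 {G : Type*} [AddCommGroup G] [Fintype G] [DecidableEq G]
    (n m : ℕ) (hn : Fintype.card G = n)
    (A : Fin m → Finset G) (k lam : Fin m → ℕ)
    (hdisj : ∀ i j, i ≠ j → Disjoint (A i) (A j))
    (hcover : ∀ g : G, ∃ i, g ∈ A i)
    (hcard : ∀ i, (A i).card = k i) :
    (∀ i : Fin m, ∀ g : G, g ≠ 0 →
        (∑ j : Fin m,
          if j ≠ i then ((A i ×ˢ A j).filter (fun xy => xy.1 - xy.2 = g)).card else 0) = lam i)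
    ↔ (∀ i : Fin m, ∀ g : G, g ≠ 0 →
        ((((A i ×ˢ A i).filter (fun xy => xy.1 ≠ xy.2 ∧ xy.1 - xy.2 = g)).card : ℤ)
          = (k i : ℤ) - (lam i : ℤ))) := by
  -- notation
  have hfilter : ∀ (i : Fin m) (g : G), g ≠ 0 →
      ((A i ×ˢ A i).filter (fun xy => xy.1 ≠ xy.2 ∧ xy.1 - xy.2 = g))
        = ((A i ×ˢ A i).filter (fun xy => xy.1 - xy.2 = g)) := by
    intro i g hg
    apply Finset.filter_congr
    intro xy _
    constructor
    · rintro ⟨_, h2⟩; exact h2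
    · intro h2
      refine ⟨?_, h2⟩
      intro heq
      apply hg
      rw [← h2, heq, sub_self]
  -- each product-filter card equals a filter card on A i
  have hcardj : ∀ (i j : Fin m) (g : G),
      ((A i ×ˢ A j).filter (fun xy => xy.1 - xy.2 = g)).card
        = ((A i).filter (fun x => x - g ∈ A j)).card := by
    intro i j g
    apply Finset.card_bij (fun xy _ => xy.1)
    · intro xy hxy
      simp only [Finset.mem_filter, Finset.mem_product] at hxy ⊢
      obtain ⟨⟨h1, h2⟩, h3⟩ := hxy
      refine ⟨h1, ?_⟩
      have : xy.1 - g = xy.2 := by rw [← h3]; abel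
      rw [this]; exact h2
    · intro a ha b hb hab
      simp only [Finset.mem_filter, Finset.mem_product] at ha hb
      have ha2 : a.2 = a.1 - g := by rw [← ha.2]; abel
      have hb2 : b.2 = b.1 - g := by rw [← hb.2]; abel
      exact Prod.ext hab (by rw [ha2, hb2, hab])
    · intro x hx
      simp only [Finset.mem_filter] at hx
      refine ⟨(x, x - g), ?_, rfl⟩
      simp only [Finset.mem_filter, Finset.mem_product]
      exact ⟨⟨hx.1, hx.2⟩, by abel⟩
  -- total over all j is k i
  have htot : ∀ (i : Fin m) (g : G),
      (∑ j : Fin m, ((A i ×ˢ A j).filter (fun xy => xy.1 - xy.2 = g)).card) = k i := by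
    intro i g
    have h1 : ∀ j, ((A i ×ˢ A j).filter (fun xy => xy.1 - xy.2 = g)).card
        = ∑ x ∈ A i, if x - g ∈ A j then 1 else 0 := by
      intro j; rw [hcardj i j g, Finset.card_filter]
    calc (∑ j : Fin m, ((A i ×ˢ A j).filter (fun xy => xy.1 - xy.2 = g)).card)
        = ∑ j : Fin m, ∑ x ∈ A i, if x - g ∈ A j then 1 else 0 := by
          exact Finset.sum_congr rfl (fun j _ => h1 j)
      _ = ∑ x ∈ A i, ∑ j : Fin m, if x - g ∈ A j then 1 else 0 := Finset.sum_comm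
      _ = ∑ x ∈ A i, 1 := by
          apply Finset.sum_congr rfl
          intro x _
          obtain ⟨j0, hj0⟩ := hcover (x - g)
          rw [Finset.sum_eq_single_of_mem j0 (Finset.mem_univ j0)]
          · rw [if_pos hj0]
          · intro j _ hjne
            rw [if_neg]
            intro hmem
            exact (Finset.disjoint_left.mp (hdisj j j0 hjne) hmem) hj0
      _ = (A i).card := by rw [Finset.sum_const, smul_eq_mul, mul_one]
      _ = k i := hcard i
  -- splitting off the j = i term
  have hsplit : ∀ (i : Fin m) (g : G),
      (∑ j : Fin m, if j ≠ i then ((A i ×ˢ A j).filter (fun xy => xy.1 - xy.2 = g)).card else 0)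
        + ((A i ×ˢ A i).filter (fun xy => xy.1 - xy.2 = g)).card = k i := by
    intro i g
    rw [← htot i g]
    rw [← Finset.sum_filter_add_sum_filter_not Finset.univ (fun j => j ≠ i)
      (fun j => ((A i ×ˢ A j).filter (fun xy => xy.1 - xy.2 = g)).card)]
    congr 1
    · rw [Finset.sum_filter]
    · have he : Finset.filter (fun j => ¬ j ≠ i) Finset.univ = {i} := by
        ext j; simp
      rw [he, Finset.sum_singleton]
  constructor
  · intro h i g hg
    have h1 := h i g hg
    have h2 := hsplit i g
    rw [hfilter i g hg]
    rw [h1] at h2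
    have hle : lam i ≤ k i := by omega
    have : ((A i ×ˢ A i).filter (fun xy => xy.1 - xy.2 = g)).card = k i - lam i := by omega
    rw [this]
    push_cast [Nat.cast_sub hle]
    ring
  · intro h i g hg
    have h1 := h i g hg
    rw [hfilter i g hg] at h1
    have h2 := hsplit i g
    omega
end

section
/- Let G be a finite abelian group of order n, and let A_1,…,A_m (m ≥ 2) be pairwise disjoint nonempty subsets of G with |A_i| = k_i forming an (n,m;k_1,…,k_m;λ_1,…,λ_m)-generalized strong external difference family. If k_i = 1 for some i, then λ_i = 1 and k_1 + ⋯ + k_m = n (i.e., the GSEDF is maximal). -/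
/-- In an (n,m;k_1,…,k_m;λ_1,…,λ_m)-GSEDF (m ≥ 2, sets nonempty) with
k_i = 1 for some i, one has λ_i = 1 and k_1 + ⋯ + k_m = n (the GSEDF is maximal). -/
theorem stmt4 {G : Type*} [AddCommGroup G] [Fintype G] [DecidableEq G]
    (n m : ℕ) (hn : Fintype.card G = n) (hm : 2 ≤ m)
    (A : Fin m → Finset G) (k lam : Fin m → ℕ)
    (hdisj : ∀ i j, i ≠ j → Disjoint (A i) (A j))
    (hne : ∀ i, (A i).Nonempty)
    (hcard : ∀ i, (A i).card = k i)
    (hGSEDF : ∀ i : Fin m, ∀ g : G, g ≠ 0 →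
        (∑ j : Fin m,
          if j ≠ i then ((A i ×ˢ A j).filter (fun xy => xy.1 - xy.2 = g)).card else 0) = lam i)
    (i : Fin m) (hki : k i = 1) :
    lam i = 1 ∧ ∑ j : Fin m, k j = n := by
  obtain ⟨a, ha⟩ := Finset.card_eq_one.mp (by rw [hcard i, hki])
  have key : ∀ (g : G) (j : Fin m),
      ((A i ×ˢ A j).filter (fun xy => xy.1 - xy.2 = g)).card
        = if a - g ∈ A j then 1 else 0 := by
    intro g j
    split_ifs with h
    · rw [Finset.card_eq_one]
      refine ⟨(a, a - g), ?_⟩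
      ext ⟨x, y⟩
      simp only [Finset.mem_filter, Finset.mem_product, ha, Finset.mem_singleton,
        Prod.mk.injEq]
      constructor
      · rintro ⟨⟨rfl, hy⟩, hxy⟩
        exact ⟨rfl, by rw [← hxy]; abel⟩
      · rintro ⟨rfl, rfl⟩
        exact ⟨⟨rfl, h⟩, by abel⟩
    · rw [Finset.card_eq_zero]
      ext ⟨x, y⟩
      simp only [Finset.mem_filter, Finset.mem_product, ha, Finset.mem_singleton,
        Finset.notMem_empty, iff_false]
      rintro ⟨⟨rfl, hy⟩, hxy⟩
      exact h (by rw [← hxy]; simpa using hy)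
  have hsum : ∀ g : G, g ≠ 0 →
      (Finset.univ.filter (fun j => j ≠ i ∧ a - g ∈ A j)).card = lam i := by
    intro g hg
    rw [← hGSEDF i g hg]
    rw [Finset.card_filter]
    apply Finset.sum_congr rfl
    intro j _
    rw [key g j]
    by_cases h1 : j ≠ i <;> by_cases h2 : a - g ∈ A j <;> simp [h1, h2]
  have hle : ∀ g : G, (Finset.univ.filter (fun j => j ≠ i ∧ a - g ∈ A j)).card ≤ 1 := by
    intro g
    apply Finset.card_le_one.mpr
    intro j1 h1 j2 h2
    simp only [Finset.mem_filter] at h1 h2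
    by_contra hne'
    exact (Finset.disjoint_left.mp (hdisj j1 j2 hne') h1.2.2) h2.2.2
  -- lam i = 1
  obtain ⟨j0, hj0⟩ := Fintype.exists_ne_of_one_lt_card (by simp only [Fintype.card_fin]; omega) i
  obtain ⟨b, hb⟩ := hne j0
  have hba : b ≠ a := by
    intro hba
    exact (Finset.disjoint_left.mp (hdisj j0 i hj0) hb) (by rw [hba, ha]; simp)
  have hg0 : (a - b : G) ≠ 0 := fun h => hba (by
    have : a = b := by linear_combination (norm := abel_nf) h
    exact this.symm)
  have hlam : lam i = 1 := by
    have h1 := hsum (a - b) hg0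
    have h2 := hle (a - b)
    have hmem : j0 ∈ Finset.univ.filter (fun j => j ≠ i ∧ a - (a - b) ∈ A j) := by
      simp only [Finset.mem_filter, Finset.mem_univ, true_and]
      exact ⟨hj0, by simpa using hb⟩
    have : 1 ≤ (Finset.univ.filter (fun j => j ≠ i ∧ a - (a - b) ∈ A j)).card :=
      Finset.card_pos.mpr ⟨j0, hmem⟩
    omega
  refine ⟨hlam, ?_⟩
  -- maximality
  have hcover : ∀ c : G, ∃ j : Fin m, c ∈ A j := by
    intro c
    by_cases hc : c = a
    · exact ⟨i, by rw [hc, ha]; simp⟩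
    · have hgc : (a - c : G) ≠ 0 := fun h => hc (by
        have : a = c := by linear_combination (norm := abel_nf) h
        exact this.symm)
      have h1 := hsum (a - c) hgc
      rw [hlam] at h1
      obtain ⟨j, hj⟩ := Finset.card_pos.mp (by omega : 0 < (Finset.univ.filter
        (fun j => j ≠ i ∧ a - (a - c) ∈ A j)).card)
      simp only [Finset.mem_filter] at hj
      exact ⟨j, by simpa using hj.2.2⟩
  have huniv : Finset.univ.biUnion A = (Finset.univ : Finset G) := by
    apply Finset.eq_univ_of_forall
    intro c
    obtain ⟨j, hj⟩ := hcover c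
    exact Finset.mem_biUnion.mpr ⟨j, Finset.mem_univ j, hj⟩
  have := Finset.card_biUnion (fun j1 _ j2 _ h => hdisj j1 j2 h) (s := Finset.univ) (t := A)
  rw [huniv, Finset.card_univ, hn] at this
  rw [this]
  exact Finset.sum_congr rfl fun j _ => (hcard j).symm
end

section
/- Let a weak AMD code be given with m ≥ 1 sources in a finite abelian group G of order n ≥ 2, and let a = Σ_{s∈S} a_s. Then there exists a nonzero Δ ∈ G such that ε_Δ ≥ a(m−1)/(m(n−1)). (Consequently the adversary's optimal success probability satisfies ε̂ ≥ a(m−1)/(m(n−1)).) -/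
/-- The success probability ε_Δ of the substitution Δ in a weak AMD code with equiprobable
sources: ε_Δ = (1/m) Σ_{s} Σ_{g ∈ A(s), g+Δ ∈ A(s') for some s' ≠ s} p_s(g). -/
noncomputable def weakEps {G : Type*} [AddCommGroup G] [DecidableEq G] {m : ℕ}
    (A : Fin m → Finset G) (p : Fin m → G → ℝ) (Δ : G) : ℝ :=
  (1 / (m : ℝ)) * ∑ i : Fin m,
    ∑ g ∈ (A i).filter (fun g => ∃ j, j ≠ i ∧ g + Δ ∈ A j), p i g

/-- In any weak AMD code with m ≥ 1 sources in a group of order n ≥ 2, there is a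
nonzero Δ with ε_Δ ≥ a(m−1)/(m(n−1)). -/
theorem stmt6 {G : Type*} [AddCommGroup G] [Fintype G] [DecidableEq G]
    (n m : ℕ) (hn : Fintype.card G = n) (hn2 : 2 ≤ n) (hm : 1 ≤ m)
    (A : Fin m → Finset G)
    (hdisj : ∀ i j, i ≠ j → Disjoint (A i) (A j))
    (hne : ∀ i, (A i).Nonempty)
    (p : Fin m → G → ℝ)
    (hp0 : ∀ i, ∀ g ∈ A i, 0 ≤ p i g)
    (hp1 : ∀ i, ∑ g ∈ A i, p i g = 1)
    (a : ℕ) (ha : a = ∑ i : Fin m, (A i).card) :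
    ∃ Δ : G, Δ ≠ 0 ∧
      (a : ℝ) * ((m : ℝ) - 1) / ((m : ℝ) * ((n : ℝ) - 1)) ≤ weakEps A p Δ := by
  classical
  set T : Finset G := Finset.univ.erase 0 with hT
  have hm0 : (m : ℝ) ≠ 0 := by positivity
  have hn1 : (1:ℝ) ≤ (n:ℝ) := by exact_mod_cast Nat.one_le_of_lt hn2
  have hn1' : (0:ℝ) < (n:ℝ) - 1 := by
    have : (2:ℝ) ≤ (n:ℝ) := by exact_mod_cast hn2
    linarith
  have hTcard : (T.card : ℝ) = (n : ℝ) - 1 := by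
    rw [hT, Finset.card_erase_of_mem (Finset.mem_univ 0), Finset.card_univ, hn]
    rw [Nat.cast_sub (by omega)]
    simp
  have hTne : T.Nonempty := by
    rw [← Finset.card_pos]
    have : (0:ℝ) < (T.card : ℝ) := by rw [hTcard]; linarith
    exact_mod_cast this
  -- Step 1: rewrite the sum of ε_Δ over T
  have hrw : ∑ Δ ∈ T, weakEps A p Δ
      = (1/(m:ℝ)) * ∑ i : Fin m, ∑ g ∈ A i,
          p i g * ((T.filter (fun Δ => ∃ j, j ≠ i ∧ g + Δ ∈ A j)).card : ℝ) := by
    unfold weakEps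
    rw [← Finset.mul_sum]
    congr 1
    rw [Finset.sum_comm]
    refine Finset.sum_congr rfl fun i _ => ?_
    simp_rw [Finset.sum_filter]
    rw [Finset.sum_comm]
    refine Finset.sum_congr rfl fun g _ => ?_
    rw [← Finset.sum_filter, Finset.sum_const, nsmul_eq_mul, mul_comm]
  -- Step 2: cardinality bound for each i, g
  have hcard : ∀ i : Fin m, ∀ g ∈ A i,
      (∑ j ∈ Finset.univ.erase i, ((A j).card : ℝ))
        ≤ ((T.filter (fun Δ => ∃ j, j ≠ i ∧ g + Δ ∈ A j)).card : ℝ) := by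
    intro i g hg
    have hB : ((Finset.univ.erase i).biUnion A).card
        = ∑ j ∈ Finset.univ.erase i, (A j).card := by
      apply Finset.card_biUnion
      intro x _ y _ hxy
      exact hdisj x y hxy
    have hle : ((Finset.univ.erase i).biUnion A).card
        ≤ (T.filter (fun Δ => ∃ j, j ≠ i ∧ g + Δ ∈ A j)).card := by
      apply Finset.card_le_card_of_injOn (fun h => h - g)
      · intro h hh
        simp only [Finset.mem_coe, Finset.mem_biUnion, Finset.mem_erase] at hh
        obtain ⟨j, ⟨hji, -⟩, hhj⟩ := hh
        simp only [Finset.mem_coe, Finset.mem_filter]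
        refine ⟨?_, j, hji, ?_⟩
        · rw [hT, Finset.mem_erase]
          refine ⟨?_, Finset.mem_univ _⟩
          intro h0
          have hhg : h = g := by
            have := sub_eq_zero.mp h0
            exact this
          exact (Finset.disjoint_left.mp (hdisj j i hji) hhj) (hhg ▸ hg)
        · have : g + (h - g) = h := by abel
          rw [this]; exact hhj
      · intro x _ y _ hxy
        exact sub_left_injective hxy
    calc (∑ j ∈ Finset.univ.erase i, ((A j).card : ℝ))
        = (((Finset.univ.erase i).biUnion A).card : ℝ) := by rw [hB]; push_cast; ring
      _ ≤ _ := by exact_mod_cast hle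
  -- Step 3: lower bound for the sum
  have key : (a : ℝ) * ((m:ℝ) - 1) / (m:ℝ) ≤ ∑ Δ ∈ T, weakEps A p Δ := by
    rw [hrw]
    have step : ∀ i : Fin m,
        ((a:ℝ) - ((A i).card : ℝ))
          ≤ ∑ g ∈ A i, p i g * ((T.filter (fun Δ => ∃ j, j ≠ i ∧ g + Δ ∈ A j)).card : ℝ) := by
      intro i
      have h1 : ∑ j ∈ Finset.univ.erase i, ((A j).card : ℝ)
          = (a:ℝ) - ((A i).card : ℝ) := by
        rw [Finset.sum_erase_eq_sub (Finset.mem_univ i), ha]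
        push_cast; ring
      calc (a:ℝ) - ((A i).card : ℝ)
          = ∑ g ∈ A i, p i g * ((a:ℝ) - ((A i).card : ℝ)) := by
            rw [← Finset.sum_mul, hp1 i, one_mul]
        _ ≤ _ := by
            apply Finset.sum_le_sum
            intro g hg
            apply mul_le_mul_of_nonneg_left _ (hp0 i g hg)
            rw [← h1]
            exact hcard i g hg
    have h2 : ∑ i : Fin m, ((a:ℝ) - ((A i).card : ℝ)) = (m:ℝ) * a - a := by
      rw [Finset.sum_sub_distrib, Finset.sum_const, Finset.card_univ, Fintype.card_fin,
        nsmul_eq_mul]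
      rw [ha]; push_cast; ring
    have h3 : (m:ℝ) * a - a ≤ ∑ i : Fin m, ∑ g ∈ A i,
        p i g * ((T.filter (fun Δ => ∃ j, j ≠ i ∧ g + Δ ∈ A j)).card : ℝ) := by
      rw [← h2]
      exact Finset.sum_le_sum fun i _ => step i
    rw [div_le_iff₀ (by positivity)] at *
    calc (a:ℝ) * ((m:ℝ) - 1) = ((m:ℝ) * a - a) * (1/(m:ℝ)) * m := by
          field_simp
      _ ≤ _ := by
          rw [mul_le_mul_iff_of_pos_right (by positivity : (0:ℝ) < (m:ℝ))]
          rw [mul_comm]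
          exact mul_le_mul_of_nonneg_left h3 (by positivity)
  -- Step 4: averaging
  have havg : ∃ Δ ∈ T, (a : ℝ) * ((m : ℝ) - 1) / ((m : ℝ) * ((n : ℝ) - 1)) ≤ weakEps A p Δ := by
    by_contra hcon
    push_neg at hcon
    have : ∑ Δ ∈ T, weakEps A p Δ
        < ∑ Δ ∈ T, (a : ℝ) * ((m : ℝ) - 1) / ((m : ℝ) * ((n : ℝ) - 1)) :=
      Finset.sum_lt_sum_of_nonempty hTne hcon
    rw [Finset.sum_const, nsmul_eq_mul, hTcard] at this
    have heq : ((n:ℝ) - 1) * ((a : ℝ) * ((m : ℝ) - 1) / ((m : ℝ) * ((n : ℝ) - 1)))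
        = (a : ℝ) * ((m:ℝ) - 1) / (m:ℝ) := by
      field_simp
    rw [heq] at this
    linarith
  obtain ⟨Δ, hΔT, hΔ⟩ := havg
  exact ⟨Δ, Finset.ne_of_mem_erase (hT ▸ hΔT), hΔ⟩
end

section
/- Let a weak AMD code be given with m ≥ 2 sources in a finite abelian group G of order n, and let a = Σ_{s∈S} a_s. Then there exists a nonzero Δ ∈ G such that ε_Δ ≥ 1/a. (Consequently the adversary's optimal success probability satisfies ε̂ ≥ 1/a.) -/
/-- In any weak AMD code with m ≥ 2 sources in a finite abelian group of order n,
there is a nonzero Δ with ε_Δ ≥ 1/a, where a = Σ_s a_s. -/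
theorem stmt7 {G : Type*} [AddCommGroup G] [Fintype G] [DecidableEq G]
    (n m : ℕ) (hn : Fintype.card G = n) (hm : 2 ≤ m)
    (A : Fin m → Finset G)
    (hdisj : ∀ i j, i ≠ j → Disjoint (A i) (A j))
    (hne : ∀ i, (A i).Nonempty)
    (p : Fin m → G → ℝ)
    (hp0 : ∀ i, ∀ g ∈ A i, 0 ≤ p i g)
    (hp1 : ∀ i, ∑ g ∈ A i, p i g = 1)
    (a : ℕ) (ha : a = ∑ i : Fin m, (A i).card) :
    ∃ Δ : G, Δ ≠ 0 ∧ 1 / (a : ℝ) ≤ weakEps A p Δ := by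
  have hmpos : 0 < m := by omega
  -- choose source with minimal a_i
  obtain ⟨i, -, hmin⟩ := Finset.exists_min_image (Finset.univ : Finset (Fin m))
    (fun i => (A i).card) ⟨⟨0, hmpos⟩, Finset.mem_univ _⟩
  -- m * a_i ≤ a
  have hma : m * (A i).card ≤ a := by
    rw [ha]
    calc m * (A i).card = ∑ _j : Fin m, (A i).card := by
          simp [Finset.sum_const, Finset.card_univ, mul_comm]
      _ ≤ ∑ j : Fin m, (A j).card :=
          Finset.sum_le_sum fun j _ => hmin j (Finset.mem_univ j)
  have hai : 0 < (A i).card := Finset.card_pos.2 (hne i)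
  have hapos : 0 < a := lt_of_lt_of_le (by positivity) hma
  -- choose g with p i g ≥ 1 / a_i
  have hsum : ∑ _g ∈ A i, (1 / ((A i).card : ℝ)) ≤ ∑ g ∈ A i, p i g := by
    rw [hp1 i, Finset.sum_const]
    rw [nsmul_eq_mul, mul_one_div, div_self (by positivity)]
  obtain ⟨g, hg, hpg⟩ := Finset.exists_le_of_sum_le (hne i) hsum
  -- choose j ≠ i and h ∈ A j
  obtain ⟨j, hj⟩ := Fintype.exists_ne_of_one_lt_card (by simp [Fintype.card_fin]; omega) i
  obtain ⟨h, hh⟩ := hne j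
  refine ⟨h - g, ?_, ?_⟩
  · intro h0
    have : h = g := by
      have := sub_eq_zero.mp h0; exact this
    exact (Finset.disjoint_left.mp (hdisj j i hj) hh (this ▸ hg))
  · -- lower bound on weakEps
    have hgfilt : g ∈ (A i).filter (fun x => ∃ k, k ≠ i ∧ x + (h - g) ∈ A k) := by
      refine Finset.mem_filter.2 ⟨hg, j, hj, ?_⟩
      simpa using hh
    have hinner : ∀ k : Fin m,
        0 ≤ ∑ x ∈ (A k).filter (fun x => ∃ l, l ≠ k ∧ x + (h - g) ∈ A l), p k x := by
      intro k
      exact Finset.sum_nonneg fun x hx => hp0 k x (Finset.mem_filter.mp hx).1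
    have h1 : p i g ≤ ∑ x ∈ (A i).filter (fun x => ∃ l, l ≠ i ∧ x + (h - g) ∈ A l), p i x :=
      Finset.single_le_sum (fun x hx => hp0 i x (Finset.mem_filter.mp hx).1) hgfilt
    have h2 : p i g ≤ ∑ k : Fin m,
        ∑ x ∈ (A k).filter (fun x => ∃ l, l ≠ k ∧ x + (h - g) ∈ A l), p k x :=
      le_trans h1 (Finset.single_le_sum (fun k _ => hinner k) (Finset.mem_univ i))
    have hfinal : (1 : ℝ) / a ≤ (1 / m) * p i g := by
      rw [one_div_mul_eq_div]
      rw [div_le_div_iff₀ (by exact_mod_cast hapos) (by exact_mod_cast hmpos)]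
      calc (1 : ℝ) * m = m * (A i).card * (1 / (A i).card) := by
            field_simp
        _ ≤ a * p i g := by
            apply mul_le_mul (by exact_mod_cast hma) hpg (by positivity)
              (by exact_mod_cast hapos.le)
        _ = p i g * a := mul_comm _ _
    calc (1 : ℝ) / a ≤ (1 / m) * p i g := hfinal
      _ ≤ weakEps A p (h - g) := by
          unfold weakEps
          apply mul_le_mul_of_nonneg_left h2 (by positivity)
end

section
/- Let a weak AMD code be given with m ≥ 1 sources in a finite abelian group G of order n ≥ 2, and let a = Σ_{s∈S} a_s. Then the maximum of ε_Δ over all nonzero Δ ∈ G equals a(m−1)/(m(n−1)) if and only if ε_Δ = a(m−1)/(m(n−1)) for every nonzero Δ ∈ G. -/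
/-- Key counting lemma: the total of ε_Δ over all Δ (including 0, where it vanishes)
equals a(m-1)/m. -/
theorem weakEps_sum {G : Type*} [AddCommGroup G] [Fintype G] [DecidableEq G]
    {m : ℕ} (hm : 1 ≤ m)
    (A : Fin m → Finset G)
    (hdisj : ∀ i j, i ≠ j → Disjoint (A i) (A j))
    (p : Fin m → G → ℝ)
    (hp1 : ∀ i, ∑ g ∈ A i, p i g = 1)
    (a : ℕ) (ha : a = ∑ i : Fin m, (A i).card) :
    ∑ Δ : G, weakEps A p Δ = (a : ℝ) * ((m : ℝ) - 1) / (m : ℝ) := by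
  classical
  have hm0 : (m : ℝ) ≠ 0 := Nat.cast_ne_zero.mpr (by omega)
  have hcard : ∀ i : Fin m, ∀ g : G,
      ((Finset.univ.filter (fun Δ : G => ∃ j, j ≠ i ∧ g + Δ ∈ A j)).card : ℝ)
        = (a : ℝ) - ((A i).card : ℝ) := by
    intro i g
    have hbij : (Finset.univ.filter (fun Δ : G => ∃ j, j ≠ i ∧ g + Δ ∈ A j)).card
        = ((Finset.univ.erase i).biUnion A).card := by
      apply Finset.card_nbij (fun Δ => g + Δ)
      · intro Δ hΔ
        simp only [Finset.coe_filter, Set.mem_setOf_eq, Finset.mem_coe, Finset.mem_filter, Finset.mem_univ, true_and] at hΔ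
        obtain ⟨j, hji, hj⟩ := hΔ
        exact Finset.mem_biUnion.mpr ⟨j, Finset.mem_erase.mpr ⟨hji, Finset.mem_univ j⟩, hj⟩
      · intro x _ y _ h
        exact add_left_cancel h
      · intro h hh
        simp only [Finset.coe_biUnion, Set.mem_iUnion, Finset.mem_coe,
          Finset.mem_erase] at hh
        obtain ⟨j, ⟨hji, -⟩, hj⟩ := hh
        refine ⟨h - g, ?_, by simp⟩
        simp only [Finset.coe_filter, Set.mem_setOf_eq, Finset.mem_univ, true_and]
        exact ⟨j, hji, by simpa [add_sub_cancel] using hj⟩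
    rw [hbij, Finset.card_biUnion (by
      intro x hx y hy hxy; exact hdisj x y hxy)]
    have : ∑ j ∈ Finset.univ.erase i, ((A j).card : ℝ)
        = (∑ j : Fin m, ((A j).card : ℝ)) - ((A i).card : ℝ) :=
      Finset.sum_erase_eq_sub (Finset.mem_univ i)
    push_cast
    rw [this, ha]; push_cast; ring
  have hswap : ∑ Δ : G, weakEps A p Δ
      = (1 / (m : ℝ)) * ∑ i : Fin m, ∑ g ∈ A i,
          p i g * ((Finset.univ.filter (fun Δ : G => ∃ j, j ≠ i ∧ g + Δ ∈ A j)).card : ℝ) := by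
    unfold weakEps
    rw [← Finset.mul_sum]
    congr 1
    rw [Finset.sum_comm]
    refine Finset.sum_congr rfl fun i _ => ?_
    have : ∀ Δ : G, ∑ g ∈ (A i).filter (fun g => ∃ j, j ≠ i ∧ g + Δ ∈ A j), p i g
        = ∑ g ∈ A i, if (∃ j, j ≠ i ∧ g + Δ ∈ A j) then p i g else 0 := fun Δ =>
      Finset.sum_filter _ _
    simp only [this]
    rw [Finset.sum_comm]
    refine Finset.sum_congr rfl fun g _ => ?_
    rw [← Finset.sum_filter, Finset.sum_const, nsmul_eq_mul, mul_comm]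
  rw [hswap]
  have : ∑ i : Fin m, ∑ g ∈ A i,
      p i g * ((Finset.univ.filter (fun Δ : G => ∃ j, j ≠ i ∧ g + Δ ∈ A j)).card : ℝ)
      = ∑ i : Fin m, ((a : ℝ) - ((A i).card : ℝ)) := by
    refine Finset.sum_congr rfl fun i _ => ?_
    calc ∑ g ∈ A i, p i g * ((Finset.univ.filter
            (fun Δ : G => ∃ j, j ≠ i ∧ g + Δ ∈ A j)).card : ℝ)
        = ∑ g ∈ A i, p i g * ((a : ℝ) - ((A i).card : ℝ)) := by
          refine Finset.sum_congr rfl fun g _ => by rw [hcard i g]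
      _ = (∑ g ∈ A i, p i g) * ((a : ℝ) - ((A i).card : ℝ)) := by
          rw [Finset.sum_mul]
      _ = (a : ℝ) - ((A i).card : ℝ) := by rw [hp1 i, one_mul]
  rw [this, Finset.sum_sub_distrib, Finset.sum_const, Finset.card_univ, Fintype.card_fin]
  have : ∑ i : Fin m, ((A i).card : ℝ) = (a : ℝ) := by rw [ha]; push_cast; ring
  rw [this]
  field_simp
  ring

theorem weakEps_zero {G : Type*} [AddCommGroup G] [Fintype G] [DecidableEq G]
    {m : ℕ} (A : Fin m → Finset G)
    (hdisj : ∀ i j, i ≠ j → Disjoint (A i) (A j))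
    (p : Fin m → G → ℝ) : weakEps A p (0 : G) = 0 := by
  unfold weakEps
  have : ∀ i : Fin m, (A i).filter (fun g => ∃ j, j ≠ i ∧ g + (0:G) ∈ A j) = ∅ := by
    intro i
    ext g
    simp only [Finset.mem_filter, add_zero, Finset.notMem_empty, iff_false, not_and]
    rintro hg ⟨j, hji, hgj⟩
    exact Finset.disjoint_left.mp (hdisj j i hji) hgj hg
  apply mul_eq_zero_of_right
  apply Finset.sum_eq_zero
  intro i _
  rw [this i, Finset.sum_empty]

/-- In a weak AMD code (m ≥ 1 sources, group of order n ≥ 2) the maximum of ε_Δ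
over nonzero Δ equals a(m−1)/(m(n−1)) iff ε_Δ = a(m−1)/(m(n−1)) for every nonzero Δ. -/
theorem stmt8 {G : Type*} [AddCommGroup G] [Fintype G] [DecidableEq G]
    (n m : ℕ) (hn : Fintype.card G = n) (hn2 : 2 ≤ n) (hm : 1 ≤ m)
    (A : Fin m → Finset G)
    (hdisj : ∀ i j, i ≠ j → Disjoint (A i) (A j))
    (hne : ∀ i, (A i).Nonempty)
    (p : Fin m → G → ℝ)
    (hp0 : ∀ i, ∀ g ∈ A i, 0 ≤ p i g)
    (hp1 : ∀ i, ∑ g ∈ A i, p i g = 1)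
    (a : ℕ) (ha : a = ∑ i : Fin m, (A i).card) :
    IsGreatest {x : ℝ | ∃ Δ : G, Δ ≠ 0 ∧ weakEps A p Δ = x}
        ((a : ℝ) * ((m : ℝ) - 1) / ((m : ℝ) * ((n : ℝ) - 1)))
      ↔ ∀ Δ : G, Δ ≠ 0 →
          weakEps A p Δ = (a : ℝ) * ((m : ℝ) - 1) / ((m : ℝ) * ((n : ℝ) - 1)) := by
  classical
  set B : ℝ := (a : ℝ) * ((m : ℝ) - 1) / ((m : ℝ) * ((n : ℝ) - 1)) with hB
  have hm0 : (m : ℝ) ≠ 0 := Nat.cast_ne_zero.mpr (by omega)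
  have hn2' : (2 : ℝ) ≤ (n : ℝ) := by exact_mod_cast hn2
  have hn1 : (n : ℝ) - 1 ≠ 0 := by linarith
  -- nonzero elements
  set T : Finset G := Finset.univ.erase (0 : G) with hT
  have hTcard : (T.card : ℝ) = (n : ℝ) - 1 := by
    rw [hT, Finset.card_erase_of_mem (Finset.mem_univ _), Finset.card_univ, hn]
    have : 1 ≤ n := by omega
    push_cast [Nat.cast_sub this]
    ring
  have hsumT : ∑ Δ ∈ T, weakEps A p Δ = (a : ℝ) * ((m : ℝ) - 1) / (m : ℝ) := by
    have := weakEps_sum hm A hdisj p hp1 a ha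
    rw [hT, Finset.sum_erase_eq_sub (Finset.mem_univ (0:G)), this,
      weakEps_zero A hdisj p, sub_zero]
  have hTB : (T.card : ℝ) * B = (a : ℝ) * ((m : ℝ) - 1) / (m : ℝ) := by
    rw [hTcard, hB]
    field_simp
  constructor
  · rintro ⟨hmem, hub⟩ Δ hΔ
    have hle : ∀ Δ' ∈ T, weakEps A p Δ' ≤ B := by
      intro Δ' hΔ'
      exact hub ⟨Δ', (Finset.mem_erase.mp hΔ').1, rfl⟩
    refine le_antisymm (hle Δ (Finset.mem_erase.mpr ⟨hΔ, Finset.mem_univ Δ⟩)) ?_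
    by_contra hlt
    push_neg at hlt
    have : ∑ Δ' ∈ T, weakEps A p Δ' < ∑ Δ' ∈ T, B :=
      Finset.sum_lt_sum hle ⟨Δ, Finset.mem_erase.mpr ⟨hΔ, Finset.mem_univ Δ⟩, hlt⟩
    rw [hsumT, Finset.sum_const, nsmul_eq_mul, hTB] at this
    exact lt_irrefl _ this
  · intro hall
    have hex : ∃ Δ : G, Δ ≠ 0 := by
      have : 1 < Fintype.card G := by omega
      exact Fintype.exists_ne_of_one_lt_card this 0
    obtain ⟨Δ, hΔ⟩ := hex
    refine ⟨⟨Δ, hΔ, hall Δ hΔ⟩, ?_⟩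
    rintro x ⟨Δ', hΔ', rfl⟩
    exact le_of_eq (hall Δ' hΔ')
end

section
/- Let A_1,…,A_m be an (n,m;k_1,…,k_m;λ_1,…,λ_m)-generalized strong external difference family in a finite abelian group G of order n ≥ 2, and let a = k_1 + ⋯ + k_m. Consider the weak AMD code with m sources, A(s_i) = A_i, and equiprobable encoding. Then for every nonzero Δ ∈ G, ε_Δ = (1/m) Σ_{i=1}^{m} (1/k_i)·|{g ∈ A_i : g+Δ ∈ A_j for some j ≠ i}| = a(m−1)/(m(n−1)); in particular, the code is an R-optimal weak (m, n, a(m−1)/(m(n−1)))-AMD code. -/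
/-- A GSEDF yields an R-optimal weak AMD code with equiprobable sources and
equiprobable encoding: for every nonzero Δ,
ε_Δ = (1/m) Σ_i (1/k_i)·|{g ∈ A_i : g+Δ ∈ A_j for some j ≠ i}| = a(m−1)/(m(n−1)). -/
theorem stmt9 {G : Type*} [AddCommGroup G] [Fintype G] [DecidableEq G]
    (n m : ℕ) (hn : Fintype.card G = n) (hn2 : 2 ≤ n)
    (A : Fin m → Finset G) (k lam : Fin m → ℕ)
    (hdisj : ∀ i j, i ≠ j → Disjoint (A i) (A j))
    (hne : ∀ i, (A i).Nonempty)
    (hcard : ∀ i, (A i).card = k i)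
    (hGSEDF : ∀ i : Fin m, ∀ g : G, g ≠ 0 →
        (∑ j : Fin m,
          if j ≠ i then ((A i ×ˢ A j).filter (fun xy => xy.1 - xy.2 = g)).card else 0) = lam i)
    (a : ℕ) (ha : a = ∑ i : Fin m, k i) :
    ∀ Δ : G, Δ ≠ 0 →
      (1 / (m : ℝ)) * ∑ i : Fin m,
          (((A i).filter (fun g => ∃ j, j ≠ i ∧ g + Δ ∈ A j)).card : ℝ) / (k i : ℝ)
        = (a : ℝ) * ((m : ℝ) - 1) / ((m : ℝ) * ((n : ℝ) - 1)) := by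
  intro Δ hΔ
  rcases Nat.eq_zero_or_pos m with hm0 | hmpos
  · subst hm0
    have ha0 : a = 0 := by simpa using ha
    subst ha0
    simp
  have hkpos : ∀ i : Fin m, 0 < k i := by
    intro i
    rw [← hcard i]
    exact Finset.card_pos.mpr (hne i)
  have hn1 : (0:ℝ) < (n:ℝ) - 1 := by
    have : (2:ℝ) ≤ (n:ℝ) := by exact_mod_cast hn2
    linarith
  -- pairs counted by filter on A i × A j equal filter on A i
  have key : ∀ i j : Fin m,
      ((A i ×ˢ A j).filter (fun xy => xy.1 - xy.2 = -Δ)).card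
        = ((A i).filter (fun g => g + Δ ∈ A j)).card := by
    intro i j
    apply Finset.card_bij (fun xy _ => xy.1)
    · intro xy hxy
      simp only [Finset.mem_filter, Finset.mem_product] at hxy
      have h2 : xy.2 - xy.1 = Δ := by rw [← neg_sub, hxy.2, neg_neg]
      have h3 : xy.2 = Δ + xy.1 := sub_eq_iff_eq_add.mp h2
      simp only [Finset.mem_filter]
      exact ⟨hxy.1.1, by rw [add_comm, ← h3]; exact hxy.1.2⟩
    · intro x hx y hy hxy
      simp only [Finset.mem_filter, Finset.mem_product] at hx hy
      have hx2 : x.2 = x.1 + Δ := by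
        have h2 : x.2 - x.1 = Δ := by rw [← neg_sub, hx.2, neg_neg]
        rw [sub_eq_iff_eq_add.mp h2, add_comm]
      have hy2 : y.2 = y.1 + Δ := by
        have h2 : y.2 - y.1 = Δ := by rw [← neg_sub, hy.2, neg_neg]
        rw [sub_eq_iff_eq_add.mp h2, add_comm]
      exact Prod.ext hxy (by rw [hx2, hy2, hxy])
    · intro g hg
      simp only [Finset.mem_filter] at hg
      refine ⟨(g, g + Δ), ?_, rfl⟩
      simp only [Finset.mem_filter, Finset.mem_product]
      exact ⟨⟨hg.1, hg.2⟩, by abel⟩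
  -- step 1: the filter card is lam i
  have step1 : ∀ i : Fin m,
      ((A i).filter (fun g => ∃ j, j ≠ i ∧ g + Δ ∈ A j)).card = lam i := by
    intro i
    have hsplit : (A i).filter (fun g => ∃ j, j ≠ i ∧ g + Δ ∈ A j)
        = Finset.univ.biUnion
            (fun j => if j ≠ i then (A i).filter (fun g => g + Δ ∈ A j) else ∅) := by
      ext g
      simp only [Finset.mem_biUnion, Finset.mem_filter, Finset.mem_univ, true_and]
      constructor
      · rintro ⟨hg, j, hj, hmem⟩
        refine ⟨j, ?_⟩
        rw [if_pos hj, Finset.mem_filter]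
        exact ⟨hg, hmem⟩
      · rintro ⟨j, hj⟩
        by_cases h : j ≠ i
        · rw [if_pos h, Finset.mem_filter] at hj
          exact ⟨hj.1, j, h, hj.2⟩
        · rw [if_neg h] at hj; exact absurd hj (Finset.notMem_empty g)
    have hdisj2 : ∀ j1 ∈ (Finset.univ : Finset (Fin m)), ∀ j2 ∈ Finset.univ, j1 ≠ j2 →
        Disjoint (if j1 ≠ i then (A i).filter (fun g => g + Δ ∈ A j1) else ∅)
          (if j2 ≠ i then (A i).filter (fun g => g + Δ ∈ A j2) else ∅) := by
      intro j1 _ j2 _ hj12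
      by_cases h1 : j1 ≠ i
      · by_cases h2 : j2 ≠ i
        · rw [if_pos h1, if_pos h2]
          rw [Finset.disjoint_left]
          intro g hg1 hg2
          simp only [Finset.mem_filter] at hg1 hg2
          exact (Finset.disjoint_left.mp (hdisj j1 j2 hj12) hg1.2) hg2.2
        · rw [if_neg h2]; exact Finset.disjoint_empty_right _
      · rw [if_neg h1]; exact Finset.disjoint_empty_left _
    rw [hsplit, Finset.card_biUnion hdisj2]
    rw [← hGSEDF i (-Δ) (neg_ne_zero.mpr hΔ)]
    refine Finset.sum_congr rfl ?_
    intro j _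
    by_cases h : j ≠ i
    · rw [if_pos h, if_pos h, key i j]
    · rw [if_neg h, if_neg h, Finset.card_empty]
  -- step 2: lam i * (n-1) = k i * (sum of other k's), over ℕ then ℝ
  have step2 : ∀ i : Fin m,
      (lam i : ℝ) * ((n:ℝ) - 1) = (k i : ℝ) * ((a:ℝ) - (k i : ℝ)) := by
    intro i
    have pairsum : ∀ j : Fin m, j ≠ i →
        (∑ g ∈ Finset.univ \ {(0:G)},
          ((A i ×ˢ A j).filter (fun xy => xy.1 - xy.2 = g)).card) = k i * k j := by
      intro j hj
      have htot : (A i ×ˢ A j).card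
          = ∑ g ∈ (Finset.univ : Finset G),
              ((A i ×ˢ A j).filter (fun xy => xy.1 - xy.2 = g)).card :=
        Finset.card_eq_sum_card_fiberwise (fun x _ => Finset.mem_univ _)
      have hzero : ((A i ×ˢ A j).filter (fun xy => xy.1 - xy.2 = (0:G))).card = 0 := by
        rw [Finset.card_eq_zero]
        rw [Finset.filter_eq_empty_iff]
        intro xy hxy
        simp only [Finset.mem_product] at hxy
        intro h0
        have : xy.1 = xy.2 := sub_eq_zero.mp h0
        exact (Finset.disjoint_left.mp (hdisj i j (Ne.symm hj)) hxy.1) (this ▸ hxy.2)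
      have hins : (Finset.univ : Finset G) = insert (0:G) (Finset.univ \ {(0:G)}) := by
        ext g
        simp [Finset.mem_insert, em]
      rw [hins, Finset.sum_insert (by simp), hzero, zero_add] at htot
      rw [← htot, Finset.card_product, hcard i, hcard j]
    have swap : ∑ g ∈ Finset.univ \ {(0:G)}, lam i
        = ∑ j : Fin m, if j ≠ i then k i * k j else 0 := by
      calc ∑ g ∈ Finset.univ \ {(0:G)}, lam i
          = ∑ g ∈ Finset.univ \ {(0:G)}, ∑ j : Fin m,
              if j ≠ i then ((A i ×ˢ A j).filter (fun xy => xy.1 - xy.2 = g)).card else 0 := by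
            refine Finset.sum_congr rfl ?_
            intro g hg
            have hg0 : g ≠ 0 := by
              simp only [Finset.mem_sdiff, Finset.mem_singleton] at hg
              exact hg.2
            exact (hGSEDF i g hg0).symm
        _ = ∑ j : Fin m, ∑ g ∈ Finset.univ \ {(0:G)},
              (if j ≠ i then ((A i ×ˢ A j).filter (fun xy => xy.1 - xy.2 = g)).card else 0) :=
            Finset.sum_comm
        _ = ∑ j : Fin m, if j ≠ i then k i * k j else 0 := by
            refine Finset.sum_congr rfl ?_
            intro j _
            by_cases h : j ≠ i
            · simp only [if_pos h]
              rw [← pairsum j h]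
            · simp [if_neg h]
    have hcardG : (Finset.univ \ {(0:G)}).card = n - 1 := by
      rw [Finset.card_sdiff_of_subset (by simp)]
      simp [hn]
    rw [Finset.sum_const, hcardG, smul_eq_mul] at swap
    -- sum of other k's
    have hothers : (∑ j : Fin m, if j ≠ i then k j else 0) + k i = a := by
      have h1 : ∀ j : Fin m, (if j ≠ i then k j else 0) + (if j = i then k j else 0) = k j := by
        intro j; by_cases h : j = i <;> simp [h]
      have h2 : ∑ j : Fin m, (if j = i then k j else 0) = k i := by
        simp
      calc (∑ j : Fin m, if j ≠ i then k j else 0) + k i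
          = ∑ j : Fin m, ((if j ≠ i then k j else 0) + (if j = i then k j else 0)) := by
            rw [Finset.sum_add_distrib, h2]
        _ = ∑ j : Fin m, k j := Finset.sum_congr rfl (fun j _ => h1 j)
        _ = a := ha.symm
    have hmuls : (∑ j : Fin m, if j ≠ i then k i * k j else 0)
        = k i * (∑ j : Fin m, if j ≠ i then k j else 0) := by
      rw [Finset.mul_sum]
      refine Finset.sum_congr rfl ?_
      intro j _
      by_cases h : j ≠ i <;> simp [h]
    rw [hmuls] at swap
    -- now swap : (n-1) * lam i = k i * S where S + k i = a
    have hcast : ((n:ℝ) - 1) * (lam i : ℝ)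
        = (k i : ℝ) * ((∑ j : Fin m, if j ≠ i then k j else 0 : ℕ) : ℝ) := by
      have h1 : ((n:ℝ) - 1) = ((n - 1 : ℕ) : ℝ) := by
        rw [Nat.cast_sub (by omega)]; simp
      rw [h1, ← Nat.cast_mul, ← Nat.cast_mul, swap]
    have hS : ((∑ j : Fin m, if j ≠ i then k j else 0 : ℕ) : ℝ) = (a:ℝ) - (k i : ℝ) := by
      rw [eq_sub_iff_add_eq]
      exact_mod_cast hothers
    rw [hS] at hcast
    linarith
  -- final computation
  have hsum : ∑ i : Fin m,
      (((A i).filter (fun g => ∃ j, j ≠ i ∧ g + Δ ∈ A j)).card : ℝ) / (k i : ℝ)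
      = ((m:ℝ) * (a:ℝ) - (a:ℝ)) / ((n:ℝ) - 1) := by
    have hterm : ∀ i : Fin m,
        (((A i).filter (fun g => ∃ j, j ≠ i ∧ g + Δ ∈ A j)).card : ℝ) / (k i : ℝ)
        = ((a:ℝ) - (k i : ℝ)) / ((n:ℝ) - 1) := by
      intro i
      rw [step1 i]
      have hk : (k i : ℝ) ≠ 0 := by
        exact_mod_cast (hkpos i).ne'
      rw [div_eq_div_iff hk (by linarith)]
      have := step2 i
      linarith [step2 i]
    rw [Finset.sum_congr rfl (fun i _ => hterm i)]
    rw [← Finset.sum_div]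
    congr 1
    rw [Finset.sum_sub_distrib, Finset.sum_const, Finset.card_univ, Fintype.card_fin]
    have : ∑ i : Fin m, (k i : ℝ) = (a : ℝ) := by
      rw [ha]; push_cast; ring
    rw [this]
    ring
  rw [hsum]
  have hmR : (m:ℝ) ≠ 0 := by exact_mod_cast hmpos.ne'
  field_simp
end

section
/- Let A_1,…,A_m (m ≥ 2) be pairwise disjoint k-element subsets of a finite abelian group G of order n ≥ 2, and consider the k-regular weak AMD code with equiprobable sources and equiprobable encoding, so that for nonzero Δ ∈ G, ε_Δ = |{g : g ∈ A_i for some i and g+Δ ∈ A_j for some j ≠ i}|/(km). Then the maximum of ε_Δ over all nonzero Δ equals k(m−1)/(n−1) if and only if A_1,…,A_m form an (n,m,k,λ)-external difference family with λ = k²m(m−1)/(n−1). -/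
/-- The number of "good" encodings for a substitution Δ:
|{g : g ∈ A_i for some i and g+Δ ∈ A_j for some j ≠ i}|. -/
def goodCount {G : Type*} [AddCommGroup G] [Fintype G] [DecidableEq G] {m : ℕ}
    (A : Fin m → Finset G) (Δ : G) : ℕ :=
  (Finset.univ.filter (fun g : G => ∃ i, g ∈ A i ∧ ∃ j, j ≠ i ∧ g + Δ ∈ A j)).card

open Finset

lemma cardC {G : Type*} [AddCommGroup G] [DecidableEq G]
    (Ai Aj : Finset G) (Δ : G) :
    ((Ai ×ˢ Aj).filter (fun xy => xy.1 - xy.2 = Δ)).card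
      = (Aj.filter (fun g => g + Δ ∈ Ai)).card := by
  apply Finset.card_bij' (fun xy _ => xy.2) (fun g _ => (g + Δ, g))
  · intro xy hxy
    simp only [mem_filter, mem_product] at hxy ⊢
    refine ⟨hxy.1.2, ?_⟩
    have := hxy.2
    have : xy.2 + Δ = xy.1 := by rw [← this]; abel
    rw [this]; exact hxy.1.1
  · intro g hg
    simp only [mem_filter, mem_product] at hg ⊢
    exact ⟨⟨hg.2, hg.1⟩, by abel⟩
  · intro xy hxy
    simp only [mem_filter, mem_product] at hxy
    have : xy.2 + Δ = xy.1 := by rw [← hxy.2]; abel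
    simp [this]
  · intro g hg; rfl

lemma goodCount_eq' {G : Type*} [AddCommGroup G] [Fintype G] [DecidableEq G] {m : ℕ}
    (A : Fin m → Finset G) (hdisj : ∀ i j, i ≠ j → Disjoint (A i) (A j)) (Δ : G) :
    (Finset.univ.filter (fun g : G => ∃ i, g ∈ A i ∧ ∃ j, j ≠ i ∧ g + Δ ∈ A j)).card
      = ∑ a : Fin m, ∑ b : Fin m,
          if b ≠ a then ((A a).filter (fun g => g + Δ ∈ A b)).card else 0 := by
  classical
  set P : Finset (Fin m × Fin m) := Finset.univ.filter (fun p => p.2 ≠ p.1) with hP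
  have hset : (Finset.univ.filter (fun g : G => ∃ i, g ∈ A i ∧ ∃ j, j ≠ i ∧ g + Δ ∈ A j))
      = P.biUnion (fun p => (A p.1).filter (fun g => g + Δ ∈ A p.2)) := by
    ext g
    simp only [mem_filter, mem_univ, true_and, mem_biUnion, hP]
    constructor
    · rintro ⟨i, hi, j, hji, hj⟩
      exact ⟨(i, j), by simp [hji], by simp [mem_filter, hi, hj]⟩
    · rintro ⟨p, hp1, hp2⟩
      exact ⟨p.1, hp2.1, p.2, hp1, hp2.2⟩
  rw [hset, Finset.card_biUnion]
  · rw [hP, Finset.sum_filter, Fintype.sum_prod_type]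
  · rintro ⟨a, b⟩ h1 ⟨c, d⟩ h2 hne
    simp only [Function.onFun]
    rw [Finset.disjoint_left]
    intro g hg hg'
    rw [mem_filter] at hg hg'
    have hac : a = c := by
      by_contra hac
      exact Finset.disjoint_left.mp (hdisj a c hac) hg.1 hg'.1
    have hbd : b = d := by
      by_contra hbd
      exact Finset.disjoint_left.mp (hdisj b d hbd) hg.2 hg'.2
    exact hne (by rw [hac, hbd])

/-- A k-regular weak AMD code (equiprobable sources and encoding) on pairwise
disjoint k-subsets A_1,…,A_m of a group of order n is R-optimal (the maximum over nonzero
Δ of ε_Δ = |Good(Δ)|/(km) equals k(m−1)/(n−1)) iff A_1,…,A_m form an (n,m,k,λ)-EDF with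
λ = k²m(m−1)/(n−1). -/
theorem stmt10 {G : Type*} [AddCommGroup G] [Fintype G] [DecidableEq G]
    (n m k : ℕ) (hn : Fintype.card G = n) (hn2 : 2 ≤ n) (hm : 2 ≤ m) (hk : 1 ≤ k)
    (A : Fin m → Finset G)
    (hdisj : ∀ i j, i ≠ j → Disjoint (A i) (A j))
    (hcard : ∀ i, (A i).card = k) :
    IsGreatest {x : ℝ | ∃ Δ : G, Δ ≠ 0 ∧ (goodCount A Δ : ℝ) / ((k : ℝ) * (m : ℝ)) = x}
        ((k : ℝ) * ((m : ℝ) - 1) / ((n : ℝ) - 1))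
      ↔ ∀ g : G, g ≠ 0 →
          ((∑ i : Fin m, ∑ j : Fin m,
              if i ≠ j then ((A i ×ˢ A j).filter (fun xy => xy.1 - xy.2 = g)).card else 0 : ℕ) : ℝ)
            = (k : ℝ) ^ 2 * (m : ℝ) * ((m : ℝ) - 1) / ((n : ℝ) - 1) := by
  classical
  set N : G → ℕ := fun Δ => ∑ i : Fin m, ∑ j : Fin m,
      if i ≠ j then ((A i ×ˢ A j).filter (fun xy => xy.1 - xy.2 = Δ)).card else 0 with hN
  -- goodCount = N
  have hNgood : ∀ Δ : G, goodCount A Δ = N Δ := by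
    intro Δ
    rw [goodCount, goodCount_eq' A hdisj Δ, hN]
    rw [Finset.sum_comm]
    exact Finset.sum_congr rfl fun b _ => Finset.sum_congr rfl fun a _ => by
      split_ifs with h
      · exact (cardC (A b) (A a) Δ).symm
      · rfl
  -- positivity facts
  have hn1 : (0:ℝ) < (n:ℝ) - 1 := by
    have : (2:ℝ) ≤ (n:ℝ) := by exact_mod_cast hn2
    linarith
  have hkm : (0:ℝ) < (k:ℝ) * (m:ℝ) := by
    have h1 : (1:ℝ) ≤ (k:ℝ) := by exact_mod_cast hk
    have h2 : (2:ℝ) ≤ (m:ℝ) := by exact_mod_cast hm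
    nlinarith
  set lam : ℝ := (k : ℝ) ^ 2 * (m : ℝ) * ((m : ℝ) - 1) / ((n : ℝ) - 1) with hlam
  set L : ℝ := (k : ℝ) * ((m : ℝ) - 1) / ((n : ℝ) - 1) with hL
  have hLk : L * ((k:ℝ) * (m:ℝ)) = lam := by
    rw [hL, hlam]
    field_simp
  have hLlam : lam / ((k:ℝ) * (m:ℝ)) = L := by
    rw [← hLk, mul_div_assoc, div_self (ne_of_gt hkm), mul_one]
  -- the sum over nonzero Δ
  set S : Finset G := Finset.univ \ {0} with hS
  have hScard : (S.card : ℝ) = (n:ℝ) - 1 := by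
    have : S.card = n - 1 := by
      rw [hS, Finset.card_sdiff_of_subset (by simp), Finset.card_singleton, Finset.card_univ, hn]
    rw [this, Nat.cast_sub (by omega)]
    simp
  have hfib : ∀ i j : Fin m, i ≠ j →
      ∑ Δ ∈ S, ((A i ×ˢ A j).filter (fun xy => xy.1 - xy.2 = Δ)).card = k * k := by
    intro i j hij
    have htot : ∑ Δ : G, ((A i ×ˢ A j).filter (fun xy => xy.1 - xy.2 = Δ)).card
        = (A i ×ˢ A j).card :=
      (Finset.card_eq_sum_card_fiberwise (fun x _ => Finset.mem_univ (x.1 - x.2))).symm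
    have h0 : ((A i ×ˢ A j).filter (fun xy => xy.1 - xy.2 = (0:G))).card = 0 := by
      rw [Finset.card_eq_zero, Finset.eq_empty_iff_forall_notMem]
      rintro ⟨x, y⟩ hxy
      rw [mem_filter, mem_product] at hxy
      have hxyeq : x = y := by
        have := hxy.2
        simpa [sub_eq_zero] using this
      exact Finset.disjoint_left.mp (hdisj i j hij) hxy.1.1 (hxyeq ▸ hxy.1.2)
    have hsplit : ∑ Δ ∈ S, ((A i ×ˢ A j).filter (fun xy => xy.1 - xy.2 = Δ)).card
          + ∑ Δ ∈ ({0} : Finset G), ((A i ×ˢ A j).filter (fun xy => xy.1 - xy.2 = Δ)).card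
        = ∑ Δ : G, ((A i ×ˢ A j).filter (fun xy => xy.1 - xy.2 = Δ)).card := by
      rw [hS]
      exact Finset.sum_sdiff (by simp)
    rw [Finset.sum_singleton, h0, add_zero, htot] at hsplit
    rw [hsplit, Finset.card_product, hcard i, hcard j]
  have hsumN : ∑ Δ ∈ S, N Δ
      = ∑ i : Fin m, ∑ j : Fin m, (if i ≠ j then k * k else 0) := by
    rw [hN, Finset.sum_comm]
    refine Finset.sum_congr rfl fun i _ => ?_
    rw [Finset.sum_comm]
    refine Finset.sum_congr rfl fun j _ => ?_
    split_ifs with h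
    · exact hfib i j h
    · simp
  have hsum : ∑ Δ ∈ S, (N Δ : ℝ) = (k:ℝ)^2 * (m:ℝ) * ((m:ℝ) - 1) := by
    have hcast : ∑ Δ ∈ S, (N Δ : ℝ)
        = ((∑ Δ ∈ S, N Δ : ℕ) : ℝ) := by push_cast; rfl
    rw [hcast, hsumN]
    push_cast
    have hrow : ∀ i : Fin m, ∑ j : Fin m, (if i ≠ j then ((k:ℝ) * (k:ℝ)) else 0)
        = ((m:ℝ) - 1) * ((k:ℝ) * (k:ℝ)) := by
      intro i
      have hpt : ∀ j : Fin m, (if i ≠ j then ((k:ℝ) * (k:ℝ)) else 0)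
          = (k:ℝ) * (k:ℝ) - (if i = j then ((k:ℝ) * (k:ℝ)) else 0) := by
        intro j; split_ifs <;> simp_all
      rw [Finset.sum_congr rfl fun j _ => hpt j, Finset.sum_sub_distrib,
        Finset.sum_const, Finset.sum_ite_eq]
      simp [Finset.card_univ]
      ring
    calc ∑ i : Fin m, ∑ j : Fin m, (if i ≠ j then ((k:ℝ) * (k:ℝ)) else 0)
        = ∑ _i : Fin m, ((m:ℝ) - 1) * ((k:ℝ) * (k:ℝ)) :=
          Finset.sum_congr rfl fun i _ => hrow i
      _ = (k:ℝ)^2 * (m:ℝ) * ((m:ℝ) - 1) := by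
          rw [Finset.sum_const, Finset.card_univ, Fintype.card_fin, nsmul_eq_mul]
          ring
  have hlamsum : ((n:ℝ) - 1) * lam = (k:ℝ)^2 * (m:ℝ) * ((m:ℝ) - 1) := by
    rw [hlam]
    field_simp
  constructor
  · rintro ⟨hmem, hub⟩ g hg
    have hub' : ∀ Δ : G, Δ ≠ 0 → (N Δ : ℝ) ≤ lam := by
      intro Δ hΔ
      have hle := hub ⟨Δ, hΔ, rfl⟩
      rw [hNgood Δ] at hle
      calc (N Δ : ℝ) = (N Δ : ℝ) / ((k:ℝ)*(m:ℝ)) * ((k:ℝ)*(m:ℝ)) := by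
            field_simp
        _ ≤ L * ((k:ℝ)*(m:ℝ)) := mul_le_mul_of_nonneg_right hle (le_of_lt hkm)
        _ = lam := hLk
    have hgS : g ∈ S := by rw [hS]; simp [hg]
    by_contra hne
    have hlt : (N g : ℝ) < lam := lt_of_le_of_ne (hub' g hg) hne
    have hstrict : ∑ Δ ∈ S, (N Δ : ℝ) < ∑ _Δ ∈ S, lam := by
      refine Finset.sum_lt_sum (fun Δ hΔ => ?_) ⟨g, hgS, hlt⟩
      apply hub'
      rw [hS, Finset.mem_sdiff] at hΔ
      simpa using hΔ.2
    rw [Finset.sum_const, nsmul_eq_mul, hScard, hlamsum, hsum] at hstrict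
    exact lt_irrefl _ hstrict
  · intro hEDF
    have hval : ∀ Δ : G, Δ ≠ 0 → (goodCount A Δ : ℝ) / ((k:ℝ) * (m:ℝ)) = L := by
      intro Δ hΔ
      rw [hNgood Δ, hEDF Δ hΔ, hLlam]
    constructor
    · obtain ⟨g, hg⟩ := Fintype.exists_ne_of_one_lt_card (by omega) (0:G)
      exact ⟨g, hg, hval g hg⟩
    · rintro x ⟨Δ, hΔ, rfl⟩
      exact le_of_eq (hval Δ hΔ)
end

section
/- Let a weak AMD code be given with m ≥ 2 sources in a finite abelian group G of order n, and let a = Σ_{s∈S} a_s. Then ε_Δ ≤ 1/a holds for every nonzero Δ ∈ G (equivalently, the code is G-optimal) if and only if: m divides a, p_s(g) = m/a for every s ∈ S and every g ∈ A(s) (so the code is (a/m)-regular), and the sets {A(s) : s ∈ S} form an (n, m, a/m, 1)-bounded external difference family, i.e., for every nonzero Δ ∈ G the number of ordered pairs (x,y) with x ∈ A(s'), y ∈ A(s), s' ≠ s, and x − y = Δ is at most 1. -/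
set_option linter.unusedSectionVars false

open Finset

section helpers
variable {G : Type*} [AddCommGroup G] [Fintype G] [DecidableEq G] {m : ℕ}
  (A : Fin m → Finset G)

lemma indic (hdisj : ∀ i j : Fin m, i ≠ j → Disjoint (A i) (A j)) (i : Fin m) (h : G) :
    (if ∃ j, j ≠ i ∧ h ∈ A j then 1 else 0 : ℕ)
      = ∑ j : Fin m, if j ≠ i ∧ h ∈ A j then 1 else 0 := by
  by_cases hex : ∃ j, j ≠ i ∧ h ∈ A j
  · obtain ⟨j₀, hj₀i, hj₀⟩ := hex
    rw [if_pos ⟨j₀, hj₀i, hj₀⟩, eq_comm, Finset.sum_eq_single j₀]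
    · simp [hj₀i, hj₀]
    · intro j _ hjj
      rw [if_neg]
      rintro ⟨hji, hj⟩
      exact (Finset.disjoint_left.mp (hdisj j j₀ hjj) hj) hj₀
    · simp
  · rw [if_neg hex, eq_comm, Finset.sum_eq_zero]
    intro j _
    rw [if_neg]
    rintro ⟨hji, hj⟩
    exact hex ⟨j, hji, hj⟩

lemma pairCard (i j : Fin m) (Δ : G) :
    ((A i ×ˢ A j).filter fun xy => xy.1 - xy.2 = Δ).card
      = ((A j).filter fun y => y + Δ ∈ A i).card := by
  apply Finset.card_bij' (fun xy _ => xy.2) (fun y _ => (y + Δ, y))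
  · intro xy hxy
    simp only [Finset.mem_filter, Finset.mem_product] at hxy ⊢
    refine ⟨hxy.1.2, ?_⟩
    have : xy.1 = xy.2 + Δ := by
      rw [← hxy.2]; abel
    rw [← this]; exact hxy.1.1
  · intro y hy
    simp only [Finset.mem_filter] at hy ⊢
    exact ⟨Finset.mem_product.mpr ⟨hy.2, hy.1⟩, by abel⟩
  · intro xy hxy
    simp only [Finset.mem_filter, Finset.mem_product] at hxy
    have : xy.1 = xy.2 + Δ := by
      have h2 := hxy.2
      rw [sub_eq_iff_eq_add'] at h2
      exact h2
    ext <;> simp [this]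
  · intro y hy
    simp


lemma sumT (hdisj : ∀ i j : Fin m, i ≠ j → Disjoint (A i) (A j)) (Δ : G) :
    (∑ i : Fin m, ∑ j : Fin m,
        if i ≠ j then ((A i ×ˢ A j).filter fun xy => xy.1 - xy.2 = Δ).card else 0)
      = ∑ i : Fin m, ((A i).filter fun g => ∃ j, j ≠ i ∧ g + Δ ∈ A j).card := by
  rw [Finset.sum_comm]
  refine Finset.sum_congr rfl fun j _ => ?_
  calc (∑ i : Fin m,
          if i ≠ j then ((A i ×ˢ A j).filter fun xy => xy.1 - xy.2 = Δ).card else 0)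
      = ∑ i : Fin m, ∑ y ∈ A j, (if i ≠ j ∧ y + Δ ∈ A i then 1 else 0) := by
        refine Finset.sum_congr rfl fun i _ => ?_
        by_cases hij : i ≠ j
        · rw [if_pos hij, pairCard, Finset.card_filter]
          refine Finset.sum_congr rfl fun y _ => ?_
          simp [hij]
        · rw [if_neg hij]
          rw [eq_comm, Finset.sum_eq_zero]
          intro y _
          simp [hij]
    _ = ∑ y ∈ A j, ∑ i : Fin m, (if i ≠ j ∧ y + Δ ∈ A i then 1 else 0) :=
        Finset.sum_comm
    _ = ∑ y ∈ A j, (if ∃ i, i ≠ j ∧ y + Δ ∈ A i then 1 else 0) := by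
        refine Finset.sum_congr rfl fun y _ => ?_
        exact (indic A hdisj j (y + Δ)).symm
    _ = ((A j).filter fun g => ∃ i, i ≠ j ∧ g + Δ ∈ A i).card :=
        (Finset.card_filter _ _).symm

lemma sumPairAll (i j : Fin m) :
    ∑ Δ : G, ((A i ×ˢ A j).filter fun xy => xy.1 - xy.2 = Δ).card
      = (A i).card * (A j).card := by
  rw [← Finset.card_product]
  exact (Finset.card_eq_sum_card_fiberwise (fun xy _ => Finset.mem_univ (xy.1 - xy.2))).symm

end helpers

lemma sum_ite_ne' {k : ℕ} (i : Fin k) (f : Fin k → ℝ) :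
    ∑ j : Fin k, (if j ≠ i then f j else 0) = (∑ j : Fin k, f j) - f i := by
  have hpt : ∀ j : Fin k, (if j ≠ i then f j else 0)
      = f j - (if j = i then f j else 0) := by
    intro j; by_cases hji : j = i <;> simp [hji]
  rw [Finset.sum_congr rfl fun j _ => hpt j, Finset.sum_sub_distrib,
    Finset.sum_ite_eq' Finset.univ i f, if_pos (Finset.mem_univ i)]

set_option maxHeartbeats 2000000 in
/-- A weak AMD code with m ≥ 2 sources is G-optimal (ε_Δ ≤ 1/a for all nonzero
Δ) iff m ∣ a, the encoding is (a/m)-regular (p_s(g) = m/a for all g ∈ A(s), so each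
|A(s)| = a/m), and the sets A(s) form an (n, m, a/m, 1)-bounded external difference family. -/
theorem stmt11 {G : Type*} [AddCommGroup G] [Fintype G] [DecidableEq G]
    (n m : ℕ) (hn : Fintype.card G = n) (hm : 2 ≤ m)
    (A : Fin m → Finset G)
    (hdisj : ∀ i j, i ≠ j → Disjoint (A i) (A j))
    (hne : ∀ i, (A i).Nonempty)
    (p : Fin m → G → ℝ)
    (hp0 : ∀ i, ∀ g ∈ A i, 0 ≤ p i g)
    (hp1 : ∀ i, ∑ g ∈ A i, p i g = 1)
    (a : ℕ) (ha : a = ∑ i : Fin m, (A i).card) :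
    (∀ Δ : G, Δ ≠ 0 → weakEps A p Δ ≤ 1 / (a : ℝ))
      ↔ (m ∣ a ∧
          (∀ i, ∀ g ∈ A i, p i g = (m : ℝ) / (a : ℝ)) ∧
          (∀ i, (A i).card = a / m) ∧
          (∀ Δ : G, Δ ≠ 0 →
            (∑ i : Fin m, ∑ j : Fin m,
              if i ≠ j then ((A i ×ˢ A j).filter (fun xy => xy.1 - xy.2 = Δ)).card else 0)
              ≤ 1)) := by
  have hm0 : 0 < m := by omega
  have ha1 : 1 ≤ a := by
    rw [ha]
    calc 1 ≤ (A ⟨0, by omega⟩).card := Finset.card_pos.mpr (hne _)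
    _ ≤ _ := Finset.single_le_sum (f := fun i => (A i).card)
          (fun i _ => Nat.zero_le _) (Finset.mem_univ _)
  have ha0R : (0:ℝ) < a := by exact_mod_cast ha1
  have hm0R : (0:ℝ) < m := by exact_mod_cast hm0
  set N : G → ℕ := fun Δ => ∑ i : Fin m, ∑ j : Fin m,
    if i ≠ j then ((A i ×ˢ A j).filter (fun xy => xy.1 - xy.2 = Δ)).card else 0 with hN
  set T : G → Fin m → Finset G :=
    fun Δ i => (A i).filter fun g => ∃ j, j ≠ i ∧ g + Δ ∈ A j with hT
  have hNT : ∀ Δ, N Δ = ∑ i : Fin m, (T Δ i).card := fun Δ => sumT A hdisj Δ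
  have hEps : ∀ Δ, weakEps A p Δ = (1 / (m:ℝ)) * ∑ i : Fin m, ∑ g ∈ T Δ i, p i g :=
    fun Δ => rfl
  constructor
  · intro hopt
    set S : Finset G := Finset.univ.erase 0 with hSdef
    have hmemS : ∀ Δ : G, Δ ∈ S ↔ Δ ≠ 0 := by intro Δ; simp [hSdef]
    set c : Fin m → ℝ := fun i => ((A i).card : ℝ) with hc
    have hca : ∑ i : Fin m, c i = (a:ℝ) := by rw [ha]; push_cast; rfl
    -- counting lemma
    have hcount : ∀ i : Fin m, ∀ g ∈ A i,
        ((S.filter fun Δ => ∃ j, j ≠ i ∧ g + Δ ∈ A j).card : ℝ) = (a:ℝ) - c i := by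
      intro i g hg
      have h0 : ¬ ∃ j, j ≠ i ∧ g + (0:G) ∈ A j := by
        rintro ⟨j, hji, hj⟩
        rw [add_zero] at hj
        exact Finset.disjoint_left.mp (hdisj j i hji) hj hg
      have hfe : S.filter (fun Δ => ∃ j, j ≠ i ∧ g + Δ ∈ A j)
          = Finset.univ.filter fun Δ => ∃ j, j ≠ i ∧ g + Δ ∈ A j := by
        rw [hSdef, Finset.filter_erase]
        refine Finset.erase_eq_of_notMem fun hmem => ?_
        exact h0 (Finset.mem_filter.mp hmem).2
      rw [hfe]
      have hbij : (Finset.univ.filter fun Δ => ∃ j, j ≠ i ∧ g + Δ ∈ A j).card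
          = (Finset.univ.filter fun h : G => ∃ j, j ≠ i ∧ h ∈ A j).card := by
        apply Finset.card_bij' (fun Δ _ => g + Δ) (fun h _ => h - g)
        · intro Δ hΔ
          simp only [Finset.mem_filter, Finset.mem_univ, true_and] at hΔ ⊢
          exact hΔ
        · intro h hh
          simp only [Finset.mem_filter, Finset.mem_univ, true_and] at hh ⊢
          simpa using hh
        · intro Δ _; simp
        · intro h _; simp
      rw [hbij]
      have hcard2 : (Finset.univ.filter fun h : G => ∃ j, j ≠ i ∧ h ∈ A j).card
          = ∑ j : Fin m, if j ≠ i then (A j).card else 0 := by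
        rw [Finset.card_filter, Finset.sum_congr rfl fun h _ => indic A hdisj i h,
          Finset.sum_comm]
        refine Finset.sum_congr rfl fun j _ => ?_
        by_cases hji : j ≠ i
        · rw [if_pos hji]
          calc ∑ h : G, (if j ≠ i ∧ h ∈ A j then 1 else 0)
              = ∑ h : G, (if h ∈ A j then 1 else 0) :=
                Finset.sum_congr rfl fun h _ => by simp [hji]
            _ = (A j).card := by
                rw [← Finset.card_filter]
                congr 1
                simp [Finset.filter_univ_mem]
        · rw [if_neg hji]
          exact Finset.sum_eq_zero fun h _ => by simp [hji]
      rw [hcard2]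
      push_cast
      have := sum_ite_ne' i (fun j => c j)
      simp only [hc] at this ⊢
      rw [show (∑ j : Fin m, if j ≠ i then ((A j).card : ℝ) else 0)
          = ∑ j : Fin m, (if j ≠ i then ((A j).card:ℝ) else 0) from by
            push_cast; refine Finset.sum_congr rfl fun j _ => by split <;> simp]
      rw [this, hca]
    -- total epsilon sum
    have hSum1 : ∑ Δ ∈ S, weakEps A p Δ = ((a:ℝ) * ((m:ℝ) - 1)) / m := by
      have step : ∑ Δ ∈ S, weakEps A p Δ
          = (1/(m:ℝ)) * ∑ Δ ∈ S, ∑ i : Fin m, ∑ g ∈ T Δ i, p i g := by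
        rw [Finset.mul_sum]
        exact Finset.sum_congr rfl fun Δ _ => hEps Δ
      rw [step]
      have inner : ∑ Δ ∈ S, ∑ i : Fin m, ∑ g ∈ T Δ i, p i g
          = ∑ i : Fin m, ∑ g ∈ A i, ((a:ℝ) - c i) * p i g := by
        rw [Finset.sum_comm]
        refine Finset.sum_congr rfl fun i _ => ?_
        have hTf : ∀ Δ ∈ S, ∑ g ∈ T Δ i, p i g
            = ∑ g ∈ A i, if (∃ j, j ≠ i ∧ g + Δ ∈ A j) then p i g else 0 :=
          fun Δ _ => Finset.sum_filter _ _
        rw [Finset.sum_congr rfl hTf, Finset.sum_comm]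
        refine Finset.sum_congr rfl fun g hg => ?_
        have hconst : ∑ Δ ∈ S, (if (∃ j, j ≠ i ∧ g + Δ ∈ A j) then p i g else 0)
            = ((S.filter fun Δ => ∃ j, j ≠ i ∧ g + Δ ∈ A j).card : ℝ) * p i g := by
          rw [← Finset.sum_filter, Finset.sum_const, nsmul_eq_mul]
        rw [hconst, hcount i g hg]
      rw [inner]
      have hrow : ∀ i : Fin m, ∑ g ∈ A i, ((a:ℝ) - c i) * p i g = (a:ℝ) - c i := by
        intro i; rw [← Finset.mul_sum, hp1 i, mul_one]
      rw [Finset.sum_congr rfl fun i _ => hrow i, Finset.sum_sub_distrib, hca,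
        Finset.sum_const, Finset.card_univ, Fintype.card_fin, nsmul_eq_mul]
      field_simp
    -- sum of N over S
    have hNS : ∑ Δ ∈ S, N Δ
        = ∑ i : Fin m, ∑ j : Fin m, if i ≠ j then (A i).card * (A j).card else 0 := by
      have h0 : N (0:G) = 0 := by
        refine Finset.sum_eq_zero fun i _ => Finset.sum_eq_zero fun j _ => ?_
        by_cases hij : i ≠ j
        · rw [if_pos hij, Finset.card_eq_zero, Finset.filter_eq_empty_iff]
          rintro xy hxy hsub
          rw [Finset.mem_product] at hxy
          have heq : xy.1 = xy.2 := sub_eq_zero.mp hsub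
          exact Finset.disjoint_left.mp (hdisj i j hij) hxy.1 (heq ▸ hxy.2)
        · rw [if_neg hij]
      have hfull : ∑ Δ ∈ S, N Δ = ∑ Δ : G, N Δ := by
        rw [hSdef, ← Finset.add_sum_erase Finset.univ N (Finset.mem_univ (0:G)), h0,
          zero_add]
      rw [hfull]
      rw [Finset.sum_comm]
      refine Finset.sum_congr rfl fun i _ => ?_
      rw [Finset.sum_comm]
      refine Finset.sum_congr rfl fun j _ => ?_
      by_cases hij : i ≠ j
      · simp only [if_pos hij]
        exact sumPairAll A i j
      · simp [hij]
    have hRsum : (∑ Δ ∈ S, (N Δ:ℝ)) = (∑ i : Fin m, c i)^2 - ∑ i : Fin m, c i^2 := by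
      rw [← Nat.cast_sum, hNS]
      push_cast
      have hrow : ∀ i : Fin m, ∑ j : Fin m, (if i ≠ j then c i * c j else 0)
          = c i * (∑ j : Fin m, c j) - c i * c i := by
        intro i
        rw [Finset.sum_congr rfl fun j (_ : j ∈ Finset.univ) => show
            (if i ≠ j then c i * c j else 0) = (if j ≠ i then c i * c j else 0) from by
              by_cases h : i = j
              · simp [h]
              · rw [if_pos h, if_pos (Ne.symm h)]]
        rw [sum_ite_ne' i (fun j => c i * c j), ← Finset.mul_sum]
      calc ∑ i : Fin m, ∑ j : Fin m, (if i ≠ j then ((A i).card:ℝ) * ((A j).card:ℝ) else 0)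
          = ∑ i : Fin m, (c i * (∑ j : Fin m, c j) - c i * c i) :=
            Finset.sum_congr rfl fun i _ => hrow i
        _ = (∑ i : Fin m, c i)^2 - ∑ i : Fin m, c i^2 := by
            rw [Finset.sum_sub_distrib, ← Finset.sum_mul]
            congr 1
            · ring
            · exact Finset.sum_congr rfl fun i _ => by ring
    -- identity for Cauchy-Schwarz
    have hid : ∑ i : Fin m, ∑ j : Fin m, (c i - c j)^2
        = 2 * ((m:ℝ) * (∑ i : Fin m, c i^2) - (∑ i : Fin m, c i)^2) := by
      calc ∑ i : Fin m, ∑ j : Fin m, (c i - c j)^2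
          = ∑ i : Fin m, ∑ j : Fin m, (c i^2 + c j^2 - 2*(c i * c j)) :=
            Finset.sum_congr rfl fun i _ => Finset.sum_congr rfl fun j _ => by ring
        _ = ∑ i : Fin m, (c i^2 * (m:ℝ) + (∑ j : Fin m, c j^2) - c i * (2 * ∑ j : Fin m, c j)) := by
            refine Finset.sum_congr rfl fun i _ => ?_
            rw [Finset.sum_sub_distrib, Finset.sum_add_distrib, Finset.sum_const,
              Finset.card_univ, Fintype.card_fin, nsmul_eq_mul, ← Finset.mul_sum,
              ← Finset.mul_sum]
            ring
        _ = (∑ i : Fin m, c i^2) * (m:ℝ) + (m:ℝ) * (∑ i : Fin m, c i^2)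
              - (∑ i : Fin m, c i) * (2 * (∑ i : Fin m, c i)) := by
            rw [Finset.sum_sub_distrib, Finset.sum_add_distrib, ← Finset.sum_mul,
              ← Finset.sum_mul, Finset.sum_const, Finset.card_univ, Fintype.card_fin,
              nsmul_eq_mul]
        _ = 2 * ((m:ℝ) * (∑ i : Fin m, c i^2) - (∑ i : Fin m, c i)^2) := by ring
    have hsqnn : (0:ℝ) ≤ ∑ i : Fin m, ∑ j : Fin m, (c i - c j)^2 :=
      Finset.sum_nonneg fun i _ => Finset.sum_nonneg fun j _ => sq_nonneg _
    have hCS : (∑ i : Fin m, c i)^2 ≤ (m:ℝ) * ∑ i : Fin m, c i^2 := by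
      nlinarith [hsqnn, hid]
    -- comparison epsilon vs min(N,1)/a
    have hcmp : ∀ Δ ∈ S, weakEps A p Δ ≤ ((min (N Δ) 1 : ℕ) : ℝ)/a := by
      intro Δ hΔ
      rcases Nat.eq_zero_or_pos (N Δ) with h0 | hpos
      · have hTe : ∀ i : Fin m, T Δ i = ∅ := by
          intro i
          rw [← Finset.card_eq_zero]
          have := hNT Δ
          rw [h0] at this
          exact (Finset.sum_eq_zero_iff.mp this.symm) i (Finset.mem_univ i)
        have : weakEps A p Δ = 0 := by
          rw [hEps]
          rw [Finset.sum_eq_zero fun i _ => by rw [hTe i]; exact Finset.sum_empty]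
          ring
        rw [this, h0]
        simp
      · have hmin : min (N Δ) 1 = 1 := min_eq_right hpos
        rw [hmin]
        simpa using hopt Δ ((hmemS Δ).mp hΔ)
    -- the chain of (in)equalities
    have t1 : ∑ Δ ∈ S, weakEps A p Δ ≤ (∑ Δ ∈ S, ((min (N Δ) 1 : ℕ):ℝ))/a := by
      rw [Finset.sum_div]
      exact Finset.sum_le_sum hcmp
    have t3 : (∑ Δ ∈ S, ((min (N Δ) 1:ℕ):ℝ)) ≤ ∑ Δ ∈ S, (N Δ:ℝ) :=
      Finset.sum_le_sum fun Δ _ => by exact_mod_cast min_le_left (N Δ) 1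
    have t4 : ∑ Δ ∈ S, (N Δ:ℝ) ≤ (a:ℝ)^2 - (a:ℝ)^2/m := by
      rw [hRsum, hca]
      have : (a:ℝ)^2/m ≤ ∑ i : Fin m, c i^2 := by
        rw [div_le_iff₀ hm0R] at *
        calc (a:ℝ)^2 = (∑ i : Fin m, c i)^2 := by rw [hca]
          _ ≤ (m:ℝ) * ∑ i : Fin m, c i^2 := hCS
          _ = (∑ i : Fin m, c i^2) * m := by ring
      linarith
    have hV : ((a:ℝ)^2 - (a:ℝ)^2/m)/a = ((a:ℝ) * ((m:ℝ)-1))/m := by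
      field_simp
    have t5 : (∑ Δ ∈ S, ((min (N Δ) 1:ℕ):ℝ))/a ≤ (∑ Δ ∈ S, (N Δ:ℝ))/a := by gcongr
    have t6 : (∑ Δ ∈ S, (N Δ:ℝ))/a ≤ ((a:ℝ) * ((m:ℝ)-1))/m := by
      rw [← hV]; gcongr
    -- forced equalities
    have eq1 : ∑ Δ ∈ S, weakEps A p Δ = (∑ Δ ∈ S, ((min (N Δ) 1:ℕ):ℝ))/a := by
      rw [hSum1] at t1 ⊢
      linarith [t5, t6]
    have hdivinj : ∀ x y : ℝ, x / a = y / a → x = y := by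
      intro x y hxy
      have h2 := congrArg (· * (a:ℝ)) hxy
      simpa [div_mul_cancel₀, ne_of_gt ha0R] using h2
    have eq2 : (∑ Δ ∈ S, ((min (N Δ) 1:ℕ):ℝ)) = ∑ Δ ∈ S, (N Δ:ℝ) := by
      apply hdivinj
      rw [hSum1] at t1
      linarith [t5, t6]
    have eq3 : ∑ Δ ∈ S, (N Δ:ℝ) = (a:ℝ)^2 - (a:ℝ)^2/m := by
      apply hdivinj
      rw [hV, hSum1] at *
      linarith [t1, t5, t6]
    -- per-term equality for epsilon
    have hεeq : ∀ Δ ∈ S, weakEps A p Δ = ((min (N Δ) 1:ℕ):ℝ)/a := by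
      have heqs : ∑ Δ ∈ S, weakEps A p Δ = ∑ Δ ∈ S, ((min (N Δ) 1:ℕ):ℝ)/a := by
        rw [← Finset.sum_div]
        exact eq1
      exact fun Δ hΔ => (Finset.sum_eq_sum_iff_of_le hcmp).mp heqs Δ hΔ
    -- N ≤ 1 on S
    have hminN : ∀ Δ ∈ S, min (N Δ) 1 = N Δ := by
      have hsumeq : ∑ Δ ∈ S, min (N Δ) 1 = ∑ Δ ∈ S, N Δ := by
        have h2 : ((∑ Δ ∈ S, min (N Δ) 1 : ℕ):ℝ) = ((∑ Δ ∈ S, N Δ : ℕ):ℝ) := by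
          rw [Nat.cast_sum, Nat.cast_sum]
          exact eq2
        exact_mod_cast h2
      exact fun Δ hΔ =>
        (Finset.sum_eq_sum_iff_of_le fun Δ _ => min_le_left (N Δ) 1).mp hsumeq Δ hΔ
    have hNle1 : ∀ Δ ∈ S, N Δ ≤ 1 := by
      intro Δ hΔ
      rw [← hminN Δ hΔ]
      exact min_le_right _ _
    -- all cards equal
    have hsumsq : (m:ℝ) * (∑ i : Fin m, c i^2) = (∑ i : Fin m, c i)^2 := by
      rw [hRsum, hca] at eq3
      have h2 : ∑ i : Fin m, c i^2 = (a:ℝ)^2/m := by linarith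
      rw [hca, h2]
      field_simp
    have hzero : ∑ i : Fin m, ∑ j : Fin m, (c i - c j)^2 = 0 := by
      rw [hid, hsumsq]
      ring
    have hceq : ∀ i j : Fin m, c i = c j := by
      intro i j
      have h1 := (Finset.sum_eq_zero_iff_of_nonneg
        (fun i _ => Finset.sum_nonneg fun j _ => sq_nonneg (c i - c j))).mp hzero i
        (Finset.mem_univ i)
      have h2 := (Finset.sum_eq_zero_iff_of_nonneg
        (fun j _ => sq_nonneg (c i - c j))).mp h1 j (Finset.mem_univ j)
      have h3 : c i - c j = 0 := by
        have := sq_eq_zero_iff.mp h2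
        exact this
      linarith
    have hcardeq : ∀ i j : Fin m, (A i).card = (A j).card := fun i j =>
      Nat.cast_injective (hceq i j)
    have hma : a = m * (A ⟨0, by omega⟩).card := by
      rw [ha, Finset.sum_congr rfl fun i _ => hcardeq i ⟨0, by omega⟩, Finset.sum_const,
        Finset.card_univ, Fintype.card_fin, smul_eq_mul]
    have hdvd : m ∣ a := ⟨(A ⟨0, by omega⟩).card, hma⟩
    have hcards : ∀ i, (A i).card = a / m := by
      intro i
      rw [hma, hcardeq i ⟨0, by omega⟩, Nat.mul_div_cancel_left _ hm0]
    -- uniformity of p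
    have hmne : (m:ℝ) ≠ 0 := ne_of_gt hm0R
    have hane : (a:ℝ) ≠ 0 := ne_of_gt ha0R
    have hpu : ∀ i, ∀ g ∈ A i, p i g = (m:ℝ)/(a:ℝ) := by
      intro i g hg
      obtain ⟨j, hji⟩ : ∃ j : Fin m, j ≠ i := by
        rcases eq_or_ne i ⟨0, by omega⟩ with h | h
        · refine ⟨⟨1, by omega⟩, ?_⟩
          rw [h]
          simp [Fin.ext_iff]
        · exact ⟨⟨0, by omega⟩, Ne.symm h⟩
      obtain ⟨w, hw⟩ := hne j
      set Δ : G := w - g with hΔdef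
      have hwg : w ≠ g := fun hwg =>
        Finset.disjoint_left.mp (hdisj j i hji) (hwg ▸ hw) hg
      have hΔ0 : Δ ≠ 0 := sub_ne_zero.mpr hwg
      have hΔS : Δ ∈ S := (hmemS Δ).mpr hΔ0
      have hpair : (w, g) ∈ (A j ×ˢ A i).filter (fun xy => xy.1 - xy.2 = Δ) := by
        rw [Finset.mem_filter, Finset.mem_product]
        exact ⟨⟨hw, hg⟩, rfl⟩
      have hN1' : 1 ≤ N Δ := by
        calc 1 ≤ ((A j ×ˢ A i).filter (fun xy => xy.1 - xy.2 = Δ)).card :=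
              Finset.card_pos.mpr ⟨(w, g), hpair⟩
          _ = (if j ≠ i then ((A j ×ˢ A i).filter (fun xy => xy.1 - xy.2 = Δ)).card
                else 0) := (if_pos hji).symm
          _ ≤ ∑ j' : Fin m, (if j ≠ j' then
                ((A j ×ˢ A j').filter (fun xy => xy.1 - xy.2 = Δ)).card else 0) :=
              Finset.single_le_sum (f := fun j' => if j ≠ j' then
                ((A j ×ˢ A j').filter (fun xy => xy.1 - xy.2 = Δ)).card else 0)
                (fun _ _ => Nat.zero_le _) (Finset.mem_univ i)
          _ ≤ N Δ :=
              Finset.single_le_sum (f := fun i' => ∑ j' : Fin m, if i' ≠ j' then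
                ((A i' ×ˢ A j').filter (fun xy => xy.1 - xy.2 = Δ)).card else 0)
                (fun _ _ => Nat.zero_le _) (Finset.mem_univ j)
      have hNΔ : N Δ = 1 := le_antisymm (hNle1 Δ hΔS) hN1'
      have hgT : g ∈ T Δ i := by
        refine Finset.mem_filter.mpr ⟨hg, j, hji, ?_⟩
        have hgw : g + (w - g) = w := by abel
        show g + (w - g) ∈ A j
        rw [hgw]
        exact hw
      have hsumT1 : ∑ i' : Fin m, (T Δ i').card = 1 := by rw [← hNT, hNΔ]
      have hTi1 : (T Δ i).card = 1 :=
        le_antisymm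
          (hsumT1 ▸ Finset.single_le_sum (f := fun i' => (T Δ i').card)
            (fun _ _ => Nat.zero_le _) (Finset.mem_univ i))
          (Finset.card_pos.mpr ⟨g, hgT⟩)
      have hTsing : T Δ i = {g} := by
        obtain ⟨x, hx⟩ := Finset.card_eq_one.mp hTi1
        rw [hx] at hgT ⊢
        rw [Finset.mem_singleton.mp hgT]
      have hTother : ∀ i', i' ≠ i → T Δ i' = ∅ := by
        intro i' hi'
        rw [← Finset.card_eq_zero]
        by_contra hc
        have h1 : 1 ≤ (T Δ i').card := Nat.pos_of_ne_zero hc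
        have h2 : (T Δ i).card + (T Δ i').card ≤ ∑ i'' : Fin m, (T Δ i'').card := by
          rw [← Finset.add_sum_erase Finset.univ _ (Finset.mem_univ i)]
          exact Nat.add_le_add_left
            (Finset.single_le_sum (f := fun i'' => (T Δ i'').card)
              (fun _ _ => Nat.zero_le _)
              (Finset.mem_erase.mpr ⟨hi', Finset.mem_univ i'⟩)) _
        omega
      have hεval : weakEps A p Δ = (1/(m:ℝ)) * p i g := by
        rw [hEps]
        congr 1
        rw [Finset.sum_eq_single i]
        · rw [hTsing, Finset.sum_singleton]
        · intro i' _ hi'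
          rw [hTother i' hi', Finset.sum_empty]
        · intro hni
          exact absurd (Finset.mem_univ i) hni
      have hεΔ : weakEps A p Δ = 1/(a:ℝ) := by
        rw [hεeq Δ hΔS, hNΔ]
        norm_num
      rw [hεval] at hεΔ
      rw [eq_div_iff hane]
      field_simp at hεΔ
      linarith
    exact ⟨hdvd, hpu, hcards, fun Δ hΔ => hNle1 Δ ((hmemS Δ).mpr hΔ)⟩

  · rintro ⟨hdvd, hpu, hcard, hN1⟩ Δ hΔ
    have hTsub : ∀ i, T Δ i ⊆ A i := fun i => Finset.filter_subset _ _
    have : weakEps A p Δ = (1 / (m:ℝ)) * ((N Δ : ℝ) * ((m:ℝ)/(a:ℝ))) := by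
      rw [hEps, hNT]
      congr 1
      rw [Nat.cast_sum, Finset.sum_mul]
      refine Finset.sum_congr rfl fun i _ => ?_
      rw [Finset.sum_congr rfl (fun g hg => hpu i g (hTsub i hg)), Finset.sum_const,
        nsmul_eq_mul]
    rw [this]
    have hle : (N Δ : ℝ) ≤ 1 := by exact_mod_cast hN1 Δ hΔ
    have heq : (1 / (m:ℝ)) * ((N Δ : ℝ) * ((m:ℝ)/(a:ℝ))) = (N Δ : ℝ) / a := by
      field_simp
    rw [heq]
    gcongr
end

section
/- Let a strong AMD code be given in a finite abelian group G of order n ≥ 2, and let a = Σ_{s∈S} a_s. Then for every source s ∈ S there exists a nonzero Δ ∈ G such that ε_{Δ,s} ≥ (a − a_s)/(n−1). (Consequently ε̂_s ≥ (a − a_s)/(n−1) for every source s.) -/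
/-- The success probability ε_{Δ,s} of the substitution Δ on source s in a strong AMD code:
ε_{Δ,s} = Σ_{g ∈ A(s), g+Δ ∈ A(s') for some s' ≠ s} p_s(g). -/
noncomputable def strongEps {G : Type*} [AddCommGroup G] [DecidableEq G] {m : ℕ}
    (A : Fin m → Finset G) (p : Fin m → G → ℝ) (s : Fin m) (Δ : G) : ℝ :=
  ∑ g ∈ (A s).filter (fun g => ∃ j, j ≠ s ∧ g + Δ ∈ A j), p s g

/-- In any strong AMD code in a group of order n ≥ 2, for every source s there
is a nonzero Δ with ε_{Δ,s} ≥ (a − a_s)/(n−1), where a = Σ_s a_s, a_s = |A(s)|. -/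
theorem stmt13 {G : Type*} [AddCommGroup G] [Fintype G] [DecidableEq G]
    (n m : ℕ) (hn : Fintype.card G = n) (hn2 : 2 ≤ n)
    (A : Fin m → Finset G)
    (hdisj : ∀ i j, i ≠ j → Disjoint (A i) (A j))
    (hne : ∀ i, (A i).Nonempty)
    (p : Fin m → G → ℝ)
    (hp0 : ∀ i, ∀ g ∈ A i, 0 ≤ p i g)
    (hp1 : ∀ i, ∑ g ∈ A i, p i g = 1)
    (a : ℕ) (ha : a = ∑ i : Fin m, (A i).card) :
    ∀ s : Fin m, ∃ Δ : G, Δ ≠ 0 ∧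
      ((a : ℝ) - ((A s).card : ℝ)) / ((n : ℝ) - 1) ≤ strongEps A p s Δ := by
  intro s
  classical
  set T : Finset G := Finset.univ \ {0} with hT
  set B : Finset G := (Finset.univ.erase s).biUnion A with hB
  have hmemB : ∀ x, x ∈ B ↔ ∃ j, j ≠ s ∧ x ∈ A j := by
    intro x
    simp [hB, Finset.mem_biUnion, Finset.mem_erase]
  have hgnotB : ∀ g ∈ A s, g ∉ B := by
    intro g hg hgB
    obtain ⟨j, hj, hgj⟩ := (hmemB g).1 hgB
    exact Finset.disjoint_left.mp (hdisj j s hj) hgj hg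
  have hBcard : (B.card : ℝ) = (a : ℝ) - ((A s).card : ℝ) := by
    have h1 : B.card = ∑ j ∈ Finset.univ.erase s, (A j).card :=
      Finset.card_biUnion (fun x _ y _ hxy => hdisj x y hxy)
    have h2 : a = (A s).card + ∑ j ∈ Finset.univ.erase s, (A j).card := by
      rw [ha, ← Finset.add_sum_erase _ _ (Finset.mem_univ s)]
    rw [h1, h2]
    push_cast
    ring
  have hcount : ∀ g ∈ A s,
      (T.filter (fun Δ => ∃ j, j ≠ s ∧ g + Δ ∈ A j)).card = B.card := by
    intro g hg
    have heq : T.filter (fun Δ => ∃ j, j ≠ s ∧ g + Δ ∈ A j)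
        = B.image (fun b => b - g) := by
      ext Δ
      simp only [Finset.mem_filter, Finset.mem_image, hT, Finset.mem_sdiff,
        Finset.mem_singleton, Finset.mem_univ, true_and]
      constructor
      · rintro ⟨hΔ0, j, hj, hgj⟩
        exact ⟨g + Δ, (hmemB _).2 ⟨j, hj, hgj⟩, add_sub_cancel_left g Δ⟩
      · rintro ⟨b, hb, rfl⟩
        have hΔ0 : b - g ≠ 0 := by
          intro h
          exact hgnotB g hg (by rwa [sub_eq_zero.mp h] at hb)
        rw [add_sub_cancel]
        exact ⟨hΔ0, (hmemB b).1 hb⟩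
    rw [heq, Finset.card_image_of_injective _ sub_left_injective]
  have hsum : ∑ Δ ∈ T, strongEps A p s Δ = (a : ℝ) - ((A s).card : ℝ) := by
    unfold strongEps
    have hswap : ∀ (Δ g : G), Δ ∈ T ∧
        g ∈ (A s).filter (fun g => ∃ j, j ≠ s ∧ g + Δ ∈ A j) ↔
        Δ ∈ T.filter (fun Δ => ∃ j, j ≠ s ∧ g + Δ ∈ A j) ∧ g ∈ A s := by
      intro Δ g
      simp only [Finset.mem_filter]
      tauto
    rw [Finset.sum_comm' hswap]
    have key : ∀ g ∈ A s,
        ∑ _Δ ∈ T.filter (fun Δ => ∃ j, j ≠ s ∧ g + Δ ∈ A j), p s g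
          = (B.card : ℝ) * p s g := by
      intro g hg
      rw [Finset.sum_const, hcount g hg, nsmul_eq_mul]
    rw [Finset.sum_congr rfl key, ← Finset.mul_sum, hp1 s, mul_one, hBcard]
  have hTne : T.Nonempty := by
    obtain ⟨x, hx⟩ := Fintype.exists_ne_of_one_lt_card (by omega : 1 < Fintype.card G) 0
    exact ⟨x, by simp [hT, hx]⟩
  have hTcard : (T.card : ℝ) = (n : ℝ) - 1 := by
    have : T.card = n - 1 := by
      rw [hT, Finset.card_sdiff_of_subset (by simp), Finset.card_singleton, Finset.card_univ, hn]
    rw [this]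
    have : (1:ℕ) ≤ n := by omega
    push_cast [this]
    ring
  have hn1pos : (0:ℝ) < (n : ℝ) - 1 := by
    have : (2:ℝ) ≤ (n:ℝ) := by exact_mod_cast hn2
    linarith
  set c : ℝ := ((a : ℝ) - ((A s).card : ℝ)) / ((n : ℝ) - 1) with hc
  have hsum2 : ∑ _Δ ∈ T, c ≤ ∑ Δ ∈ T, strongEps A p s Δ := by
    rw [Finset.sum_const, nsmul_eq_mul, hTcard, hsum, hc,
      mul_div_cancel₀ _ (ne_of_gt hn1pos)]
  obtain ⟨Δ, hΔT, hΔ⟩ := Finset.exists_le_of_sum_le hTne hsum2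
  refine ⟨Δ, ?_, hΔ⟩
  simp [hT] at hΔT
  exact hΔT
end

section
/- Let a strong AMD code be given with m ≥ 2 sources in a finite abelian group G of order n. Then for every source s ∈ S there exists a nonzero Δ ∈ G such that ε_{Δ,s} ≥ 1/a_s. (Consequently ε̂_s ≥ 1/a_s for every source s.) -/
/-- In any strong AMD code with m ≥ 2 sources, for every source s there is a
nonzero Δ with ε_{Δ,s} ≥ 1/a_s, where a_s = |A(s)|. -/
theorem stmt14 {G : Type*} [AddCommGroup G] [Fintype G] [DecidableEq G]
    (n m : ℕ) (hn : Fintype.card G = n) (hm : 2 ≤ m)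
    (A : Fin m → Finset G)
    (hdisj : ∀ i j, i ≠ j → Disjoint (A i) (A j))
    (hne : ∀ i, (A i).Nonempty)
    (p : Fin m → G → ℝ)
    (hp0 : ∀ i, ∀ g ∈ A i, 0 ≤ p i g)
    (hp1 : ∀ i, ∑ g ∈ A i, p i g = 1) :
    ∀ s : Fin m, ∃ Δ : G, Δ ≠ 0 ∧
      1 / (((A s).card : ℝ)) ≤ strongEps A p s Δ := by
  intro s
  haveI : Nontrivial (Fin m) := Fin.nontrivial_iff_two_le.mpr hm
  obtain ⟨s', hs'⟩ := exists_ne s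
  obtain ⟨g', hg'⟩ := hne s'
  have hcard : (0:ℝ) < (A s).card := by exact_mod_cast (hne s).card_pos
  obtain ⟨g, hg, hpg⟩ : ∃ g ∈ A s, 1 / ((A s).card : ℝ) ≤ p s g := by
    by_contra h
    push_neg at h
    have hlt : ∑ g ∈ A s, p s g < ∑ _g ∈ A s, 1 / ((A s).card : ℝ) :=
      Finset.sum_lt_sum_of_nonempty (hne s) h
    rw [hp1 s, Finset.sum_const, nsmul_eq_mul, mul_one_div, div_self hcard.ne'] at hlt
    exact lt_irrefl _ hlt
  refine ⟨g' - g, ?_, ?_⟩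
  · intro h0
    have hgg : g' = g := by
      have := sub_eq_zero.mp h0; exact this
    exact (Finset.disjoint_left.mp (hdisj s' s hs') hg') (hgg ▸ hg)
  · have hle : p s g ≤ strongEps A p s (g' - g) := by
      unfold strongEps
      refine Finset.single_le_sum (fun i hi => hp0 s i (Finset.mem_filter.mp hi).1) ?_
      refine Finset.mem_filter.mpr ⟨hg, s', hs', ?_⟩
      have h' : g + (g' - g) = g' := by abel
      rwa [h']
    linarith
end

section
/- Let A_1,…,A_m be an (n,m;k_1,…,k_m;λ_1,…,λ_m)-generalized strong external difference family in a finite abelian group G of order n ≥ 2, and let a = k_1 + ⋯ + k_m. Consider the strong AMD code with m sources, A(s_i) = A_i, and equiprobable encoding. Then for every i ∈ {1,…,m} and every nonzero Δ ∈ G, ε_{Δ,s_i} = (1/k_i)·|{g ∈ A_i : g+Δ ∈ A_j for some j ≠ i}| = (a − k_i)/(n−1); in particular, the code is an R-optimal strong AMD code. -/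
/-- A GSEDF yields an R-optimal strong AMD code with equiprobable encoding:
for every source s_i and every nonzero Δ,
ε_{Δ,s_i} = (1/k_i)·|{g ∈ A_i : g+Δ ∈ A_j for some j ≠ i}| = (a − k_i)/(n−1). -/
theorem stmt15 {G : Type*} [AddCommGroup G] [Fintype G] [DecidableEq G]
    (n m : ℕ) (hn : Fintype.card G = n) (hn2 : 2 ≤ n)
    (A : Fin m → Finset G) (k lam : Fin m → ℕ)
    (hdisj : ∀ i j, i ≠ j → Disjoint (A i) (A j))
    (hne : ∀ i, (A i).Nonempty)
    (hcard : ∀ i, (A i).card = k i)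
    (hGSEDF : ∀ i : Fin m, ∀ g : G, g ≠ 0 →
        (∑ j : Fin m,
          if j ≠ i then ((A i ×ˢ A j).filter (fun xy => xy.1 - xy.2 = g)).card else 0) = lam i)
    (a : ℕ) (ha : a = ∑ i : Fin m, k i) :
    ∀ i : Fin m, ∀ Δ : G, Δ ≠ 0 →
      (1 / (k i : ℝ)) * (((A i).filter (fun g => ∃ j, j ≠ i ∧ g + Δ ∈ A j)).card : ℝ)
        = ((a : ℝ) - (k i : ℝ)) / ((n : ℝ) - 1) := by
  intro i Δ hΔ
  have hki : 0 < k i := by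
    have := (hne i).card_pos; rw [hcard i] at this; exact this
  -- Step 1: the filter cardinality equals lam i
  have hcardj : ∀ j : Fin m,
      ((A i ×ˢ A j).filter (fun xy => xy.1 - xy.2 = -Δ)).card
        = ((A i).filter (fun g => g + Δ ∈ A j)).card := by
    intro j
    have himg : (A i ×ˢ A j).filter (fun xy => xy.1 - xy.2 = -Δ)
        = ((A i).filter (fun g => g + Δ ∈ A j)).image (fun x => (x, x + Δ)) := by
      ext ⟨x, y⟩
      simp only [Finset.mem_filter, Finset.mem_product, Finset.mem_image, Prod.mk.injEq]
      constructor
      · rintro ⟨⟨hx, hy⟩, hd⟩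
        have hyx : y = x + Δ := by
          have : x - y = -Δ := hd
          have := sub_eq_iff_eq_add.mp this
          rw [this]; abel
        exact ⟨x, ⟨hx, hyx ▸ hy⟩, rfl, hyx.symm⟩
      · rintro ⟨z, ⟨hz, hzΔ⟩, rfl, rfl⟩
        exact ⟨⟨hz, hzΔ⟩, by abel⟩
    rw [himg, Finset.card_image_of_injective]
    intro x y h
    exact (Prod.mk.injEq _ _ _ _ ▸ h : x = y ∧ _).1
  have h1 : ((A i).filter (fun g => ∃ j, j ≠ i ∧ g + Δ ∈ A j)).card = lam i := by
    have hg := hGSEDF i (-Δ) (neg_ne_zero.mpr hΔ)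
    have hbu : (A i).filter (fun g => ∃ j, j ≠ i ∧ g + Δ ∈ A j)
        = (Finset.univ.filter (fun j => j ≠ i)).biUnion
            (fun j => (A i).filter (fun g => g + Δ ∈ A j)) := by
      ext g
      simp only [Finset.mem_filter, Finset.mem_biUnion, Finset.mem_univ, true_and]
      tauto
    rw [hbu, Finset.card_biUnion]
    · rw [Finset.sum_filter]
      rw [← hg]
      exact Finset.sum_congr rfl fun j _ => by
        split
        · exact (hcardj j).symm
        · rfl
    · intro j1 h1' j2 h2' hj12
      rw [Function.onFun, Finset.disjoint_left]
      intro g hg1 hg2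
      have := Finset.disjoint_left.mp (hdisj j1 j2 hj12)
        (Finset.mem_filter.mp hg1).2 (Finset.mem_filter.mp hg2).2
      exact this
  -- Step 2: (n-1) * lam i = k i * S where S = sum of k j over j ≠ i
  have key : ∀ j : Fin m, j ≠ i →
      (∑ g ∈ Finset.univ \ {(0 : G)},
        ((A i ×ˢ A j).filter (fun xy => xy.1 - xy.2 = g)).card) = k i * k j := by
    intro j hj
    rw [← hcard i, ← hcard j, ← Finset.card_product]
    refine (Finset.card_eq_sum_card_fiberwise ?_).symm
    rintro ⟨x, y⟩ hxy
    rw [Finset.mem_coe, Finset.mem_product] at hxy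
    simp only [Finset.mem_coe, Finset.mem_sdiff, Finset.mem_univ, Finset.mem_singleton, true_and]
    intro h0
    have hxy' : x = y := sub_eq_zero.mp h0
    exact Finset.disjoint_left.mp (hdisj i j (Ne.symm hj)) hxy.1 (hxy' ▸ hxy.2)
  have hcard0 : (Finset.univ \ {(0 : G)}).card = n - 1 := by
    rw [Finset.card_sdiff_of_subset (Finset.subset_univ _), Finset.card_singleton, Finset.card_univ, hn]
  have hsum : (n - 1) * lam i = k i * (∑ j : Fin m, if j ≠ i then k j else 0) := by
    calc (n - 1) * lam i = ∑ g ∈ Finset.univ \ {(0 : G)}, lam i := by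
          rw [Finset.sum_const, smul_eq_mul, hcard0]
      _ = ∑ g ∈ Finset.univ \ {(0 : G)}, ∑ j : Fin m,
            if j ≠ i then ((A i ×ˢ A j).filter (fun xy => xy.1 - xy.2 = g)).card else 0 := by
          refine Finset.sum_congr rfl fun g hg => ?_
          rw [Finset.mem_sdiff, Finset.mem_singleton] at hg
          exact (hGSEDF i g hg.2).symm
      _ = ∑ j : Fin m, ∑ g ∈ Finset.univ \ {(0 : G)},
            (if j ≠ i then ((A i ×ˢ A j).filter (fun xy => xy.1 - xy.2 = g)).card else 0) := by
          rw [Finset.sum_comm]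
      _ = ∑ j : Fin m, if j ≠ i then k i * k j else 0 := by
          refine Finset.sum_congr rfl fun j _ => ?_
          split
          · next hj => rw [← key j hj]
          · simp
      _ = k i * (∑ j : Fin m, if j ≠ i then k j else 0) := by
          rw [Finset.mul_sum]
          exact Finset.sum_congr rfl fun j _ => by split <;> simp
  have haS : a = k i + (∑ j : Fin m, if j ≠ i then k j else 0) := by
    rw [ha]
    have hsplit : ∀ j : Fin m, k j = (if j = i then k i else 0) + (if j ≠ i then k j else 0) := by
      intro j; by_cases h : j = i <;> simp [h]
    rw [Finset.sum_congr rfl fun j _ => hsplit j, Finset.sum_add_distrib,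
      Finset.sum_ite_eq' Finset.univ i (fun _ => k i)]
    simp
  -- Conclude over ℝ
  rw [h1]
  have hn1 : (1 : ℕ) ≤ n := by omega
  have hsumR : ((n : ℝ) - 1) * lam i
      = k i * ((∑ j : Fin m, if j ≠ i then k j else 0 : ℕ) : ℝ) := by
    have := congrArg (Nat.cast : ℕ → ℝ) hsum
    push_cast [Nat.cast_sub hn1] at this
    push_cast
    linarith [this]
  have haR : (a : ℝ) = k i + ((∑ j : Fin m, if j ≠ i then k j else 0 : ℕ) : ℝ) := by
    exact_mod_cast congrArg (Nat.cast : ℕ → ℝ) haS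
  have hkr : (k i : ℝ) ≠ 0 := by positivity
  have hnr : (n : ℝ) - 1 ≠ 0 := by
    have : (2 : ℝ) ≤ n := by exact_mod_cast hn2
    linarith
  field_simp
  nlinarith [hsumR, haR]
end

section
/- Let a strong AMD code be given with equiprobable encoding (p_s(g) = 1/a_s for all s and all g ∈ A(s)) in a finite abelian group G of order n ≥ 2, and let a = Σ_{s∈S} a_s. If the code is R-optimal, i.e., for every source s the maximum of ε_{Δ,s} over nonzero Δ equals (a − a_s)/(n−1), then the sets {A(s) : s ∈ S} form an (n,m;a_{s}…;λ_s…)-generalized strong external difference family with λ_s = a_s(a − a_s)/(n−1); in particular, for every s and every nonzero g ∈ G, the number of ordered pairs (x,y) with x ∈ A(s), y ∈ A(s') for some s' ≠ s, and x − y = g equals a_s(a − a_s)/(n−1). -/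
/-- If a strong AMD code with equiprobable encoding is R-optimal (for every
source s the maximum of ε_{Δ,s} over nonzero Δ equals (a − a_s)/(n−1)), then the sets A(s)
form a GSEDF with λ_s = a_s(a − a_s)/(n−1): for every s and nonzero g, the number of ordered
pairs (x,y), x ∈ A(s), y ∈ A(s') for some s' ≠ s, x − y = g, equals a_s(a − a_s)/(n−1). -/
theorem stmt16 {G : Type*} [AddCommGroup G] [Fintype G] [DecidableEq G]
    (n m : ℕ) (hn : Fintype.card G = n) (hn2 : 2 ≤ n)
    (A : Fin m → Finset G)
    (hdisj : ∀ i j, i ≠ j → Disjoint (A i) (A j))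
    (hne : ∀ i, (A i).Nonempty)
    (p : Fin m → G → ℝ)
    (hequi : ∀ i, ∀ g ∈ A i, p i g = 1 / (((A i).card : ℝ)))
    (a : ℕ) (ha : a = ∑ i : Fin m, (A i).card)
    (hRopt : ∀ s : Fin m,
      IsGreatest {x : ℝ | ∃ Δ : G, Δ ≠ 0 ∧ strongEps A p s Δ = x}
        (((a : ℝ) - ((A s).card : ℝ)) / ((n : ℝ) - 1))) :
    ∀ s : Fin m, ∀ g : G, g ≠ 0 →
      ((∑ j : Fin m,
          if j ≠ s then ((A s ×ˢ A j).filter (fun xy => xy.1 - xy.2 = g)).card else 0 : ℕ) : ℝ)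
        = ((A s).card : ℝ) * ((a : ℝ) - ((A s).card : ℝ)) / ((n : ℝ) - 1) := by
  classical
  intro s g hg
  have hasR : (0:ℝ) < ((A s).card : ℝ) := by exact_mod_cast (hne s).card_pos
  have hn1R : (0:ℝ) < (n:ℝ) - 1 := by
    have : (2:ℝ) ≤ (n:ℝ) := by exact_mod_cast hn2
    linarith
  set M : ℝ := ((a:ℝ) - ((A s).card : ℝ)) / ((n:ℝ) - 1) with hM
  set N : G → ℕ := fun Δ => ∑ j : Fin m,
      if j ≠ s then ((A s).filter (fun x => x + Δ ∈ A j)).card else 0 with hNdef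
  -- ε formula
  have heps : ∀ Δ : G, strongEps A p s Δ = (N Δ : ℝ) / ((A s).card : ℝ) := by
    intro Δ
    have hcard : ((A s).filter (fun x => ∃ j, j ≠ s ∧ x + Δ ∈ A j)).card = N Δ := by
      have hset : (A s).filter (fun x => ∃ j, j ≠ s ∧ x + Δ ∈ A j)
          = (Finset.univ.filter (fun j : Fin m => j ≠ s)).biUnion
              (fun j => (A s).filter (fun x => x + Δ ∈ A j)) := by
        ext x
        simp only [Finset.mem_filter, Finset.mem_biUnion, Finset.mem_univ, true_and]
        tauto
      have hdisj' : ∀ j ∈ Finset.univ.filter (fun j : Fin m => j ≠ s),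
          ∀ k ∈ Finset.univ.filter (fun j : Fin m => j ≠ s), j ≠ k →
          Disjoint ((A s).filter (fun x => x + Δ ∈ A j)) ((A s).filter (fun x => x + Δ ∈ A k)) := by
        intro j _ k _ hjk
        simp only [Finset.disjoint_left, Finset.mem_filter]
        rintro x ⟨-, hxj⟩ ⟨-, hxk⟩
        exact Finset.disjoint_left.mp (hdisj j k hjk) hxj hxk
      rw [hset, Finset.card_biUnion hdisj', hNdef]
      exact (Finset.sum_filter _ _)
    calc strongEps A p s Δ
        = ∑ x ∈ (A s).filter (fun x => ∃ j, j ≠ s ∧ x + Δ ∈ A j), (1 / ((A s).card : ℝ)) :=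
          Finset.sum_congr rfl fun x hx => hequi s x (Finset.mem_filter.mp hx).1
      _ = ((A s).filter (fun x => ∃ j, j ≠ s ∧ x + Δ ∈ A j)).card * (1 / ((A s).card : ℝ)) := by
          rw [Finset.sum_const, nsmul_eq_mul]
      _ = (N Δ : ℝ) / ((A s).card : ℝ) := by rw [hcard]; ring
  -- total sum of N over all Δ
  have hinner : ∀ j : Fin m,
      ∑ Δ : G, ((A s).filter (fun x => x + Δ ∈ A j)).card = (A s).card * (A j).card := by
    intro j
    calc ∑ Δ : G, ((A s).filter (fun x => x + Δ ∈ A j)).card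
        = ∑ Δ : G, ∑ x ∈ A s, if x + Δ ∈ A j then 1 else 0 :=
          Finset.sum_congr rfl fun Δ _ => Finset.card_filter _ _
      _ = ∑ x ∈ A s, ∑ Δ : G, if x + Δ ∈ A j then 1 else 0 := Finset.sum_comm
      _ = ∑ _x ∈ A s, (A j).card := by
          refine Finset.sum_congr rfl fun x _ => ?_
          rw [← Finset.card_filter]
          refine Finset.card_bij' (fun Δ _ => x + Δ) (fun y _ => y - x) ?_ ?_ ?_ ?_
          · intro Δ hΔ; exact (Finset.mem_filter.mp hΔ).2
          · intro y hy
            simp only [Finset.mem_filter, Finset.mem_univ, true_and]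
            rw [add_comm, sub_add_cancel]
            exact hy
          · intro Δ hΔ; exact add_sub_cancel_left x Δ
          · intro y hy
            show x + (y - x) = y
            rw [add_comm, sub_add_cancel]
      _ = (A s).card * (A j).card := by rw [Finset.sum_const, smul_eq_mul]
  have hsumNall : ∑ Δ : G, (N Δ : ℝ) = ((A s).card : ℝ) * ((a:ℝ) - ((A s).card : ℝ)) := by
    have h1 : ∑ Δ : G, N Δ = ∑ j : Fin m, if j ≠ s then (A s).card * (A j).card else 0 := by
      rw [hNdef, Finset.sum_comm]
      refine Finset.sum_congr rfl fun j _ => ?_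
      by_cases hjs : j ≠ s <;> simp [hjs, hinner j]
    rw [← Nat.cast_sum, h1]
    push_cast
    rw [← Finset.sum_filter, Finset.filter_ne']
    have h2 : ((A s).card : ℝ) * ((A s).card : ℝ) +
        ∑ j ∈ Finset.univ.erase s, ((A s).card : ℝ) * ((A j).card : ℝ)
        = ∑ j : Fin m, ((A s).card : ℝ) * ((A j).card : ℝ) :=
      Finset.add_sum_erase Finset.univ
        (fun j : Fin m => ((A s).card : ℝ) * ((A j).card : ℝ)) (Finset.mem_univ s)
    have h3 : ∑ j : Fin m, ((A s).card : ℝ) * ((A j).card : ℝ)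
        = ((A s).card : ℝ) * (a : ℝ) := by
      rw [← Finset.mul_sum, ha, Nat.cast_sum]
    rw [h3] at h2
    linarith
  -- N 0 = 0
  have hN0 : N 0 = 0 := by
    refine Finset.sum_eq_zero fun j _ => ?_
    by_cases hjs : j ≠ s
    · rw [if_pos hjs, Finset.card_eq_zero, Finset.filter_eq_empty_iff]
      intro x hx
      rw [add_zero]
      exact fun hxj => Finset.disjoint_left.mp (hdisj j s hjs) hxj hx
    · rw [if_neg hjs]
  -- sum over nonzero Δ
  have hsumT : ∑ Δ ∈ Finset.univ.erase (0:G), (N Δ : ℝ)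
      = ((A s).card : ℝ) * ((a:ℝ) - ((A s).card : ℝ)) := by
    have h := Finset.add_sum_erase Finset.univ (fun Δ : G => (N Δ : ℝ)) (Finset.mem_univ (0:G))
    simp only [hN0, Nat.cast_zero, zero_add] at h
    rw [h]
    exact hsumNall
  have hcardT : ((Finset.univ.erase (0:G)).card : ℝ) = (n:ℝ) - 1 := by
    rw [Finset.card_erase_of_mem (Finset.mem_univ _), Finset.card_univ, hn]
    have : 1 ≤ n := le_trans (by norm_num) hn2
    push_cast [Nat.cast_sub this]
    ring
  have hle : ∀ Δ ∈ Finset.univ.erase (0:G), strongEps A p s Δ ≤ M := by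
    intro Δ hΔ
    exact (hRopt s).2 ⟨Δ, (Finset.mem_erase.mp hΔ).1, rfl⟩
  have hsumEps : ∑ Δ ∈ Finset.univ.erase (0:G), strongEps A p s Δ
      = ∑ Δ ∈ Finset.univ.erase (0:G), M := by
    rw [Finset.sum_const, nsmul_eq_mul, hcardT]
    calc ∑ Δ ∈ Finset.univ.erase (0:G), strongEps A p s Δ
        = (∑ Δ ∈ Finset.univ.erase (0:G), (N Δ : ℝ)) / ((A s).card : ℝ) := by
          rw [Finset.sum_div]; exact Finset.sum_congr rfl fun Δ _ => heps Δ
      _ = (a:ℝ) - ((A s).card : ℝ) := by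
          rw [hsumT, mul_comm, mul_div_assoc, div_self hasR.ne', mul_one]
      _ = ((n:ℝ) - 1) * M := by
          rw [hM, mul_div_cancel₀ _ hn1R.ne']
  have hall : ∀ Δ ∈ Finset.univ.erase (0:G), strongEps A p s Δ = M := by
    by_contra hcon
    push_neg at hcon
    obtain ⟨Δ0, hΔ0T, hΔ0⟩ := hcon
    have hlt := Finset.sum_lt_sum hle ⟨Δ0, hΔ0T, lt_of_le_of_ne (hle Δ0 hΔ0T) hΔ0⟩
    rw [hsumEps] at hlt
    exact lt_irrefl _ hlt
  -- apply at Δ = -g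
  have hgT : (-g) ∈ Finset.univ.erase (0:G) :=
    Finset.mem_erase.mpr ⟨neg_ne_zero.mpr hg, Finset.mem_univ _⟩
  have hepsg := hall (-g) hgT
  rw [heps] at hepsg
  have hNg : (N (-g) : ℝ) = ((A s).card : ℝ) * M := by
    rw [div_eq_iff hasR.ne'] at hepsg
    rw [hepsg]; ring
  -- pair counts
  have hpair : ∀ j : Fin m, ((A s ×ˢ A j).filter (fun xy => xy.1 - xy.2 = g)).card
      = ((A s).filter (fun x => x + (-g) ∈ A j)).card := by
    intro j
    refine Finset.card_bij' (fun xy _ => xy.1) (fun x _ => (x, x + (-g))) ?_ ?_ ?_ ?_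
    · rintro ⟨x, y⟩ hxy
      simp only [Finset.mem_filter, Finset.mem_product] at hxy
      obtain ⟨⟨hx, hy⟩, hxyg⟩ := hxy
      simp only [Finset.mem_filter]
      refine ⟨hx, ?_⟩
      have hxg : x + (-g) = y := by
        rw [← hxyg]; rw [← sub_eq_add_neg, sub_sub_cancel]
      rw [hxg]; exact hy
    · intro x hx
      simp only [Finset.mem_filter] at hx
      simp only [Finset.mem_filter, Finset.mem_product]
      refine ⟨⟨hx.1, hx.2⟩, ?_⟩
      rw [← sub_eq_add_neg, sub_sub_cancel]
    · rintro ⟨x, y⟩ hxy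
      simp only [Finset.mem_filter, Finset.mem_product] at hxy
      have hxg : x + (-g) = y := by
        rw [← hxy.2, ← sub_eq_add_neg, sub_sub_cancel]
      simp [hxg]
    · intro x hx; rfl
  have hfinal : (∑ j : Fin m,
      if j ≠ s then ((A s ×ˢ A j).filter (fun xy => xy.1 - xy.2 = g)).card else 0) = N (-g) := by
    rw [hNdef]
    exact Finset.sum_congr rfl fun j _ => by by_cases hjs : j ≠ s <;> simp [hjs, hpair j]
  rw [hfinal, hNg, hM, mul_div_assoc]
end

section
/- Let a strong AMD code be given with m ≥ 2 sources in a finite abelian group G of order n. Then ε_{Δ,s} ≤ 1/a_s holds for every source s and every nonzero Δ ∈ G (equivalently, the code is G-optimal) if and only if: p_s(g) = 1/a_s for every s and every g ∈ A(s) (equiprobable encoding), and the sets {A(s) : s ∈ S} form an (n,m;a_s…;1,…,1)-bounded generalized strong external difference family, i.e., for every s and every nonzero g ∈ G, the number of ordered pairs (x,y) with x ∈ A(s') for some s' ≠ s, y ∈ A(s), and x − y = g is at most 1. -/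
open Finset

section Aux
set_option linter.unusedSectionVars false
variable {G : Type*} [AddCommGroup G] [Fintype G] [DecidableEq G] {m : ℕ}
  (A : Fin m → Finset G)

lemma aux_card_pairs (hdisj : ∀ i j, i ≠ j → Disjoint (A i) (A j)) (s : Fin m) (g : G) :
    (∑ j : Fin m, if j ≠ s then ((A j ×ˢ A s).filter (fun xy => xy.1 - xy.2 = g)).card else 0)
      = ((A s).filter (fun y => ∃ j, j ≠ s ∧ y + g ∈ A j)).card := by
  rw [← Finset.sum_filter]
  rw [← Finset.card_biUnion]
  · apply Finset.card_bij (fun xy _ => xy.2)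
    · intro xy hxy
      simp only [Finset.mem_biUnion, Finset.mem_filter, Finset.mem_univ, true_and,
        Finset.mem_product] at hxy ⊢
      obtain ⟨j, hj, ⟨⟨hx, hy⟩, hd⟩⟩ := hxy
      exact ⟨hy, j, hj, by rwa [show xy.2 + g = xy.1 by rw [← hd]; abel]⟩
    · intro a ha b hb hab
      simp only [Finset.mem_biUnion, Finset.mem_filter, Finset.mem_product] at ha hb
      obtain ⟨j, hj, ⟨⟨hx, hy⟩, hd⟩⟩ := ha
      obtain ⟨j', hj', ⟨⟨hx', hy'⟩, hd'⟩⟩ := hb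
      have h1 : a.1 = b.1 := by
        have e1 : a.1 = a.2 + g := by rw [← hd]; abel
        have e2 : b.1 = b.2 + g := by rw [← hd']; abel
        rw [e1, e2, hab]
      exact Prod.ext h1 hab
    · intro y hy
      simp only [Finset.mem_filter] at hy
      obtain ⟨hyA, j, hj, hyg⟩ := hy
      refine ⟨(y + g, y), ?_, rfl⟩
      simp only [Finset.mem_biUnion, Finset.mem_filter, Finset.mem_univ, true_and,
        Finset.mem_product]
      exact ⟨j, hj, ⟨hyg, hyA⟩, by abel⟩
  · intro i hi j hj hij
    rw [Function.onFun, Finset.disjoint_left]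
    intro xy hxi hxj
    simp only [Finset.mem_filter, Finset.mem_product] at hxi hxj
    exact (Finset.disjoint_left.mp (hdisj i j hij)) hxi.1.1 hxj.1.1

lemma aux_count (hdisj : ∀ i j, i ≠ j → Disjoint (A i) (A j)) (s : Fin m) {y : G}
    (hy : y ∈ A s) :
    (((Finset.univ : Finset G).erase 0).filter (fun Δ => ∃ j, j ≠ s ∧ y + Δ ∈ A j)).card
      = ∑ j ∈ Finset.univ.filter (· ≠ s), (A j).card := by
  rw [← Finset.card_biUnion (by
    intro i hi j hj hij
    exact hdisj i j hij)]
  apply Finset.card_bij (fun Δ _ => y + Δ)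
  · intro Δ hΔ
    simp only [Finset.mem_filter, Finset.mem_erase, Finset.mem_univ, true_and,
      Finset.mem_biUnion] at hΔ ⊢
    obtain ⟨-, j, hj, hmem⟩ := hΔ
    exact ⟨j, hj, hmem⟩
  · intro a _ b _ hab
    exact add_left_cancel hab
  · intro x hx
    simp only [Finset.mem_biUnion, Finset.mem_filter, Finset.mem_univ, true_and] at hx
    obtain ⟨j, hj, hxj⟩ := hx
    refine ⟨x - y, ?_, by abel⟩
    simp only [Finset.mem_filter, Finset.mem_erase, Finset.mem_univ, true_and]
    refine ⟨⟨?_, trivial⟩, j, hj, by rwa [show y + (x - y) = x by abel]⟩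
    intro h0
    have : x = y := by rwa [sub_eq_zero] at h0
    exact (Finset.disjoint_left.mp (hdisj j s hj)) hxj (this ▸ hy)

lemma aux_sum (hdisj : ∀ i j, i ≠ j → Disjoint (A i) (A j)) (s : Fin m) (w : G → ℝ) :
    ∑ Δ ∈ (Finset.univ : Finset G).erase 0,
        ∑ y ∈ (A s).filter (fun y => ∃ j, j ≠ s ∧ y + Δ ∈ A j), w y
      = ∑ y ∈ A s, w y * ((∑ j ∈ Finset.univ.filter (· ≠ s), (A j).card : ℕ) : ℝ) := by
  simp_rw [Finset.sum_filter]
  rw [Finset.sum_comm]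
  refine Finset.sum_congr rfl fun y hy => ?_
  rw [← Finset.sum_filter, Finset.sum_const, aux_count A hdisj s hy, nsmul_eq_mul, mul_comm,
    Finset.sum_filter]

end Aux

/-- A strong AMD code with m ≥ 2 sources is G-optimal (ε_{Δ,s} ≤ 1/a_s for
every s and nonzero Δ) iff the encoding is equiprobable and the sets A(s) form an
(n,m;a_s…;1,…,1)-BGSEDF: for every s and nonzero g, the number of ordered pairs (x,y) with
x ∈ A(s') for some s' ≠ s, y ∈ A(s), x − y = g is at most 1. -/
theorem stmt17 {G : Type*} [AddCommGroup G] [Fintype G] [DecidableEq G]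
    (n m : ℕ) (hn : Fintype.card G = n) (hm : 2 ≤ m)
    (A : Fin m → Finset G)
    (hdisj : ∀ i j, i ≠ j → Disjoint (A i) (A j))
    (hne : ∀ i, (A i).Nonempty)
    (p : Fin m → G → ℝ)
    (hp0 : ∀ i, ∀ g ∈ A i, 0 ≤ p i g)
    (hp1 : ∀ i, ∑ g ∈ A i, p i g = 1) :
    (∀ s : Fin m, ∀ Δ : G, Δ ≠ 0 → strongEps A p s Δ ≤ 1 / (((A s).card : ℝ)))
      ↔ ((∀ i, ∀ g ∈ A i, p i g = 1 / (((A i).card : ℝ))) ∧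
          (∀ s : Fin m, ∀ g : G, g ≠ 0 →
            (∑ j : Fin m,
              if j ≠ s then ((A j ×ˢ A s).filter (fun xy => xy.1 - xy.2 = g)).card else 0)
              ≤ 1)) := by
  have hapos : ∀ s : Fin m, (0:ℝ) < ((A s).card : ℝ) := fun s => by
    exact_mod_cast (hne s).card_pos
  constructor
  · intro h
    -- main per-source analysis
    have key : ∀ s : Fin m,
        (∀ Δ ∈ ((Finset.univ : Finset G).erase 0).filter
            (fun Δ => ((A s).filter (fun y => ∃ j, j ≠ s ∧ y + Δ ∈ A j)).Nonempty),
          ((A s).filter (fun y => ∃ j, j ≠ s ∧ y + Δ ∈ A j)).card = 1 ∧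
            strongEps A p s Δ = 1 / ((A s).card : ℝ)) := by
      intro s
      set E := (Finset.univ : Finset G).erase (0:G) with hE
      set F := fun Δ => (A s).filter (fun y => ∃ j, j ≠ s ∧ y + Δ ∈ A j) with hF
      set B := ∑ j ∈ Finset.univ.filter (· ≠ s), (A j).card with hBdef
      set Dset := E.filter (fun Δ => (F Δ).Nonempty) with hD
      have hεF : ∀ Δ, strongEps A p s Δ = ∑ y ∈ F Δ, p s y := fun Δ => rfl
      -- sum of eps over E
      have hsum1 : ∑ Δ ∈ E, strongEps A p s Δ = (B : ℝ) := by
        simp_rw [hεF]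
        rw [aux_sum A hdisj s (p s)]
        rw [← Finset.sum_mul, hp1 s, one_mul]
      have hsum2 : ∑ Δ ∈ E, ((F Δ).card : ℝ) = ((A s).card : ℝ) * B := by
        calc ∑ Δ ∈ E, ((F Δ).card : ℝ) = ∑ Δ ∈ E, ∑ y ∈ F Δ, (1:ℝ) := by
              refine Finset.sum_congr rfl fun Δ _ => ?_
              rw [Finset.sum_const, nsmul_eq_mul, mul_one]
          _ = ∑ y ∈ A s, (1:ℝ) * (B:ℝ) := aux_sum A hdisj s (fun _ => (1:ℝ))
          _ = ((A s).card : ℝ) * B := by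
              rw [Finset.sum_const, nsmul_eq_mul]; ring
      -- restrict sums to Dset
      have hres1 : ∑ Δ ∈ Dset, strongEps A p s Δ = (B : ℝ) := by
        rw [← hsum1, hD]
        rw [Finset.sum_filter_of_ne]
        intro Δ _ hεne
        by_contra hne'
        apply hεne
        rw [hεF, Finset.not_nonempty_iff_eq_empty.mp hne', Finset.sum_empty]
      have hres2 : ∑ Δ ∈ Dset, ((F Δ).card : ℝ) = ((A s).card : ℝ) * B := by
        rw [← hsum2, hD]
        rw [Finset.sum_filter_of_ne]
        intro Δ _ hc
        by_contra hne'
        apply hc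
        rw [Finset.not_nonempty_iff_eq_empty.mp hne', Finset.card_empty, Nat.cast_zero]
      have hεle : ∀ Δ ∈ Dset, strongEps A p s Δ ≤ 1 / ((A s).card : ℝ) := by
        intro Δ hΔ
        rw [hD, Finset.mem_filter, hE, Finset.mem_erase] at hΔ
        exact h s Δ hΔ.1.1
      have hcardge : ∀ Δ ∈ Dset, (1:ℝ) ≤ ((F Δ).card : ℝ) := by
        intro Δ hΔ
        rw [hD, Finset.mem_filter] at hΔ
        exact_mod_cast hΔ.2.card_pos
      -- equality chain
      have h1 : (B:ℝ) ≤ (Dset.card : ℝ) * (1 / ((A s).card : ℝ)) := by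
        rw [← hres1]
        calc ∑ Δ ∈ Dset, strongEps A p s Δ ≤ ∑ _Δ ∈ Dset, 1 / ((A s).card : ℝ) :=
              Finset.sum_le_sum hεle
          _ = (Dset.card : ℝ) * (1 / ((A s).card : ℝ)) := by
              rw [Finset.sum_const, nsmul_eq_mul]
      have h2 : (Dset.card : ℝ) ≤ ((A s).card : ℝ) * B := by
        rw [← hres2]
        calc (Dset.card : ℝ) = ∑ _Δ ∈ Dset, (1:ℝ) := by
              rw [Finset.sum_const, nsmul_eq_mul, mul_one]
          _ ≤ ∑ Δ ∈ Dset, ((F Δ).card : ℝ) := Finset.sum_le_sum hcardge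
      have hDeq : (Dset.card : ℝ) = ((A s).card : ℝ) * B := by
        have hle : (Dset.card : ℝ) * (1 / ((A s).card : ℝ)) ≤ (B:ℝ) := by
          rw [mul_one_div, div_le_iff₀ (hapos s)]
          linarith [h2]
        have : (B:ℝ) = (Dset.card : ℝ) * (1 / ((A s).card : ℝ)) := le_antisymm h1 hle
        rw [mul_one_div] at this
        field_simp at this
        linarith [this]
      -- pointwise equalities
      have heq1 : ∀ Δ ∈ Dset, strongEps A p s Δ = 1 / ((A s).card : ℝ) := by
        have hsums : ∑ Δ ∈ Dset, strongEps A p s Δ = ∑ _Δ ∈ Dset, 1 / ((A s).card : ℝ) := by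
          rw [hres1, Finset.sum_const, nsmul_eq_mul, mul_one_div]
          rw [eq_div_iff (ne_of_gt (hapos s))]
          linarith [hDeq]
        exact (Finset.sum_eq_sum_iff_of_le hεle).mp hsums
      have heq2 : ∀ Δ ∈ Dset, ((F Δ).card : ℝ) = 1 := by
        have hsums : ∑ _Δ ∈ Dset, (1:ℝ) = ∑ Δ ∈ Dset, ((F Δ).card : ℝ) := by
          rw [hres2, Finset.sum_const, nsmul_eq_mul, mul_one, hDeq]
        exact fun Δ hΔ => ((Finset.sum_eq_sum_iff_of_le hcardge).mp hsums Δ hΔ).symm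
      intro Δ hΔ
      exact ⟨by exact_mod_cast heq2 Δ hΔ, heq1 Δ hΔ⟩
    -- derive the two conclusions
    have exj : ∀ s : Fin m, ∃ j : Fin m, j ≠ s := by
      intro s
      have : Nontrivial (Fin m) := Fin.nontrivial_iff_two_le.mpr hm
      exact exists_ne s
    constructor
    · intro s g hg
      obtain ⟨j, hj⟩ := exj s
      obtain ⟨x, hx⟩ := hne j
      set Δ := x - g with hΔdef
      have hgF : g ∈ (A s).filter (fun y => ∃ j', j' ≠ s ∧ y + Δ ∈ A j') := by
        rw [Finset.mem_filter]
        exact ⟨hg, j, hj, by rwa [show g + (x - g) = x by abel]⟩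
      have hΔne : Δ ≠ 0 := by
        intro h0
        have : x = g := by rwa [hΔdef, sub_eq_zero] at h0
        exact (Finset.disjoint_left.mp (hdisj j s hj)) hx (this ▸ hg)
      have hΔD : Δ ∈ ((Finset.univ : Finset G).erase 0).filter
          (fun Δ => ((A s).filter (fun y => ∃ j', j' ≠ s ∧ y + Δ ∈ A j')).Nonempty) := by
        rw [Finset.mem_filter, Finset.mem_erase]
        exact ⟨⟨hΔne, Finset.mem_univ _⟩, ⟨g, hgF⟩⟩
      obtain ⟨hc1, hεeq⟩ := key s Δ hΔD
      have hsingle : (A s).filter (fun y => ∃ j', j' ≠ s ∧ y + Δ ∈ A j') = {g} := by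
        obtain ⟨a, ha⟩ := Finset.card_eq_one.mp hc1
        rw [ha] at hgF ⊢
        rw [Finset.mem_singleton] at hgF
        rw [hgF]
      have : strongEps A p s Δ = p s g := by
        show ∑ y ∈ (A s).filter (fun y => ∃ j', j' ≠ s ∧ y + Δ ∈ A j'), p s y = p s g
        rw [hsingle, Finset.sum_singleton]
      rw [← this, hεeq]
    · intro s g hg
      rw [aux_card_pairs A hdisj s g]
      by_cases hFne : ((A s).filter (fun y => ∃ j, j ≠ s ∧ y + g ∈ A j)).Nonempty
      · have hgD : g ∈ ((Finset.univ : Finset G).erase 0).filter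
            (fun Δ => ((A s).filter (fun y => ∃ j, j ≠ s ∧ y + Δ ∈ A j)).Nonempty) := by
          rw [Finset.mem_filter, Finset.mem_erase]
          exact ⟨⟨hg, Finset.mem_univ _⟩, hFne⟩
        exact le_of_eq (key s g hgD).1
      · rw [Finset.not_nonempty_iff_eq_empty.mp hFne, Finset.card_empty]
        exact Nat.zero_le 1
  · rintro ⟨hequi, hlam⟩ s Δ hΔ
    have hcard : ((A s).filter (fun y => ∃ j, j ≠ s ∧ y + Δ ∈ A j)).card ≤ 1 := by
      rw [← aux_card_pairs A hdisj s Δ]; exact hlam s Δ hΔ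
    have : strongEps A p s Δ = ∑ y ∈ (A s).filter (fun y => ∃ j, j ≠ s ∧ y + Δ ∈ A j), p s y :=
      rfl
    rw [this]
    have heq : ∀ y ∈ (A s).filter (fun y => ∃ j, j ≠ s ∧ y + Δ ∈ A j),
        p s y = 1 / ((A s).card : ℝ) := fun y hy =>
      hequi s y (Finset.mem_filter.mp hy).1
    rw [Finset.sum_congr rfl heq, Finset.sum_const, nsmul_eq_mul]
    calc (((A s).filter _).card : ℝ) * (1 / ((A s).card : ℝ))
        ≤ 1 * (1 / ((A s).card : ℝ)) := by
          apply mul_le_mul_of_nonneg_right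
          · exact_mod_cast hcard
          · positivity
      _ = 1 / ((A s).card : ℝ) := one_mul _
end
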